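/- arXiv:2203.13146 — 11 statements merged into one kernel-verified Lean document; each statement's English description precedes it below -/
import Mathlib

section
/- KKT optimality conditions for the directed minimum-cost flow problem: Let b ∈ ℝ^V be a balanced demand and let x ∈ ℝ^E satisfy Γx = b and x_e ≥ 0 for all e ∈ E. Then x minimizes ∑_{e∈E} F_e(y_e) over all y ∈ ℝ^E with Γy = b and y_e ≥ 0 for all e, if and only if there exists a potential vector φ ∈ ℝ^V such that for every edge e: f_e(x_e) = φ_{h(e)} − φ_{t(e)} whenever x_e > 0, and f_e(x_e) ≥ φ_{h(e)} − φ_{t(e)} whenever x_e = 0. -/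
open Matrix

open scoped RealInnerProductSpace
open scoped RealInnerProductSpace



lemma cone_caratheodory {ι : Type*} [Fintype ι] {H : Type*} [AddCommGroup H] [Module ℝ H]
    (g : ι → H) (s : Finset ι) :
    ∀ lam : ι → ℝ, (∀ i ∈ s, 0 ≤ lam i) →
      ∃ r : Finset ι, r ⊆ s ∧ LinearIndependent ℝ (fun i : r => g i) ∧
        ∃ mu : ι → ℝ, (∀ i, 0 ≤ mu i) ∧ ∑ i ∈ r, mu i • g i = ∑ i ∈ s, lam i • g i := by
  classical
  induction s using Finset.strongInduction with
  | _ s ih =>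
    intro lam hlam
    by_cases hli : LinearIndependent ℝ (fun i : s => g i)
    · refine ⟨s, subset_rfl, hli, fun i => if i ∈ s then lam i else 0, ?_, ?_⟩
      · intro i; dsimp only; split
        · exact hlam _ ‹_›
        · exact le_rfl
      · exact Finset.sum_congr rfl (fun i hi => by simp [hi])
    · obtain ⟨nu, hnu0, j, hj⟩ := Fintype.not_linearIndependent_iff.mp hli
      set ν : ι → ℝ := fun i => if hi : i ∈ s then nu ⟨i, hi⟩ else 0 with hν
      have hνsum : ∑ i ∈ s, ν i • g i = 0 := by
        rw [← hnu0, ← Finset.sum_attach s (fun i => ν i • g i)]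
        exact Finset.sum_congr rfl (fun i _ => by simp [hν, i.2])
      have hνj : ν j.1 ≠ 0 := by simp [hν, j.2, hj]
      have key : ∀ ν : ι → ℝ, (∑ i ∈ s, ν i • g i = 0) → (∃ i ∈ s, 0 < ν i) →
          ∃ r : Finset ι, r ⊆ s ∧ LinearIndependent ℝ (fun i : r => g i) ∧
            ∃ mu : ι → ℝ, (∀ i, 0 ≤ mu i) ∧ ∑ i ∈ r, mu i • g i = ∑ i ∈ s, lam i • g i := by
        rintro ν hsum ⟨i₀, hi₀s, hi₀⟩
        obtain ⟨k, hk, hkmin⟩ := Finset.exists_min_image (s.filter (fun i => 0 < ν i))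
          (fun i => lam i / ν i) ⟨i₀, Finset.mem_filter.mpr ⟨hi₀s, hi₀⟩⟩
        rw [Finset.mem_filter] at hk
        set c := lam k / ν k with hc
        have hc0 : 0 ≤ c := div_nonneg (hlam _ hk.1) hk.2.le
        set lam' : ι → ℝ := fun i => lam i - c * ν i with hlam'
        have hlam'nn : ∀ i ∈ s, 0 ≤ lam' i := by
          intro i hi
          rcases le_or_gt (ν i) 0 with hni | hni
          · have h2 : c * ν i ≤ 0 := mul_nonpos_of_nonneg_of_nonpos hc0 hni
            simp only [hlam']; linarith [hlam i hi]
          · have h1 := hkmin i (Finset.mem_filter.mpr ⟨hi, hni⟩)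
            rw [hc, div_le_div_iff₀ hk.2 hni] at h1
            have h2 : c * ν i ≤ lam i := by
              rw [hc, div_mul_eq_mul_div, div_le_iff₀ hk.2]
              linarith
            simp only [hlam']; linarith
        have hlam'k : lam' k = 0 := by
          simp only [hlam', hc, div_mul_eq_mul_div,
            mul_div_assoc, div_self (ne_of_gt hk.2), mul_one, sub_self]
        have hsum' : ∑ i ∈ s.erase k, lam' i • g i = ∑ i ∈ s, lam i • g i := by
          have h1 : ∑ i ∈ s, lam' i • g i = ∑ i ∈ s, lam i • g i := by
            simp only [hlam', sub_smul, Finset.sum_sub_distrib, mul_smul]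
            rw [← Finset.smul_sum, hsum, smul_zero, sub_zero]
          rw [← h1, ← Finset.add_sum_erase s _ hk.1, hlam'k, zero_smul, zero_add]
        obtain ⟨r, hrsub, hrli, mu, hmu, hmusum⟩ :=
          ih (s.erase k) (Finset.erase_ssubset hk.1) lam'
            (fun i hi => hlam'nn i (Finset.mem_of_mem_erase hi))
        exact ⟨r, hrsub.trans (Finset.erase_subset _ _), hrli, mu, hmu, by rw [hmusum, hsum']⟩
      rcases lt_trichotomy (ν j.1) 0 with hneg | hzero | hpos
      · exact key (-ν) (by simpa using hνsum) ⟨j.1, j.2, by simpa using hneg⟩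
      · exact absurd hzero hνj
      · exact key ν hνsum ⟨j.1, j.2, hpos⟩

lemma sum_subtype_dite {ι : Type*} [Fintype ι] {H : Type*} [AddCommGroup H] [Module ℝ H]
    [DecidableEq ι] (g : ι → H) (r : Finset ι) (c : {x // x ∈ r} → ℝ) :
    ∑ i : ι, (if h : i ∈ r then c ⟨i, h⟩ else 0) • g i = ∑ i : {x // x ∈ r}, c i • g i := by
  rw [← Finset.sum_subset (Finset.subset_univ r) (by intro i _ hi; simp [hi]),
    Finset.univ_eq_attach, ← Finset.sum_attach r (fun i => (if h : i ∈ r then c ⟨i, h⟩ else 0) • g i)]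
  exact Finset.sum_congr rfl (fun i _ => by simp [i.2])

lemma cone_fg_isClosed {ι : Type*} [Fintype ι] {H : Type*} [NormedAddCommGroup H]
    [InnerProductSpace ℝ H] [FiniteDimensional ℝ H] (g : ι → H)
    (cara : ∀ lam : ι → ℝ, (∀ i, 0 ≤ lam i) →
      ∃ r : Finset ι, LinearIndependent ℝ (fun i : r => g i) ∧
        ∃ mu : ι → ℝ, (∀ i, 0 ≤ mu i) ∧ ∑ i ∈ r, mu i • g i = ∑ i, lam i • g i) :
    IsClosed {v : H | ∃ lam : ι → ℝ, (∀ i, 0 ≤ lam i) ∧ v = ∑ i, lam i • g i} := by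
  classical
  have heq : {v : H | ∃ lam : ι → ℝ, (∀ i, 0 ≤ lam i) ∧ v = ∑ i, lam i • g i} =
      ⋃ (r : Finset ι) (_ : LinearIndependent ℝ (fun i : r => g i)),
        (Fintype.linearCombination ℝ (fun i : r => g i)) '' {c | ∀ i, 0 ≤ c i} := by
    ext v
    simp only [Set.mem_setOf_eq, Set.mem_iUnion, Set.mem_image,
      Fintype.linearCombination_apply]
    constructor
    · rintro ⟨lam, hlam, rfl⟩
      obtain ⟨r, hli, mu, hmu, hsum⟩ := cara lam hlam
      refine ⟨r, hli, fun i => mu i, fun i => hmu i, ?_⟩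
      rw [← hsum, ← Finset.sum_attach r (fun i => mu i • g i), Finset.univ_eq_attach]
    · rintro ⟨r, hli, c, hc, rfl⟩
      refine ⟨fun i => if h : i ∈ r then c ⟨i, h⟩ else 0, ?_, ?_⟩
      · intro i; dsimp only; split
        · exact hc _
        · exact le_rfl
      · exact (sum_subtype_dite g r c).symm ▸ (sum_subtype_dite g r c)
  rw [heq]
  refine isClosed_iUnion_of_finite (fun r => isClosed_iUnion_of_finite (fun hli => ?_))
  have hinj : LinearMap.ker (Fintype.linearCombination ℝ (fun i : r => g i)) = ⊥ := by
    rw [LinearMap.ker_eq_bot']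
    intro m hm
    rw [Fintype.linearCombination_apply] at hm
    exact funext (Fintype.linearIndependent_iff.mp hli m hm)
  have hclosed : IsClosed {c : {x // x ∈ r} → ℝ | ∀ i, 0 ≤ c i} := by
    have : {c : {x // x ∈ r} → ℝ | ∀ i, 0 ≤ c i} = ⋂ i, {c | 0 ≤ c i} := by
      ext c; simp [Set.mem_iInter]
    rw [this]
    exact isClosed_iInter (fun i => isClosed_le continuous_const (continuous_apply i))
  exact ((Fintype.linearCombination ℝ (fun i : r => g i)).isClosedEmbedding_of_injective
    hinj).isClosedMap _ hclosed

lemma farkas {ι : Type*} [Fintype ι] {H : Type*} [NormedAddCommGroup H]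
    [InnerProductSpace ℝ H] [FiniteDimensional ℝ H] (g : ι → H) (c : H)
    (hc : ∀ y : H, (∀ i, 0 ≤ ⟪g i, y⟫) → (0:ℝ) ≤ ⟪c, y⟫) :
    ∃ lam : ι → ℝ, (∀ i, 0 ≤ lam i) ∧ c = ∑ i, lam i • g i := by
  classical
  set C : Set H := {v : H | ∃ lam : ι → ℝ, (∀ i, 0 ≤ lam i) ∧ v = ∑ i, lam i • g i} with hC
  by_contra hnc
  have hcC : c ∉ C := hnc
  set K : ConvexCone ℝ H :=
    { carrier := C
      smul_mem' := by
        rintro a ha v ⟨lam, hlam, rfl⟩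
        exact ⟨fun i => a * lam i, fun i => mul_nonneg ha.le (hlam i), by
          rw [Finset.smul_sum]; exact Finset.sum_congr rfl (fun i _ => (mul_smul a (lam i) (g i)).symm ▸ rfl)⟩
      add_mem' := by
        rintro v ⟨lam, hlam, rfl⟩ w ⟨lam', hlam', rfl⟩
        exact ⟨fun i => lam i + lam' i, fun i => add_nonneg (hlam i) (hlam' i), by
          rw [← Finset.sum_add_distrib]; exact Finset.sum_congr rfl (fun i _ => (add_smul _ _ _).symm)⟩ } with hK
  have hne : (K : Set H).Nonempty := ⟨0, ⟨fun _ => 0, fun _ => le_rfl, by simp⟩⟩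
  have hcl : IsClosed (K : Set H) := by
    apply cone_fg_isClosed g
    intro lam hlam
    obtain ⟨r, _, hli, mu, hmu, hsum⟩ :=
      cone_caratheodory g Finset.univ lam (fun i _ => hlam i)
    exact ⟨r, hli, mu, hmu, hsum⟩
  let P : ProperCone ℝ H :=
    { carrier := C
      add_mem' := fun ha hb => K.add_mem ha hb
      zero_mem' := ⟨fun _ => 0, fun _ => le_rfl, by simp⟩
      smul_mem' := by
        rintro a v ⟨lam, hlam, rfl⟩
        exact ⟨fun i => (a:ℝ) * lam i, fun i => mul_nonneg a.2 (hlam i), by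
          change (a:ℝ) • (∑ i, lam i • g i) = ∑ i, ((a:ℝ) * lam i) • g i
          rw [Finset.smul_sum]; exact Finset.sum_congr rfl (fun i _ => (mul_smul _ _ _).symm)⟩
      isClosed' := hcl }
  obtain ⟨y, hy1, hy2⟩ :=
    ProperCone.hyperplane_separation' P (show c ∉ P from hcC)
  have hgy : ∀ i, 0 ≤ ⟪g i, y⟫ := by
    intro i
    apply hy1
    exact ⟨fun j => if j = i then 1 else 0, fun j => by dsimp only; split <;> norm_num, by simp⟩
  have := hc y hgy
  linarith

open Matrix in
/-- helper: row sums of the incidence matrix against a potential -/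
lemma sum_pot {V E : Type*} [Fintype V] [DecidableEq V]
    (t h : E → V) (hth : ∀ e, h e ≠ t e) (Γ : Matrix V E ℝ)
    (hΓ : ∀ v e, Γ v e = if v = h e then 1 else if v = t e then -1 else 0)
    (ψ : V → ℝ) (e : E) : ∑ v, ψ v * Γ v e = ψ (h e) - ψ (t e) := by
  have hne : t e ≠ h e := fun h' => hth e h'.symm
  have key : ∀ v, ψ v * Γ v e =
      (if v = h e then ψ v else 0) + (if v = t e then -ψ v else 0) := by
    intro v
    rw [hΓ]
    by_cases h1 : v = h e
    · have h2 : v ≠ t e := by rw [h1]; exact hth e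
      simp [h1, h2, hth e]
    · by_cases h2 : v = t e <;> simp [h1, h2, hne]
  rw [Finset.sum_congr rfl (fun v _ => key v), Finset.sum_add_distrib,
    Finset.sum_ite_eq' Finset.univ (h e) ψ, Finset.sum_ite_eq' Finset.univ (t e) (fun v => -ψ v)]
  simp [sub_eq_add_neg]

/-- helper: gradient inequality for the integral of a monotone function -/
lemma grad_ineq (f : ℝ → ℝ) (hf_cont : Continuous f) (hf_mono : StrictMono f)
    (a c : ℝ) : f a * (c - a) ≤ ∫ s in a..c, f s := by
  rcases le_total a c with hac | hca
  · have h1 : ∫ s in a..c, f a ≤ ∫ s in a..c, f s := by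
      apply intervalIntegral.integral_mono_on hac (intervalIntegrable_const)
        (hf_cont.intervalIntegrable _ _)
      intro u hu
      exact (hf_mono.le_iff_le).mpr hu.1
    simpa [mul_comm] using h1
  · have h1 : ∫ s in c..a, f s ≤ ∫ s in c..a, f a := by
      apply intervalIntegral.integral_mono_on hca (hf_cont.intervalIntegrable _ _)
        (intervalIntegrable_const)
      intro u hu
      exact (hf_mono.le_iff_le).mpr hu.2
    have h3 : (∫ s in a..c, f s) = -∫ s in c..a, f s := by
      rw [intervalIntegral.integral_symm]
    simp only [intervalIntegral.integral_const, smul_eq_mul] at h1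
    rw [h3]
    nlinarith

open Matrix in
/-- KKT optimality conditions for the directed minimum-cost flow problem. -/
theorem kkt_directed_mincost_flow
    {V E : Type*} [Fintype V] [Fintype E] [DecidableEq V]
    (t h : E → V) (hth : ∀ e, h e ≠ t e)
    (Γ : Matrix V E ℝ)
    (hΓ : ∀ v e, Γ v e = if v = h e then 1 else if v = t e then -1 else 0)
    (f : E → ℝ → ℝ)
    (hf_cont : ∀ e, Continuous (f e))
    (hf_mono : ∀ e, StrictMono (f e))
    (F : E → ℝ → ℝ)
    (hF : ∀ e x, F e x = ∫ s in (0:ℝ)..x, f e s)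
    (b : V → ℝ) (hb : ∑ v, b v = 0)
    (x : E → ℝ) (hxfeas : Γ *ᵥ x = b) (hxnn : ∀ e, 0 ≤ x e) :
    (∀ y : E → ℝ, Γ *ᵥ y = b → (∀ e, 0 ≤ y e) →
        ∑ e, F e (x e) ≤ ∑ e, F e (y e)) ↔
    (∃ φ : V → ℝ, ∀ e,
      (0 < x e → f e (x e) = φ (h e) - φ (t e)) ∧
      (x e = 0 → φ (h e) - φ (t e) ≤ f e (x e))) := by
  classical
  have hFderiv : ∀ e a, HasDerivAt (F e) (f e a) a := by
    intro e a
    have : F e = fun u => ∫ s in (0:ℝ)..u, f e s := funext (hF e)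
    rw [this]
    exact intervalIntegral.integral_hasDerivAt_right
      ((hf_cont e).intervalIntegrable _ _)
      ((hf_cont e).stronglyMeasurableAtFilter _ _) (hf_cont e).continuousAt
  constructor
  · -- forward direction
    intro hopt
    -- Step 1: directional derivative condition
    have dir : ∀ d : E → ℝ, (∀ v, ∑ e, Γ v e * d e = 0) → (∀ e, x e = 0 → 0 ≤ d e) →
        0 ≤ ∑ e, f e (x e) * d e := by
      intro d hdker hdZ
      -- eventual feasibility
      have hfeas : ∀ᶠ ε in nhdsWithin (0:ℝ) (Set.Ioi 0), ∀ e, 0 ≤ x e + ε * d e := by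
        rw [Filter.eventually_all]
        intro e
        rcases (hxnn e).lt_or_eq with hpos | hzero
        · have htend : Filter.Tendsto (fun ε : ℝ => x e + ε * d e) (nhds 0) (nhds (x e)) := by
            have : Filter.Tendsto (fun ε : ℝ => x e + ε * d e) (nhds 0)
                (nhds (x e + 0 * d e)) := by
              exact ((continuous_const.add (continuous_id.mul continuous_const)).tendsto 0)
            simpa using this
          have := htend.eventually (eventually_gt_nhds hpos)
          exact (this.filter_mono nhdsWithin_le_nhds).mono (fun ε hε => hε.le)
        · filter_upwards [self_mem_nhdsWithin] with ε hε
          have h0 : 0 ≤ ε * d e := mul_nonneg (le_of_lt (Set.mem_Ioi.mp hε)) (hdZ e hzero.symm)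
          rw [← hzero]
          linarith
      -- eventual optimality comparison
      set gfun : ℝ → ℝ := fun ε => ∑ e, F e (x e + ε * d e) with hgfun
      have hg0 : gfun 0 = ∑ e, F e (x e) := by simp [hgfun]
      have hopt' : ∀ᶠ ε in nhdsWithin (0:ℝ) (Set.Ioi 0), gfun 0 ≤ gfun ε := by
        filter_upwards [hfeas] with ε hε
        rw [hg0]
        apply hopt (fun e => x e + ε * d e) ?_ hε
        funext v
        have h1 : (Γ *ᵥ x) v = b v := congrFun hxfeas v
        simp only [Matrix.mulVec, dotProduct] at h1 ⊢
        have h2 : ∑ e, Γ v e * (x e + ε * d e)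
            = (∑ e, Γ v e * x e) + ε * ∑ e, Γ v e * d e := by
          rw [Finset.mul_sum, ← Finset.sum_add_distrib]
          exact Finset.sum_congr rfl fun e _ => by ring
        rw [h2, hdker v, h1, mul_zero, add_zero]
      -- derivative of gfun at 0
      have hD : HasDerivAt gfun (∑ e, f e (x e) * d e) 0 := by
        apply HasDerivAt.fun_sum
        intro e _
        have hu : HasDerivAt (fun ε : ℝ => x e + ε * d e) (d e) 0 := by
          simpa using ((hasDerivAt_id (0:ℝ)).mul_const (d e)).const_add (x e)
        have := (hFderiv e (x e + 0 * d e)).comp 0 hu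
        simpa [Function.comp_def] using this
      -- conclude via slope
      have hslope := hasDerivAt_iff_tendsto_slope.mp hD
      have hslope' : Filter.Tendsto (slope gfun 0) (nhdsWithin (0:ℝ) (Set.Ioi 0))
          (nhds (∑ e, f e (x e) * d e)) :=
        hslope.mono_left (nhdsWithin_mono 0 (fun ε hε => ne_of_gt hε))
      apply ge_of_tendsto hslope'
      filter_upwards [hopt', self_mem_nhdsWithin] with ε hε hε'
      rw [slope_def_field]
      apply div_nonneg (by linarith) (by simpa using le_of_lt hε')
    -- Step 2: Farkas
    set g : ((V ⊕ V) ⊕ E) → EuclideanSpace ℝ E := fun i =>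
      Sum.elim (Sum.elim (fun v => (WithLp.toLp 2 (fun e => Γ v e) : EuclideanSpace ℝ E))
          (fun v => (WithLp.toLp 2 (fun e => -Γ v e) : EuclideanSpace ℝ E)))
        (fun e => if x e = 0 then (WithLp.toLp 2 (fun e' => if e' = e then (1:ℝ) else 0) : EuclideanSpace ℝ E) else 0) i with hg
    set fe : EuclideanSpace ℝ E := WithLp.toLp 2 (fun e => f e (x e)) with hfe
    have hinner : ∀ (a y : EuclideanSpace ℝ E), ⟪a, y⟫ = ∑ e, a e * y e := by
      intro a y
      simp [PiLp.inner_apply, RCLike.inner_apply, mul_comm]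
    have hdual : ∀ y : EuclideanSpace ℝ E, (∀ i, 0 ≤ ⟪g i, y⟫) →
        (0:ℝ) ≤ ⟪fe, y⟫ := by
      intro y hy
      have hyker : ∀ v, ∑ e, Γ v e * y e = 0 := by
        intro v
        have h1 := hy (Sum.inl (Sum.inl v))
        have h2 := hy (Sum.inl (Sum.inr v))
        rw [hinner] at h1 h2
        simp only [hg, Sum.elim_inl, Sum.elim_inr] at h1 h2
        have h2' : ∑ e, -Γ v e * y e = -∑ e, Γ v e * y e := by
          rw [← Finset.sum_neg_distrib]; exact Finset.sum_congr rfl fun e _ => by ring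
        rw [h2'] at h2
        linarith
      have hyZ : ∀ e, x e = 0 → 0 ≤ y e := by
        intro e he
        have h1 := hy (Sum.inr e)
        rw [hinner] at h1
        simp only [hg, Sum.elim_inr, he, if_pos] at h1
        simpa [Finset.sum_ite_eq] using h1
      have := dir y hyker hyZ
      rw [hinner]
      exact this
    obtain ⟨lam, hlam, hlameq⟩ := farkas g fe hdual
    · -- extract potential
      set ψ : V → ℝ := fun v => lam (Sum.inl (Sum.inl v)) - lam (Sum.inl (Sum.inr v)) with hψ
      refine ⟨ψ, fun e => ?_⟩
      have happ : f e (x e) = ψ (h e) - ψ (t e) +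
          (if x e = 0 then lam (Sum.inr e) else 0) := by
        have h1 : f e (x e) = ∑ i, (lam i • g i) e := by
          have := congrArg (fun v : EuclideanSpace ℝ E => v e) hlameq
          simpa [hfe] using this
        have hsm : ∀ i, (lam i • g i) e = lam i * g i e := fun i => rfl
        rw [Finset.sum_congr rfl (fun i _ => hsm i), Fintype.sum_sum_type,
          Fintype.sum_sum_type] at h1
        have h2 : ∀ e', lam (Sum.inr e') * g (Sum.inr e') e
            = if e' = e then (if x e = 0 then lam (Sum.inr e) else 0) else 0 := by
          intro e'
          simp only [hg, Sum.elim_inr]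
          by_cases he' : e' = e
          · subst he'
            by_cases hx0 : x e' = 0 <;> simp [hx0]
          · by_cases hx0 : x e' = 0 <;> simp [hx0, Ne.symm he', he']
        rw [Finset.sum_congr rfl (fun e' _ => h2 e'), Finset.sum_ite_eq' Finset.univ e] at h1
        simp only [Finset.mem_univ, if_true] at h1
        have h3 : ∀ v, lam (Sum.inl (Sum.inl v)) * g (Sum.inl (Sum.inl v)) e
            = lam (Sum.inl (Sum.inl v)) * Γ v e := fun v => rfl
        have h4 : ∀ v, lam (Sum.inl (Sum.inr v)) * g (Sum.inl (Sum.inr v)) e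
            = -(lam (Sum.inl (Sum.inr v)) * Γ v e) := fun v => by
          simp only [hg, Sum.elim_inl, Sum.elim_inr]; ring
        rw [Finset.sum_congr rfl (fun v _ => h3 v)] at h1
        rw [Finset.sum_congr rfl (fun v _ => h4 v)] at h1
        have h5 : ∑ v, lam (Sum.inl (Sum.inl v)) * Γ v e
            + ∑ v, -(lam (Sum.inl (Sum.inr v)) * Γ v e) = ∑ v, ψ v * Γ v e := by
          rw [← Finset.sum_add_distrib]
          exact Finset.sum_congr rfl fun v _ => by simp only [hψ]; ring
        rw [h1, h5, sum_pot t h hth Γ hΓ ψ e]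
      constructor
      · intro hpos
        rw [happ, if_neg (ne_of_gt hpos), add_zero]
      · intro hzero
        rw [happ, if_pos hzero]
        have := hlam (Sum.inr e)
        linarith
  · -- backward direction
    rintro ⟨φ, hφ⟩ y hyfeas hynn
    have key1 : ∀ e, f e (x e) * (y e - x e) ≤ F e (y e) - F e (x e) := by
      intro e
      have h1 : F e (y e) - F e (x e) = ∫ s in (x e)..(y e), f e s := by
        rw [hF, hF]
        exact intervalIntegral.integral_interval_sub_left
          ((hf_cont e).intervalIntegrable _ _) ((hf_cont e).intervalIntegrable _ _)
      rw [h1]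
      exact grad_ineq (f e) (hf_cont e) (hf_mono e) (x e) (y e)
    have key2 : ∀ e, (φ (h e) - φ (t e)) * (y e - x e) ≤ f e (x e) * (y e - x e) := by
      intro e
      rcases (hxnn e).lt_or_eq with hpos | hzero
      · rw [(hφ e).1 hpos]
      · have hz := hzero.symm
        have h1 := (hφ e).2 hz
        have h2 : 0 ≤ y e - x e := by rw [hz]; simpa using hynn e
        exact mul_le_mul_of_nonneg_right h1 h2
    have key3 : ∑ e, (φ (h e) - φ (t e)) * (y e - x e) = 0 := by
      have h1 : ∀ e, (φ (h e) - φ (t e)) * (y e - x e)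
          = ∑ v, φ v * (Γ v e * (y e - x e)) := by
        intro e
        rw [← sum_pot t h hth Γ hΓ φ e, Finset.sum_mul]
        exact Finset.sum_congr rfl fun v _ => by ring
      rw [Finset.sum_congr rfl (fun e _ => h1 e), Finset.sum_comm]
      apply Finset.sum_eq_zero
      intro v _
      rw [← Finset.mul_sum]
      have hy : (Γ *ᵥ y) v = b v := congrFun hyfeas v
      have hx : (Γ *ᵥ x) v = b v := congrFun hxfeas v
      simp only [Matrix.mulVec, dotProduct] at hy hx
      have : ∑ e, Γ v e * (y e - x e) = (∑ e, Γ v e * y e) - ∑ e, Γ v e * x e := by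
        rw [← Finset.sum_sub_distrib]
        exact Finset.sum_congr rfl fun e _ => by ring
      rw [this, hy, hx, sub_self, mul_zero]
    have := Finset.sum_le_sum (fun e (_ : e ∈ Finset.univ) => key1 e)
    have h2 := Finset.sum_le_sum (fun e (_ : e ∈ Finset.univ) => key2 e)
    rw [key3] at h2
    rw [Finset.sum_sub_distrib] at this
    linarith
end

section
/- Continuity of the minimum-cost flow function: Let b⁰, b ∈ ℝ^V be balanced demand vectors, and suppose there exist y⁰, y¹ ∈ ℝ^E with y⁰, y¹ ≥ 0, Γy⁰ = b⁰ and Γy¹ = b⁰ + b. Then for every λ ∈ [0, 1] the problem of minimizing ∑_{e∈E} F_e(x_e) subject to Γx = b⁰ + λb and x ≥ 0 has a unique optimal solution x*(λ), and the map λ ↦ x*(λ) is continuous on [0, 1]. -/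
open Matrix

open Matrix intervalIntegral Filter Topology

private lemma aux_hasDeriv (f : ℝ → ℝ) (hf : Continuous f) (x : ℝ) :
    HasDerivAt (fun u => ∫ s in (0:ℝ)..u, f s) (f x) x :=
  (hf.integral_hasStrictDerivAt 0 x).hasDerivAt

private lemma aux_cont (f : ℝ → ℝ) (hf : Continuous f) :
    Continuous (fun u => ∫ s in (0:ℝ)..u, f s) := by
  rw [continuous_iff_continuousAt]
  exact fun x => (aux_hasDeriv f hf x).continuousAt

private lemma aux_sc (f : ℝ → ℝ) (hf : Continuous f) (hm : StrictMono f) :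
    StrictConvexOn ℝ Set.univ (fun u => ∫ s in (0:ℝ)..u, f s) := by
  have hd : deriv (fun u => ∫ s in (0:ℝ)..u, f s) = f :=
    funext fun x => (aux_hasDeriv f hf x).deriv
  refine StrictMono.strictConvexOn_univ_of_deriv (aux_cont f hf) ?_
  rw [hd]; exact hm

private lemma aux_nonneg (f : ℝ → ℝ) (hnn : ∀ s, 0 ≤ s → 0 ≤ f s) (x : ℝ) (hx : 0 ≤ x) :
    0 ≤ ∫ s in (0:ℝ)..x, f s :=
  intervalIntegral.integral_nonneg hx (fun u hu => hnn u hu.1)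

private lemma aux_grow (f : ℝ → ℝ) (hfc : Continuous f) (hm : Monotone f)
    (hnn : ∀ s, 0 ≤ s → 0 ≤ f s) (x : ℝ) (hx : 1 ≤ x) :
    (x - 1) * f 1 ≤ ∫ s in (0:ℝ)..x, f s := by
  have h1 : (∫ s in (0:ℝ)..x, f s) = (∫ s in (0:ℝ)..1, f s) + ∫ s in (1:ℝ)..x, f s :=
    (intervalIntegral.integral_add_adjacent_intervals (hfc.intervalIntegrable _ _)
      (hfc.intervalIntegrable _ _)).symm
  have h2 : (0:ℝ) ≤ ∫ s in (0:ℝ)..1, f s := aux_nonneg f hnn 1 zero_le_one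
  have h3 : (x - 1) * f 1 ≤ ∫ s in (1:ℝ)..x, f s := by
    have := intervalIntegral.integral_mono_on (μ := MeasureTheory.volume) hx
      ((continuous_const (y := f 1)).intervalIntegrable _ _)
      (hfc.intervalIntegrable _ _) (fun u hu => hm hu.1)
    simpa [intervalIntegral.integral_const, smul_eq_mul, mul_comm] using this
  rw [h1]; linarith


/-- Continuity of the minimum-cost flow function. -/
theorem mincost_flow_function_continuous
    {V E : Type*} [Fintype V] [Fintype E] [DecidableEq V]
    (t h : E → V) (hth : ∀ e, h e ≠ t e)
    (Γ : Matrix V E ℝ)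
    (hΓ : ∀ v e, Γ v e = if v = h e then 1 else if v = t e then -1 else 0)
    (f : E → ℝ → ℝ)
    (hf_cont : ∀ e, Continuous (f e))
    (hf_mono : ∀ e, StrictMono (f e))
    (hf_nonneg : ∀ e s, 0 ≤ s → 0 ≤ f e s)
    (hf_nonpos : ∀ e s, s ≤ 0 → f e s ≤ 0)
    (F : E → ℝ → ℝ)
    (hF : ∀ e x, F e x = ∫ s in (0:ℝ)..x, f e s)
    (b0 b : V → ℝ) (hb0 : ∑ v, b0 v = 0) (hb : ∑ v, b v = 0)
    (y0 y1 : E → ℝ) (hy0nn : ∀ e, 0 ≤ y0 e) (hy1nn : ∀ e, 0 ≤ y1 e)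
    (hy0 : Γ *ᵥ y0 = b0) (hy1 : Γ *ᵥ y1 = fun v => b0 v + b v) :
    ∃ xs : ℝ → E → ℝ, ContinuousOn xs (Set.Icc 0 1) ∧
      ∀ lam ∈ Set.Icc (0:ℝ) 1,
        (Γ *ᵥ xs lam = fun v => b0 v + lam * b v) ∧ (∀ e, 0 ≤ xs lam e) ∧
        (∀ y : E → ℝ, (Γ *ᵥ y = fun v => b0 v + lam * b v) → (∀ e, 0 ≤ y e) →
          ∑ e, F e (xs lam e) ≤ ∑ e, F e (y e)) ∧
        (∀ y : E → ℝ, (Γ *ᵥ y = fun v => b0 v + lam * b v) → (∀ e, 0 ≤ y e) →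
          (∀ z : E → ℝ, (Γ *ᵥ z = fun v => b0 v + lam * b v) → (∀ e, 0 ≤ z e) →
            ∑ e, F e (y e) ≤ ∑ e, F e (z e)) → y = xs lam) := by
  classical
  -- basic facts about F
  have hFeq : ∀ e, F e = fun x => ∫ s in (0:ℝ)..x, f e s := fun e => funext (hF e)
  have hf0 : ∀ e, f e 0 = 0 := fun e =>
    le_antisymm (hf_nonpos e 0 le_rfl) (hf_nonneg e 0 le_rfl)
  have hf1 : ∀ e, 0 < f e 1 := fun e => (hf0 e) ▸ hf_mono e zero_lt_one
  have hFcont : ∀ e, Continuous (F e) := fun e => (hFeq e) ▸ aux_cont _ (hf_cont e)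
  have hFsc : ∀ e, StrictConvexOn ℝ Set.univ (F e) := fun e =>
    (hFeq e) ▸ aux_sc _ (hf_cont e) (hf_mono e)
  have hFnn : ∀ e x, 0 ≤ x → 0 ≤ F e x := fun e x hx =>
    (hF e x) ▸ aux_nonneg _ (hf_nonneg e) x hx
  have hFgrow : ∀ e x, 1 ≤ x → (x - 1) * f e 1 ≤ F e x := fun e x hx =>
    (hF e x) ▸ aux_grow _ (hf_cont e) (hf_mono e).monotone (hf_nonneg e) x hx
  set Φ : (E → ℝ) → ℝ := fun x => ∑ e, F e (x e) with hΦdef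
  have hΦcont : Continuous Φ :=
    continuous_finset_sum _ fun e _ => (hFcont e).comp (continuous_apply e)
  set Feas : ℝ → Set (E → ℝ) :=
    fun lam => {x | Γ *ᵥ x = (fun v => b0 v + lam * b v) ∧ ∀ e, 0 ≤ x e} with hFeasdef
  have hmvc : Continuous fun x : E → ℝ => Γ *ᵥ x :=
    LinearMap.continuous_of_finiteDimensional (Γ.mulVecLin)
  have hFeasClosed : ∀ lam, IsClosed (Feas lam) := by
    intro lam
    have h1 : IsClosed {x : E → ℝ | Γ *ᵥ x = (fun v => b0 v + lam * b v)} :=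
      isClosed_eq hmvc continuous_const
    have h2 : IsClosed {x : E → ℝ | ∀ e, 0 ≤ x e} := by
      have he : {x : E → ℝ | ∀ e, 0 ≤ x e} = ⋂ e, {x | 0 ≤ x e} := by ext; simp [Set.mem_iInter]
      rw [he]
      exact isClosed_iInter fun e => isClosed_le continuous_const (continuous_apply e)
    exact h1.inter h2
  -- convex combinations of feasible points
  have hFeasComb3 : ∀ (a1 a2 a3 : ℝ) (x1 x2 x3 : E → ℝ) (l1 l2 l3 : ℝ),
      a1 + a2 + a3 = 1 → 0 ≤ a1 → 0 ≤ a2 → 0 ≤ a3 →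
      x1 ∈ Feas l1 → x2 ∈ Feas l2 → x3 ∈ Feas l3 →
      (fun e => a1 * x1 e + a2 * x2 e + a3 * x3 e) ∈ Feas (a1 * l1 + a2 * l2 + a3 * l3) := by
    intro a1 a2 a3 x1 x2 x3 l1 l2 l3 hsum ha1 ha2 ha3 h1 h2 h3
    constructor
    · have hfe : (fun e => a1 * x1 e + a2 * x2 e + a3 * x3 e)
          = a1 • x1 + a2 • x2 + a3 • x3 := by
        funext e; simp [Pi.add_apply, Pi.smul_apply, smul_eq_mul]
      rw [hfe, mulVec_add, mulVec_add, mulVec_smul, mulVec_smul, mulVec_smul,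
        h1.1, h2.1, h3.1]
      funext v
      simp only [Pi.add_apply, Pi.smul_apply, smul_eq_mul]
      linear_combination (b0 v) * hsum
    · intro e
      have := h1.2 e; have := h2.2 e; have := h3.2 e
      positivity
  have hy0F : y0 ∈ Feas 0 := by
    refine ⟨?_, hy0nn⟩; rw [hy0]; funext v; ring
  have hy1F : y1 ∈ Feas 1 := by
    refine ⟨?_, hy1nn⟩; rw [hy1]; funext v; ring
  -- base feasible point
  set z : ℝ → E → ℝ := fun lam e => (1 - lam) * y0 e + lam * y1 e with hzdef
  have hz : ∀ lam ∈ Set.Icc (0:ℝ) 1, z lam ∈ Feas lam := by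
    intro lam hlam
    have h := hFeasComb3 (1 - lam) lam 0 y0 y1 y0 0 1 0 (by ring) (by linarith [hlam.2])
      hlam.1 le_rfl hy0F hy1F hy0F
    have he1 : (1 - lam) * 0 + lam * 1 + 0 * 0 = lam := by ring
    rw [he1] at h
    have he2 : (fun e => (1 - lam) * y0 e + lam * y1 e + 0 * y0 e) = z lam := by
      funext e; rw [hzdef]; ring
    rwa [he2] at h
  have hzcont : Continuous fun lam => z lam := by
    apply continuous_pi; intro e
    exact ((continuous_const.sub continuous_id).mul continuous_const).add
      (continuous_id.mul continuous_const)
  -- uniform bound on the value at the base point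
  obtain ⟨lamM, _, hlamM⟩ := isCompact_Icc.exists_isMaxOn (Set.nonempty_Icc.2 zero_le_one)
    ((hΦcont.comp hzcont).continuousOn : ContinuousOn (fun lam => Φ (z lam)) (Set.Icc 0 1))
  set M : ℝ := max (Φ (z lamM)) 0 with hMdef
  have hMnn : 0 ≤ M := le_max_right _ _
  have hMb : ∀ lam ∈ Set.Icc (0:ℝ) 1, Φ (z lam) ≤ M := fun lam hl =>
    le_trans (hlamM hl) (le_max_left _ _)
  -- the compact box
  set R : E → ℝ := fun e => 1 + M / f e 1 with hRdef
  set K : Set (E → ℝ) := Set.pi Set.univ fun e => Set.Icc 0 (R e) with hKdef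
  have hKcpt : IsCompact K := isCompact_univ_pi fun e => isCompact_Icc
  have hK : ∀ x : E → ℝ, (∀ e, 0 ≤ x e) → Φ x ≤ M → x ∈ K := by
    intro x hxnn hxM
    rw [hKdef, Set.mem_univ_pi]
    intro e
    have h1 : F e (x e) ≤ M := by
      refine le_trans ?_ hxM
      exact Finset.single_le_sum (f := fun i => F i (x i))
        (fun i _ => hFnn i (x i) (hxnn i)) (Finset.mem_univ e)
    refine ⟨hxnn e, ?_⟩
    by_cases hxe : x e ≤ 1
    · have : 0 ≤ M / f e 1 := div_nonneg hMnn (hf1 e).le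
      rw [hRdef]; dsimp only; linarith
    · push_neg at hxe
      have h2 := hFgrow e (x e) hxe.le
      have h3 : x e - 1 ≤ M / f e 1 := by
        rw [le_div_iff₀ (hf1 e)]; linarith
      rw [hRdef]; dsimp only; linarith
  -- existence of a minimizer
  have hex : ∀ lam ∈ Set.Icc (0:ℝ) 1, ∃ x, x ∈ Feas lam ∧ ∀ y ∈ Feas lam, Φ x ≤ Φ y := by
    intro lam hlam
    have hzf := hz lam hlam
    have hzK : z lam ∈ K := hK _ hzf.2 (hMb lam hlam)
    have hcpt : IsCompact (Feas lam ∩ K) := hKcpt.inter_left (hFeasClosed lam)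
    obtain ⟨x, hxmem, hxmin⟩ := hcpt.exists_isMinOn ⟨z lam, hzf, hzK⟩ hΦcont.continuousOn
    refine ⟨x, hxmem.1, ?_⟩
    intro y hy
    by_cases hyM : Φ y ≤ M
    · exact hxmin ⟨hy, hK y hy.2 hyM⟩
    · push_neg at hyM
      exact le_trans (le_trans (hxmin ⟨hzf, hzK⟩) (hMb lam hlam)) hyM.le
  -- uniqueness of the minimizer
  have huniq : ∀ lam, ∀ x y : E → ℝ, x ∈ Feas lam → y ∈ Feas lam →
      (∀ w ∈ Feas lam, Φ x ≤ Φ w) → (∀ w ∈ Feas lam, Φ y ≤ Φ w) → x = y := by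
    intro lam x y hx hy hminx hminy
    by_contra hne
    obtain ⟨e0, he0⟩ := Function.ne_iff.1 hne
    set m : E → ℝ := fun e => (1/2 : ℝ) * x e + (1/2 : ℝ) * y e with hmdef
    have hm : m ∈ Feas lam := by
      have h := hFeasComb3 (1/2) (1/2) 0 x y x lam lam lam (by ring) (by norm_num)
        (by norm_num) le_rfl hx hy hx
      have he1 : (1/2 : ℝ) * lam + (1/2 : ℝ) * lam + 0 * lam = lam := by ring
      rw [he1] at h
      have he2 : (fun e => (1/2 : ℝ) * x e + (1/2 : ℝ) * y e + 0 * x e) = m := by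
        funext e; rw [hmdef]; ring
      rwa [he2] at h
    have hΦxy : Φ x = Φ y := le_antisymm (hminx y hy) (hminy x hx)
    have hlt : Φ m < Φ x := by
      have hsum : Φ m < ∑ e, ((1/2 : ℝ) * F e (x e) + (1/2 : ℝ) * F e (y e)) := by
        apply Finset.sum_lt_sum
        · intro i _
          have hc := ((hFsc i).convexOn).2 (Set.mem_univ (x i)) (Set.mem_univ (y i))
            (by norm_num : (0:ℝ) ≤ 1/2) (by norm_num : (0:ℝ) ≤ 1/2)
            (by norm_num : (1/2 : ℝ) + 1/2 = 1)
          simpa [hmdef, smul_eq_mul] using hc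
        · refine ⟨e0, Finset.mem_univ e0, ?_⟩
          have hc := (hFsc e0).2 (Set.mem_univ (x e0)) (Set.mem_univ (y e0)) he0
            (by norm_num : (0:ℝ) < 1/2) (by norm_num : (0:ℝ) < 1/2)
            (by norm_num : (1/2 : ℝ) + 1/2 = 1)
          simpa [hmdef, smul_eq_mul] using hc
      have heq : ∑ e, ((1/2 : ℝ) * F e (x e) + (1/2 : ℝ) * F e (y e))
          = (1/2 : ℝ) * Φ x + (1/2 : ℝ) * Φ y := by
        rw [Finset.sum_add_distrib, ← Finset.mul_sum, ← Finset.mul_sum]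
      rw [heq, hΦxy] at hsum
      rw [hΦxy]; linarith
    exact absurd (hminx m hm) (not_le.2 hlt)
  -- the minimizer function
  set xs : ℝ → E → ℝ := fun lam =>
    if hlam : lam ∈ Set.Icc (0:ℝ) 1 then (hex lam hlam).choose else y0 with hxsdef
  have hxs : ∀ lam (hlam : lam ∈ Set.Icc (0:ℝ) 1),
      xs lam ∈ Feas lam ∧ ∀ y ∈ Feas lam, Φ (xs lam) ≤ Φ y := by
    intro lam hlam
    rw [hxsdef]; dsimp only; rw [dif_pos hlam]
    exact (hex lam hlam).choose_spec
  have hxsK : ∀ lam ∈ Set.Icc (0:ℝ) 1, xs lam ∈ K := by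
    intro lam hl
    exact hK _ ((hxs lam hl).1).2
      (le_trans ((hxs lam hl).2 (z lam) (hz lam hl)) (hMb lam hl))
  refine ⟨xs, ?_, ?_⟩
  · -- continuity
    intro lam hlam
    have : Tendsto xs (nhdsWithin lam (Set.Icc 0 1)) (nhds (xs lam)) := by
      apply tendsto_of_subseq_tendsto
      intro ns hns
      have hnsIcc : ∀ᶠ n in Filter.atTop, ns n ∈ Set.Icc (0:ℝ) 1 :=
        hns self_mem_nhdsWithin
      have hnslim : Tendsto ns Filter.atTop (nhds lam) := hns.mono_right nhdsWithin_le_nhds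
      have hfreq : ∃ᶠ n in Filter.atTop, xs (ns n) ∈ K :=
        (hnsIcc.mono fun n hn => hxsK _ hn).frequently
      obtain ⟨xb, hxbK, φ, hφ, hφlim⟩ := hKcpt.tendsto_subseq' hfreq
      refine ⟨φ, ?_⟩
      suffices hxeq : xb = xs lam by
        rw [← hxeq]; exact hφlim
      set u : ℕ → ℝ := fun n => ns (φ n) with hudef
      have hu : Tendsto u Filter.atTop (nhds lam) := hnslim.comp hφ.tendsto_atTop
      have huIcc : ∀ᶠ n in Filter.atTop, u n ∈ Set.Icc (0:ℝ) 1 :=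
        hφ.tendsto_atTop.eventually hnsIcc
      have hxu : Tendsto (fun n => xs (u n)) Filter.atTop (nhds xb) := hφlim
      have hxbfeas : xb ∈ Feas lam := by
        constructor
        · have h1 : Tendsto (fun n => Γ *ᵥ xs (u n)) Filter.atTop (nhds (Γ *ᵥ xb)) :=
            (hmvc.tendsto _).comp hxu
          have h2 : Tendsto (fun n => (fun v => b0 v + u n * b v)) Filter.atTop
              (nhds (fun v => b0 v + lam * b v)) := by
            apply tendsto_pi_nhds.2
            intro v
            exact tendsto_const_nhds.add (hu.mul_const (b v))
          have h3 : ∀ᶠ n in Filter.atTop,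
              (fun v => b0 v + u n * b v) = Γ *ᵥ xs (u n) :=
            huIcc.mono fun n hn => ((hxs _ hn).1).1.symm
          exact (tendsto_nhds_unique (h2.congr' h3) h1).symm
        · intro e
          have ht : Tendsto (fun n => xs (u n) e) Filter.atTop (nhds (xb e)) :=
            ((continuous_apply e).tendsto _).comp hxu
          exact ge_of_tendsto ht (huIcc.mono fun n hn => ((hxs _ hn).1).2 e)
      have hxbopt : ∀ y ∈ Feas lam, Φ xb ≤ Φ y := by
        intro y hy
        set a : ℝ → ℝ := fun μ => max (μ - lam) 0 / (1 - lam) with hadef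
        set c : ℝ → ℝ := fun μ => max (lam - μ) 0 / lam with hcdef
        set w : ℝ → E → ℝ :=
          fun μ e => (1 - a μ - c μ) * y e + a μ * y1 e + c μ * y0 e with hwdef
        have hwfeas : ∀ μ ∈ Set.Icc (0:ℝ) 1, w μ ∈ Feas μ := by
          intro μ hμ
          have ha_nn : 0 ≤ a μ := div_nonneg (le_max_right _ _) (by linarith [hlam.2])
          have hc_nn : 0 ≤ c μ := div_nonneg (le_max_right _ _) hlam.1
          rcases le_total lam μ with hcase | hcase
          · have hc0 : c μ = 0 := by
              rw [hcdef]; dsimp only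
              rw [max_eq_right (by linarith : lam - μ ≤ 0), zero_div]
            by_cases h1 : lam = 1
            · have hμ1 : μ = 1 := le_antisymm hμ.2 (h1 ▸ hcase)
              have ha0 : a μ = 0 := by
                rw [hadef]; dsimp only; rw [h1, hμ1]; simp
              have hwy : w μ = y := by
                funext e; rw [hwdef]; dsimp only; rw [ha0, hc0]; ring
              rw [hwy, hμ1, ← h1]; exact hy
            · have hlt : lam < 1 := lt_of_le_of_ne hlam.2 h1
              have ha : a μ = (μ - lam) / (1 - lam) := by
                rw [hadef]; dsimp only
                rw [max_eq_left (by linarith : (0:ℝ) ≤ μ - lam)]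
              have ha1 : a μ ≤ 1 := by
                rw [ha, div_le_one (by linarith)]; linarith [hμ.2]
              have h := hFeasComb3 (1 - a μ - c μ) (a μ) (c μ) y y1 y0 lam 1 0
                (by ring) (by rw [hc0]; linarith) ha_nn hc_nn hy hy1F hy0F
              have hkey : (1 - a μ - c μ) * lam + a μ * 1 + c μ * 0 = μ := by
                have hne : (1:ℝ) - lam ≠ 0 := ne_of_gt (by linarith : (0:ℝ) < 1 - lam)
                rw [hc0, ha]; field_simp; ring
              rwa [hkey] at h
          · have ha0 : a μ = 0 := by
              rw [hadef]; dsimp only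
              rw [max_eq_right (by linarith : μ - lam ≤ 0), zero_div]
            by_cases h0 : lam = 0
            · have hμ0 : μ = 0 := le_antisymm (h0 ▸ hcase) hμ.1
              have hc0 : c μ = 0 := by
                rw [hcdef]; dsimp only; rw [h0, hμ0]; simp
              have hwy : w μ = y := by
                funext e; rw [hwdef]; dsimp only; rw [ha0, hc0]; ring
              rw [hwy, hμ0, ← h0]; exact hy
            · have hpos : 0 < lam := lt_of_le_of_ne hlam.1 (Ne.symm h0)
              have hc : c μ = (lam - μ) / lam := by
                rw [hcdef]; dsimp only
                rw [max_eq_left (by linarith : (0:ℝ) ≤ lam - μ)]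
              have hc1 : c μ ≤ 1 := by
                rw [hc, div_le_one hpos]; linarith [hμ.1]
              have h := hFeasComb3 (1 - a μ - c μ) (a μ) (c μ) y y1 y0 lam 1 0
                (by ring) (by rw [ha0]; linarith) ha_nn hc_nn hy hy1F hy0F
              have hkey : (1 - a μ - c μ) * lam + a μ * 1 + c μ * 0 = μ := by
                have hne : lam ≠ 0 := ne_of_gt hpos
                rw [ha0, hc]; field_simp; ring
              rwa [hkey] at h
        have hacont : Continuous a := by
          rw [hadef]
          exact ((continuous_id.sub continuous_const).max continuous_const).div_const _
        have hccont : Continuous c := by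
          rw [hcdef]
          exact ((continuous_const.sub continuous_id).max continuous_const).div_const _
        have hwcont : Continuous fun μ => w μ := by
          rw [hwdef]
          apply continuous_pi; intro e
          exact ((((continuous_const.sub hacont).sub hccont).mul continuous_const).add
            (hacont.mul continuous_const)).add (hccont.mul continuous_const)
        have hwlam : w lam = y := by
          funext e; rw [hwdef]; dsimp only
          have : a lam = 0 := by rw [hadef]; dsimp only; simp
          rw [this]
          have : c lam = 0 := by rw [hcdef]; dsimp only; simp
          rw [this]; ring
        have hwu : Tendsto (fun n => w (u n)) Filter.atTop (nhds y) := by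
          have := (hwcont.tendsto lam).comp hu
          rwa [hwlam] at this
        have hΦw : Tendsto (fun n => Φ (w (u n))) Filter.atTop (nhds (Φ y)) :=
          (hΦcont.tendsto _).comp hwu
        have hΦx : Tendsto (fun n => Φ (xs (u n))) Filter.atTop (nhds (Φ xb)) :=
          (hΦcont.tendsto _).comp hxu
        have hle : ∀ᶠ n in Filter.atTop, Φ (xs (u n)) ≤ Φ (w (u n)) :=
          huIcc.mono fun n hn => (hxs _ hn).2 (w (u n)) (hwfeas _ hn)
        exact le_of_tendsto_of_tendsto hΦx hΦw hle
      exact huniq lam xb (xs lam) hxbfeas (hxs lam hlam).1 hxbopt (hxs lam hlam).2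
    exact this
  · -- optimality properties
    intro lam hlam
    obtain ⟨⟨hfeas1, hfeas2⟩, hmin⟩ := hxs lam hlam
    refine ⟨hfeas1, hfeas2, ?_, ?_⟩
    · intro y hy1' hy2'
      exact hmin y ⟨hy1', hy2'⟩
    · intro y hy1' hy2' hymin
      exact huniq lam y (xs lam) ⟨hy1', hy2'⟩ ⟨hfeas1, hfeas2⟩
        (fun w hw => hymin w hw.1 hw.2) hmin
end

section
/- Derivatives of the minimum-cost flow and potential functions: Assume each f_e is differentiable with f_e'(x) > 0 for all x ∈ ℝ. Fix a vertex v₁ ∈ V, balanced demands b⁰, b ∈ ℝ^V, an open interval I ⊆ (0, ∞), a set S ⊆ E whose underlying undirected subgraph (V, S) is connected, and functions x* : I → ℝ^E and π : I → ℝ^V with π continuous, such that for every λ ∈ I: (a) x*(λ) is the unique minimizer of ∑_{e∈E} F_e(x_e) over {x ∈ ℝ^E : Γx = b⁰ + λb, x ≥ 0}; (b) π_{v₁}(λ) = 0 and for every edge e, f_e(x*_e(λ)) ≥ π_{h(e)}(λ) − π_{t(e)}(λ), with equality precisely for the edges e ∈ S; and (c) x*_e(λ) = 0 for all e ∉ S.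 For λ ∈ I let C_λ = diag(c_e(λ)) with c_e(λ) = 1/f_e'(x*_e(λ)) if e ∈ S and c_e(λ) = 0 otherwise, and let L_λ = Γ C_λ Γ^T. Then for every λ ∈ I the reduced matrix L̂_λ is invertible, and x* and π are differentiable on I with (d/dλ) π(λ) = L*_λ b and (d/dλ) x*(λ) = C_λ Γ^T L*_λ b. -/
open Matrix Filter Topology

/-- `M` with the row and column of `v₁` deleted. -/
noncomputable def reducedM {V : Type*} [Fintype V] [DecidableEq V] (v₁ : V)
    (M : Matrix V V ℝ) : Matrix {v : V // v ≠ v₁} {v : V // v ≠ v₁} ℝ :=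
  M.submatrix Subtype.val Subtype.val

/-- The generalized inverse of `M`: the inverse of the reduced matrix, extended by
zeros on the row and column of `v₁`. -/
noncomputable def starM {V : Type*} [Fintype V] [DecidableEq V] (v₁ : V)
    (M : Matrix V V ℝ) : Matrix V V ℝ :=
  fun i j =>
    if hi : i = v₁ then 0 else if hj : j = v₁ then 0
    else (reducedM v₁ M)⁻¹ ⟨i, hi⟩ ⟨j, hj⟩

section AuxLemmas
set_option linter.unusedSectionVars false
variable {V E : Type*} [Fintype V] [Fintype E] [DecidableEq V] [DecidableEq E]

lemma incidence_apply (t h : E → V) (hth : ∀ e, h e ≠ t e) (Γ : Matrix V E ℝ)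
    (hΓ : ∀ v e, Γ v e = if v = h e then 1 else if v = t e then -1 else 0)
    (p : V → ℝ) (e : E) : (Γᵀ *ᵥ p) e = p (h e) - p (t e) := by
  simp only [mulVec, dotProduct, transpose_apply]
  have key : ∀ v, Γ v e * p v
      = (if v = h e then p v else 0) + (if v = t e then -p v else 0) := by
    intro v
    rw [hΓ]
    by_cases h1 : v = h e
    · have h2 : ¬ v = t e := by rw [h1]; exact hth e
      simp [h1, h2, hth e]
    · by_cases h2 : v = t e
      · simp [h1, h2, (hth e).symm]
      · simp [h1, h2]
  simp only [key, Finset.sum_add_distrib, Finset.sum_ite_eq' Finset.univ, Finset.mem_univ,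
    if_true]
  ring

lemma const_on_connected (t h : E → V) (S : Finset E)
    (hSconn : (SimpleGraph.fromRel fun v w => ∃ e ∈ S, t e = v ∧ h e = w).Connected)
    (g : V → ℝ) (hg : ∀ e ∈ S, g (h e) = g (t e)) (v w : V) : g v = g w := by
  have hadj : ∀ a c : V,
      (SimpleGraph.fromRel fun v w => ∃ e ∈ S, t e = v ∧ h e = w).Adj a c → g a = g c := by
    intro a c hac
    rcases hac with ⟨hne, ⟨e, he, h1, h2⟩ | ⟨e, he, h1, h2⟩⟩
    · rw [← h1, ← h2]; exact (hg e he).symm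
    · rw [← h1, ← h2]; exact hg e he
  obtain ⟨p⟩ := hSconn.preconnected v w
  induction p with
  | nil => rfl
  | cons hadj' p ih => exact (hadj _ _ hadj').trans ih

lemma subtype_sum_erase (v₁ : V) (f : V → ℝ) :
    ∑ u : {v : V // v ≠ v₁}, f u.1 = ∑ u ∈ Finset.univ.erase v₁, f u :=
  (Finset.sum_subtype (p := fun v => v ≠ v₁) (Finset.univ.erase v₁)
    (fun x => by simp) f).symm

lemma reduced_mulVec (v₁ : V) (A : Matrix V V ℝ) (g : V → ℝ) (hg : g v₁ = 0)
    (v : {v : V // v ≠ v₁}) :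
    (reducedM v₁ A *ᵥ fun u : {v : V // v ≠ v₁} => g u.1) v = (A *ᵥ g) v.1 := by
  simp only [mulVec, dotProduct, reducedM, submatrix_apply]
  rw [subtype_sum_erase v₁ (fun u => A v.1 u * g u)]
  rw [← Finset.sum_erase_add Finset.univ _ (Finset.mem_univ v₁), hg, mul_zero, add_zero]

lemma starM_mulVec_ne (v₁ : V) (M : Matrix V V ℝ) (b : V → ℝ) (v : V) (hv : v ≠ v₁) :
    (starM v₁ M *ᵥ b) v
      = ((reducedM v₁ M)⁻¹ *ᵥ fun u : {v : V // v ≠ v₁} => b u.1) ⟨v, hv⟩ := by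
  simp only [mulVec, dotProduct, starM, dif_neg hv]
  rw [← Finset.sum_erase_add Finset.univ _ (Finset.mem_univ v₁), dif_pos rfl, zero_mul,
    add_zero, ← subtype_sum_erase v₁]
  exact Finset.sum_congr rfl fun u _ => by rw [dif_neg u.2]

lemma starM_mulVec_self (v₁ : V) (M : Matrix V V ℝ) (b : V → ℝ) :
    (starM v₁ M *ᵥ b) v₁ = 0 := by
  simp [mulVec, dotProduct, starM]

lemma lap_det_ne_zero (t h : E → V) (hth : ∀ e, h e ≠ t e)
    (Γ : Matrix V E ℝ)
    (hΓ : ∀ v e, Γ v e = if v = h e then 1 else if v = t e then -1 else 0)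
    (v₁ : V) (S : Finset E)
    (hSconn : (SimpleGraph.fromRel fun v w => ∃ e ∈ S, t e = v ∧ h e = w).Connected)
    (w : E → ℝ) (hws : ∀ e ∈ S, 0 < w e) (hw0 : ∀ e ∉ S, w e = 0) :
    (reducedM v₁ (Γ * Matrix.diagonal w * Γᵀ)).det ≠ 0 := by
  intro hdet
  obtain ⟨p, hp0, hp⟩ := (Matrix.exists_mulVec_eq_zero_iff).2 hdet
  set g : V → ℝ := fun v => if hv : v = v₁ then 0 else p ⟨v, hv⟩ with hgdef
  have hgv₁ : g v₁ = 0 := by simp [hgdef]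
  have hgp : (fun u : {v : V // v ≠ v₁} => g u.1) = p := by
    funext u; simp [hgdef, dif_neg u.2]
  have hLg : ∀ v : V, v ≠ v₁ → ((Γ * Matrix.diagonal w * Γᵀ) *ᵥ g) v = 0 := by
    intro v hv
    rw [← reduced_mulVec v₁ _ g hgv₁ ⟨v, hv⟩, hgp, hp]
    rfl
  have hquad : ∑ e, w e * ((Γᵀ *ᵥ g) e) ^ 2 = 0 := by
    have h1 : g ⬝ᵥ ((Γ * Matrix.diagonal w * Γᵀ) *ᵥ g) = 0 := by
      rw [dotProduct]
      apply Finset.sum_eq_zero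
      intro v _
      by_cases hv : v = v₁
      · rw [hv, hgv₁, zero_mul]
      · rw [hLg v hv, mul_zero]
    have h2 : g ⬝ᵥ ((Γ * Matrix.diagonal w * Γᵀ) *ᵥ g)
        = ∑ e, w e * ((Γᵀ *ᵥ g) e) ^ 2 := by
      rw [← Matrix.mulVec_mulVec, ← Matrix.mulVec_mulVec, Matrix.dotProduct_mulVec,
        Matrix.mulVec_transpose, dotProduct]
      exact Finset.sum_congr rfl fun e _ => by rw [Matrix.mulVec_diagonal]; ring
    rw [← h2, h1]
  have hterm : ∀ e ∈ S, (Γᵀ *ᵥ g) e = 0 := by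
    intro e he
    have hnn : ∀ e ∈ Finset.univ (α := E), 0 ≤ w e * ((Γᵀ *ᵥ g) e) ^ 2 := by
      intro e' _
      by_cases he' : e' ∈ S
      · exact mul_nonneg (hws e' he').le (sq_nonneg _)
      · rw [hw0 e' he', zero_mul]
    have := (Finset.sum_eq_zero_iff_of_nonneg hnn).1 hquad e (Finset.mem_univ e)
    have h2 := (mul_eq_zero.1 this).resolve_left (ne_of_gt (hws e he))
    exact pow_eq_zero_iff (n := 2) (by norm_num) |>.1 h2
  have hconst : ∀ v, g v = g v₁ := by
    intro v
    refine const_on_connected t h S hSconn g ?_ v v₁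
    intro e he
    have := hterm e he
    rw [incidence_apply t h hth Γ hΓ g e] at this
    linarith
  apply hp0
  funext u
  have := hconst u.1
  rw [hgv₁, hgdef] at this
  simpa [dif_neg u.2] using this

lemma lap_entry (Γ : Matrix V E ℝ) (d : E → ℝ) (a c : V) :
    (Γ * Matrix.diagonal d * Γᵀ) a c = ∑ e, Γ a e * d e * Γ c e := by
  simp [Matrix.mul_apply, Matrix.diagonal_apply, Finset.sum_ite_eq, Finset.mul_sum,
    Finset.sum_mul, transpose_apply]

end AuxLemmas

/-- Derivatives of the minimum-cost flow function and the optimal potential function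
on an interval with constant support. -/
theorem deriv_mincost_flow_and_potential
    {V E : Type*} [Fintype V] [Fintype E] [DecidableEq V] [DecidableEq E]
    (t h : E → V) (hth : ∀ e, h e ≠ t e)
    (Γ : Matrix V E ℝ)
    (hΓ : ∀ v e, Γ v e = if v = h e then 1 else if v = t e then -1 else 0)
    (f f' : E → ℝ → ℝ)
    (hf' : ∀ e x, HasDerivAt (f e) (f' e x) x)
    (hf'pos : ∀ e x, 0 < f' e x)
    (F : E → ℝ → ℝ)
    (hF : ∀ e x, F e x = ∫ s in (0:ℝ)..x, f e s)
    (v₁ : V)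
    (b0 b : V → ℝ) (hb0 : ∑ v, b0 v = 0) (hb : ∑ v, b v = 0)
    (I : Set ℝ) (hIopen : IsOpen I) (hIsub : I ⊆ Set.Ioi 0)
    (S : Finset E)
    (hSconn : (SimpleGraph.fromRel fun v w => ∃ e ∈ S, t e = v ∧ h e = w).Connected)
    (xs : ℝ → E → ℝ) (π : ℝ → V → ℝ) (hπcont : ContinuousOn π I)
    (hmin : ∀ lam ∈ I,
      (Γ *ᵥ xs lam = fun v => b0 v + lam * b v) ∧ (∀ e, 0 ≤ xs lam e) ∧
      (∀ y : E → ℝ, (Γ *ᵥ y = fun v => b0 v + lam * b v) → (∀ e, 0 ≤ y e) →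
        (∑ e, F e (xs lam e) ≤ ∑ e, F e (y e)) ∧
        ((∑ e, F e (y e) ≤ ∑ e, F e (xs lam e)) → y = xs lam)))
    (hpot : ∀ lam ∈ I, π lam v₁ = 0 ∧ ∀ e,
      π lam (h e) - π lam (t e) ≤ f e (xs lam e) ∧
      (f e (xs lam e) = π lam (h e) - π lam (t e) ↔ e ∈ S))
    (hsupp : ∀ lam ∈ I, ∀ e ∉ S, xs lam e = 0)
    (C : ℝ → Matrix E E ℝ)
    (hC : ∀ lam, C lam = Matrix.diagonal fun e =>
        if e ∈ S then 1 / f' e (xs lam e) else 0)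
    (L : ℝ → Matrix V V ℝ) (hL : ∀ lam, L lam = Γ * C lam * Γᵀ) :
    ∀ lam ∈ I,
      IsUnit (reducedM v₁ (L lam)).det ∧
      HasDerivWithinAt π (starM v₁ (L lam) *ᵥ b) I lam ∧
      HasDerivWithinAt xs ((C lam * Γᵀ) *ᵥ (starM v₁ (L lam) *ᵥ b)) I lam := by
  intro lam hlam
  classical
  set Φ : Filter ℝ := 𝓝[I \ {lam}] lam with hΦ
  have hIn : ∀ᶠ μ in Φ, μ ∈ I ∧ μ ≠ lam := by
    have h1 : ∀ᶠ μ in Φ, μ ∈ I \ {lam} := eventually_mem_nhdsWithin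
    exact h1.mono fun μ hμ => ⟨hμ.1, hμ.2⟩
  have hΦle : Φ ≤ 𝓝[I] lam := nhdsWithin_mono _ Set.diff_subset
  have hmono : ∀ e, StrictMono (f e) := fun e =>
    strictMono_of_deriv_pos fun x => by rw [(hf' e x).deriv]; exact hf'pos e x
  have hfinj : ∀ e, Function.Injective (f e) := fun e => (hmono e).injective
  have hπv : ∀ v, Tendsto (fun μ => π μ v) Φ (𝓝 (π lam v)) := fun v =>
    (tendsto_pi_nhds.1 ((hπcont.continuousWithinAt hlam).mono_left hΦle)) v
  have hfeq : ∀ μ ∈ I, ∀ e ∈ S, f e (xs μ e) = π μ (h e) - π μ (t e) :=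
    fun μ hμ e he => ((hpot μ hμ).2 e).2.mpr he
  have hπ₁ : ∀ μ ∈ I, π μ v₁ = 0 := fun μ hμ => (hpot μ hμ).1
  -- continuity of the flow
  have hxse : ∀ e, Tendsto (fun μ => xs μ e) Φ (𝓝 (xs lam e)) := by
    intro e
    by_cases he : e ∈ S
    · have hftend : Tendsto (fun μ => f e (xs μ e)) Φ (𝓝 (f e (xs lam e))) := by
        have h2 : Tendsto (fun μ => π μ (h e) - π μ (t e)) Φ
            (𝓝 (π lam (h e) - π lam (t e))) := (hπv (h e)).sub (hπv (t e))
        rw [hfeq lam hlam e he]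
        refine h2.congr' ?_
        filter_upwards [hIn] with μ hμ
        exact (hfeq μ hμ.1 e he).symm
      rw [tendsto_order]
      constructor
      · intro a ha
        have h1 : f e a < f e (xs lam e) := (hmono e) ha
        filter_upwards [hftend (Ioi_mem_nhds h1)] with μ hμ
        exact (hmono e).lt_iff_lt.1 hμ
      · intro a ha
        have h1 : f e (xs lam e) < f e a := (hmono e) ha
        filter_upwards [hftend (Iio_mem_nhds h1)] with μ hμ
        exact (hmono e).lt_iff_lt.1 hμ
    · rw [hsupp lam hlam e he]
      refine tendsto_const_nhds.congr' ?_
      filter_upwards [hIn] with μ hμ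
      exact (hsupp μ hμ.1 e he).symm
  -- the difference-quotient conductances
  set ct : ℝ → E → ℝ := fun μ e => if e ∈ S then
      (if f e (xs μ e) = f e (xs lam e) then 1 / f' e (xs lam e)
       else (xs μ e - xs lam e) / (f e (xs μ e) - f e (xs lam e))) else 0 with hctdef
  have hct_lam : ∀ e, ct lam e = if e ∈ S then 1 / f' e (xs lam e) else 0 := by
    intro e; by_cases he : e ∈ S <;> simp [hctdef, he]
  have hct_pos : ∀ μ, ∀ e ∈ S, 0 < ct μ e := by
    intro μ e he
    rw [hctdef]
    simp only [if_pos he]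
    split_ifs with h1
    · exact one_div_pos.2 (hf'pos e _)
    · rcases lt_trichotomy (xs μ e) (xs lam e) with hlt | heq | hgt
      · exact div_pos_of_neg_of_neg (sub_neg.2 hlt) (sub_neg.2 ((hmono e) hlt))
      · exact absurd (by rw [heq]) h1
      · exact div_pos (sub_pos.2 hgt) (sub_pos.2 ((hmono e) hgt))
  have hct_zero : ∀ μ, ∀ e ∉ S, ct μ e = 0 := by
    intro μ e he; simp [hctdef, he]
  have hct_tend : ∀ e, Tendsto (fun μ => ct μ e) Φ (𝓝 (ct lam e)) := by
    intro e
    by_cases he : e ∈ S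
    · set x₀ := xs lam e with hx₀
      set q : ℝ → ℝ := fun u => if f e u = f e x₀ then 1 / f' e x₀
          else (u - x₀) / (f e u - f e x₀) with hq
      have hqct : ∀ μ, ct μ e = q (xs μ e) := fun μ => by simp [hctdef, hq, he, hx₀]
      have hqlam : q x₀ = 1 / f' e x₀ := by simp [hq]
      have hqtend : Tendsto q (𝓝 x₀) (𝓝 (1 / f' e x₀)) := by
        rw [← nhdsNE_sup_pure x₀, tendsto_sup]
        constructor
        · have hslope : Tendsto (fun u => (slope (f e) x₀ u)⁻¹) (𝓝[≠] x₀)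
              (𝓝 (f' e x₀)⁻¹) :=
            ((hasDerivAt_iff_tendsto_slope.1 (hf' e x₀)).inv₀ (ne_of_gt (hf'pos e x₀)))
          rw [one_div]
          refine hslope.congr' ?_
          filter_upwards [self_mem_nhdsWithin] with u hu
          have hune : u ≠ x₀ := hu
          have hfne : f e u ≠ f e x₀ := fun hc => hune (hfinj e hc)
          rw [hq]
          simp only [if_neg hfne]
          rw [slope_def_field, inv_div]
        · rw [show 𝓝 (1 / f' e x₀) = 𝓝 (q x₀) from by rw [hqlam]]
          exact tendsto_pure_nhds q x₀
      rw [hct_lam, if_pos he]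
      exact (hqtend.comp (hxse e)).congr fun μ => (hqct μ).symm
    · rw [hct_lam, if_neg he]
      have hz : ∀ μ, ct μ e = 0 := fun μ => hct_zero μ e he
      simpa [hz] using (tendsto_const_nhds : Tendsto (fun _ : ℝ => (0:ℝ)) Φ (𝓝 0))
  -- key identity
  have hkey : ∀ μ ∈ I, ∀ e, xs μ e - xs lam e
      = ct μ e * ((π μ (h e) - π lam (h e)) - (π μ (t e) - π lam (t e))) := by
    intro μ hμ e
    by_cases he : e ∈ S
    · have h1 : (π μ (h e) - π lam (h e)) - (π μ (t e) - π lam (t e))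
          = f e (xs μ e) - f e (xs lam e) := by
        rw [hfeq μ hμ e he, hfeq lam hlam e he]; ring
      rw [h1, hctdef]
      simp only [if_pos he]
      split_ifs with h2
      · rw [h2, sub_self, mul_zero]
        exact sub_eq_zero.2 (hfinj e h2)
      · rw [div_mul_cancel₀ _ (sub_ne_zero.2 h2)]
    · rw [hsupp μ hμ e he, hsupp lam hlam e he, hct_zero μ e he, zero_mul, sub_self]
  -- the reduced Laplacian system
  set Ahat : ℝ → Matrix {v : V // v ≠ v₁} {v : V // v ≠ v₁} ℝ :=
    fun μ => reducedM v₁ (Γ * Matrix.diagonal (ct μ) * Γᵀ) with hAhat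
  set bhat : {v : V // v ≠ v₁} → ℝ := fun v => b v.1 with hbhat
  have hred : ∀ μ ∈ I, Ahat μ *ᵥ (fun v : {v : V // v ≠ v₁} => π μ v.1 - π lam v.1)
      = fun v : {v : V // v ≠ v₁} => (μ - lam) * bhat v := by
    intro μ hμ
    funext v
    have hg0 : (fun u => π μ u - π lam u) v₁ = 0 := by
      simp [hπ₁ μ hμ, hπ₁ lam hlam]
    show (reducedM v₁ (Γ * Matrix.diagonal (ct μ) * Γᵀ) *ᵥ
        fun v : {v : V // v ≠ v₁} => (fun u => π μ u - π lam u) v.1) v = (μ - lam) * bhat v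
    rw [reduced_mulVec v₁ (Γ * Matrix.diagonal (ct μ) * Γᵀ) (fun u => π μ u - π lam u) hg0 v]
    rw [← Matrix.mulVec_mulVec, ← Matrix.mulVec_mulVec]
    have hinner : (Matrix.diagonal (ct μ) *ᵥ (Γᵀ *ᵥ fun u => π μ u - π lam u))
        = fun e => xs μ e - xs lam e := by
      funext e
      rw [Matrix.mulVec_diagonal, incidence_apply t h hth Γ hΓ _ e, hkey μ hμ e]
    rw [hinner]
    rw [show (fun e => xs μ e - xs lam e) = xs μ - xs lam from rfl, Matrix.mulVec_sub,
      (hmin μ hμ).1, (hmin lam hlam).1]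
    simp only [Pi.sub_apply]
    ring
  have hdet : ∀ μ ∈ I, (Ahat μ).det ≠ 0 := by
    intro μ hμ
    exact lap_det_ne_zero t h hth Γ hΓ v₁ S hSconn (ct μ) (hct_pos μ)
      (fun e he => hct_zero μ e he)
  have hCct : C lam = Matrix.diagonal (ct lam) := by
    rw [hC]
    exact congrArg Matrix.diagonal (funext fun e => (hct_lam e).symm)
  have hLct : L lam = Γ * Matrix.diagonal (ct lam) * Γᵀ := by rw [hL, hCct]
  have hredL : reducedM v₁ (L lam) = Ahat lam := by rw [hAhat, hLct]
  have hdetL : IsUnit (reducedM v₁ (L lam)).det := by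
    rw [hredL]; exact isUnit_iff_ne_zero.2 (hdet lam hlam)
  -- solve the system
  have hsol : ∀ μ ∈ I, ∀ v : {v : V // v ≠ v₁}, π μ v.1 - π lam v.1
      = (μ - lam) * ((Ahat μ)⁻¹ *ᵥ bhat) v := by
    intro μ hμ v
    have h1 : (fun v : {v : V // v ≠ v₁} => π μ v.1 - π lam v.1)
        = (Ahat μ)⁻¹ *ᵥ (Ahat μ *ᵥ fun v : {v : V // v ≠ v₁} => π μ v.1 - π lam v.1) := by
      rw [Matrix.mulVec_mulVec, Matrix.nonsing_inv_mul _ (isUnit_iff_ne_zero.2 (hdet μ hμ)),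
        Matrix.one_mulVec]
    have h2 : (fun v : {v : V // v ≠ v₁} => (μ - lam) * bhat v) = (μ - lam) • bhat := rfl
    calc π μ v.1 - π lam v.1
        = ((Ahat μ)⁻¹ *ᵥ (Ahat μ *ᵥ fun v : {v : V // v ≠ v₁} => π μ v.1 - π lam v.1)) v := by
          rw [← h1]
      _ = ((Ahat μ)⁻¹ *ᵥ ((μ - lam) • bhat)) v := by rw [hred μ hμ, h2]
      _ = (μ - lam) * ((Ahat μ)⁻¹ *ᵥ bhat) v := by rw [Matrix.mulVec_smul]; rfl
  -- convergence of the matrices and of the solution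
  have hAtend : Tendsto Ahat Φ (𝓝 (Ahat lam)) := by
    refine tendsto_pi_nhds.2 ?_
    intro v
    rw [tendsto_pi_nhds]
    intro u
    have hentry : ∀ μ, Ahat μ v u = ∑ e, Γ v.1 e * ct μ e * Γ u.1 e := by
      intro μ
      rw [hAhat]
      show (Γ * Matrix.diagonal (ct μ) * Γᵀ) v.1 u.1 = _
      rw [lap_entry]
    simp only [hentry]
    apply tendsto_finset_sum
    intro e _
    exact (tendsto_const_nhds.mul (hct_tend e)).mul tendsto_const_nhds
  have hAinv : Tendsto (fun μ => (Ahat μ)⁻¹ *ᵥ bhat) Φ (𝓝 ((Ahat lam)⁻¹ *ᵥ bhat)) := by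
    have h1 : ContinuousAt Inv.inv (Ahat lam) :=
      continuousAt_matrix_inv _
        (by rw [Ring.inverse_eq_inv']; exact continuousAt_inv₀ (hdet lam hlam))
    have h2 : Tendsto (fun μ => (Ahat μ)⁻¹) Φ (𝓝 (Ahat lam)⁻¹) := h1.tendsto.comp hAtend
    rw [tendsto_pi_nhds]
    intro v
    simp only [mulVec, dotProduct]
    apply tendsto_finset_sum
    intro u _
    exact ((tendsto_pi_nhds.1 ((tendsto_pi_nhds.1 h2) v)) u).mul tendsto_const_nhds
  -- slope of π, componentwise
  set Dπ : V → ℝ := starM v₁ (L lam) *ᵥ b with hDπ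
  have hslopeπ : ∀ v, Tendsto (fun μ => (μ - lam)⁻¹ * (π μ v - π lam v)) Φ (𝓝 (Dπ v)) := by
    intro v
    by_cases hv : v = v₁
    · rw [hv, show Dπ v₁ = 0 from starM_mulVec_self v₁ (L lam) b]
      refine tendsto_const_nhds.congr' ?_
      filter_upwards [hIn] with μ hμ
      rw [hπ₁ μ hμ.1, hπ₁ lam hlam]
      ring
    · have hval : Dπ v = ((Ahat lam)⁻¹ *ᵥ bhat) ⟨v, hv⟩ := by
        rw [hDπ, starM_mulVec_ne v₁ (L lam) b v hv, hredL]
      rw [hval]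
      refine ((tendsto_pi_nhds.1 hAinv) ⟨v, hv⟩).congr' ?_
      filter_upwards [hIn] with μ hμ
      rw [show π μ v - π lam v = (μ - lam) * ((Ahat μ)⁻¹ *ᵥ bhat) ⟨v, hv⟩ from
        hsol μ hμ.1 ⟨v, hv⟩]
      rw [← mul_assoc, inv_mul_cancel₀ (sub_ne_zero.2 hμ.2), one_mul]
  refine ⟨hdetL, ?_, ?_⟩
  · -- derivative of π
    rw [hasDerivWithinAt_iff_tendsto_slope]
    refine tendsto_pi_nhds.2 fun v => ?_
    have heq : ∀ μ, slope π lam μ v = (μ - lam)⁻¹ * (π μ v - π lam v) := by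
      intro μ
      rw [slope_def_module]
      rfl
    exact (hslopeπ v).congr fun μ => (heq μ).symm
  · -- derivative of xs
    have hDx : ∀ e, ((C lam * Γᵀ) *ᵥ Dπ) e = ct lam e * (Dπ (h e) - Dπ (t e)) := by
      intro e
      rw [← Matrix.mulVec_mulVec, hCct, Matrix.mulVec_diagonal,
        incidence_apply t h hth Γ hΓ Dπ e]
    rw [hasDerivWithinAt_iff_tendsto_slope]
    refine tendsto_pi_nhds.2 fun e => ?_
    have htend : Tendsto (fun μ => ct μ e * ((μ - lam)⁻¹ * (π μ (h e) - π lam (h e))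
        - (μ - lam)⁻¹ * (π μ (t e) - π lam (t e)))) Φ
        (𝓝 (ct lam e * (Dπ (h e) - Dπ (t e)))) :=
      (hct_tend e).mul ((hslopeπ (h e)).sub (hslopeπ (t e)))
    rw [show 𝓝 (((C lam * Γᵀ) *ᵥ Dπ) e) = 𝓝 (ct lam e * (Dπ (h e) - Dπ (t e))) from by
      rw [hDx e]]
    refine htend.congr' ?_
    filter_upwards [hIn] with μ hμ
    have hs : slope xs lam μ e = (μ - lam)⁻¹ * (xs μ e - xs lam e) := by
      rw [slope_def_module]
      rfl
    rw [hs, hkey μ hμ.1 e]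
    ring
end

section
/- First derivative of the optimal cost: Assume each f_e is differentiable with f_e'(x) > 0 for all x ∈ ℝ. Fix a vertex v₁ ∈ V, balanced demands b⁰, b ∈ ℝ^V, an open interval I ⊆ (0, ∞), a set S ⊆ E whose underlying undirected subgraph (V, S) is connected, and functions x* : I → ℝ^E and π : I → ℝ^V with π continuous, such that for every λ ∈ I: (a) x*(λ) is the unique minimizer of ∑_{e∈E} F_e(x_e) over {x ∈ ℝ^E : Γx = b⁰ + λb, x ≥ 0}; (b) π_{v₁}(λ) = 0 and for every edge e, f_e(x*_e(λ)) ≥ π_{h(e)}(λ) − π_{t(e)}(λ), with equality precisely for the edges e ∈ S; and (c) x*_e(λ) = 0 for all e ∉ S. Then the function C(λ) := ∑_{e∈E} F_e(x*_e(λ)) is differentiable on I with C'(λ) = ∑_{v∈V} b_v π_v(λ). -/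
open Matrix

/-- Gradient inequality for a single edge cost: since `f` is increasing
(positive derivative) and `F x = ∫_0^x f`, we get `F y - F x ≥ f x (y - x)`. -/
lemma aux_grad_ineq (f fd : ℝ → ℝ)
    (hd : ∀ x, HasDerivAt f (fd x) x) (hpos : ∀ x, 0 < fd x)
    (F : ℝ → ℝ) (hF : ∀ x, F x = ∫ s in (0:ℝ)..x, f s)
    (x y : ℝ) : f x * (y - x) ≤ F y - F x := by
  have hc : Continuous f := by
    rw [continuous_iff_continuousAt]; exact fun u => (hd u).continuousAt
  have hFd : ∀ u, HasDerivAt F (f u) u := by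
    intro u
    have h1 : HasDerivAt (fun u => ∫ s in (0:ℝ)..u, f s) (f u) u :=
      (hc.integral_hasStrictDerivAt 0 u).hasDerivAt
    have : F = fun u => ∫ s in (0:ℝ)..u, f s := funext hF
    rw [this]; exact h1
  have hmono : StrictMono f := strictMono_of_hasDerivAt_pos hd hpos
  have hFcont : Continuous F := by
    rw [continuous_iff_continuousAt]; exact fun u => (hFd u).continuousAt
  rcases lt_trichotomy x y with hxy | hxy | hxy
  · obtain ⟨c, hc1, hc2⟩ := exists_hasDerivAt_eq_slope F f hxy
      hFcont.continuousOn (fun u _ => hFd u)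
    have hne : y - x ≠ 0 := sub_ne_zero.2 hxy.ne'
    have hFc : F y - F x = f c * (y - x) := by
      field_simp at hc2; linarith [hc2]
    rw [hFc]
    exact mul_le_mul_of_nonneg_right (hmono.le_iff_le.2 hc1.1.le) (by linarith)
  · simp [hxy]
  · obtain ⟨c, hc1, hc2⟩ := exists_hasDerivAt_eq_slope F f hxy
      hFcont.continuousOn (fun u _ => hFd u)
    have hne : x - y ≠ 0 := sub_ne_zero.2 hxy.ne'
    have hFc : F x - F y = f c * (x - y) := by
      field_simp at hc2; linarith [hc2]
    have hcx : f c ≤ f x := (hmono.le_iff_le.2 hc1.2.le)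
    nlinarith [hcx, hFc]

/-- First derivative of the optimal cost on an interval with constant support:
`C'(λ) = ∑_v b_v π_v(λ)`. -/
theorem deriv_optimal_cost
    {V E : Type*} [Fintype V] [Fintype E] [DecidableEq V] [DecidableEq E]
    (t h : E → V) (hth : ∀ e, h e ≠ t e)
    (Γ : Matrix V E ℝ)
    (hΓ : ∀ v e, Γ v e = if v = h e then 1 else if v = t e then -1 else 0)
    (f f' : E → ℝ → ℝ)
    (hf' : ∀ e x, HasDerivAt (f e) (f' e x) x)
    (hf'pos : ∀ e x, 0 < f' e x)
    (F : E → ℝ → ℝ)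
    (hF : ∀ e x, F e x = ∫ s in (0:ℝ)..x, f e s)
    (v₁ : V)
    (b0 b : V → ℝ) (hb0 : ∑ v, b0 v = 0) (hb : ∑ v, b v = 0)
    (I : Set ℝ) (hIopen : IsOpen I) (hIsub : I ⊆ Set.Ioi 0)
    (S : Finset E)
    (hSconn : (SimpleGraph.fromRel fun v w => ∃ e ∈ S, t e = v ∧ h e = w).Connected)
    (xs : ℝ → E → ℝ) (π : ℝ → V → ℝ) (hπcont : ContinuousOn π I)
    (hmin : ∀ lam ∈ I,
      (Γ *ᵥ xs lam = fun v => b0 v + lam * b v) ∧ (∀ e, 0 ≤ xs lam e) ∧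
      (∀ y : E → ℝ, (Γ *ᵥ y = fun v => b0 v + lam * b v) → (∀ e, 0 ≤ y e) →
        (∑ e, F e (xs lam e) ≤ ∑ e, F e (y e)) ∧
        ((∑ e, F e (y e) ≤ ∑ e, F e (xs lam e)) → y = xs lam)))
    (hpot : ∀ lam ∈ I, π lam v₁ = 0 ∧ ∀ e,
      π lam (h e) - π lam (t e) ≤ f e (xs lam e) ∧
      (f e (xs lam e) = π lam (h e) - π lam (t e) ↔ e ∈ S))
    (hsupp : ∀ lam ∈ I, ∀ e ∉ S, xs lam e = 0) :
    ∀ lam ∈ I,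
      HasDerivWithinAt (fun lam' => ∑ e, F e (xs lam' e)) (∑ v, b v * π lam v) I lam := by
  -- the candidate derivative as a function of λ
  set g : ℝ → ℝ := fun l => ∑ v, b v * π l v with hg
  -- columns of Γ pair with potentials
  have hcol : ∀ (p : V → ℝ) e, ∑ v, p v * Γ v e = p (h e) - p (t e) := by
    intro p e
    have hterm : ∀ v, p v * Γ v e =
        (if v = h e then p v else 0) - (if v = t e then p v else 0) := by
      intro v
      rw [hΓ v e]
      rcases eq_or_ne v (h e) with h1 | h1
      · have h2 : v ≠ t e := h1 ▸ hth e
        simp [h1, h2, hth e]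
      · rcases eq_or_ne v (t e) with h2 | h2 <;> simp [h1, h2, hth e, (hth e).symm]
    rw [Finset.sum_congr rfl fun v _ => hterm v, Finset.sum_sub_distrib]
    simp
  -- the key inequality between any two points of I
  have key : ∀ la ∈ I, ∀ mu ∈ I,
      (mu - la) * g la ≤ (∑ e, F e (xs mu e)) - (∑ e, F e (xs la e)) := by
    intro la hla mu hmu
    have grad : ∀ e, f e (xs la e) * (xs mu e - xs la e)
        ≤ F e (xs mu e) - F e (xs la e) :=
      fun e => aux_grad_ineq (f e) (f' e) (hf' e) (hf'pos e) (F e) (hF e) _ _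
    have h1 : ∑ e, f e (xs la e) * (xs mu e - xs la e)
        ≤ (∑ e, F e (xs mu e)) - (∑ e, F e (xs la e)) := by
      rw [← Finset.sum_sub_distrib]
      exact Finset.sum_le_sum fun e _ => grad e
    refine le_trans (le_of_eq ?_) h1
    -- rewrite each term using the potentials
    have hterm : ∀ e, f e (xs la e) * (xs mu e - xs la e)
        = (π la (h e) - π la (t e)) * (xs mu e - xs la e) := by
      intro e
      by_cases heS : e ∈ S
      · rw [(((hpot la hla).2 e).2.mpr heS)]
      · rw [hsupp la hla e heS, hsupp mu hmu e heS]; ring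
    -- Γ applied to the difference of flows
    have hΓd : ∀ v, ∑ e, Γ v e * (xs mu e - xs la e) = (mu - la) * b v := by
      intro v
      have h1 := congrFun (hmin mu hmu).1 v
      have h2 := congrFun (hmin la hla).1 v
      simp only [mulVec, dotProduct] at h1 h2
      have : ∑ e, Γ v e * (xs mu e - xs la e)
          = (∑ e, Γ v e * xs mu e) - ∑ e, Γ v e * xs la e := by
        rw [← Finset.sum_sub_distrib]
        exact Finset.sum_congr rfl fun e _ => by ring
      rw [this, h1, h2]; ring
    calc (mu - la) * g la = ∑ v, π la v * ((mu - la) * b v) := by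
          rw [hg]; rw [Finset.mul_sum]
          exact Finset.sum_congr rfl fun v _ => by ring
      _ = ∑ v, π la v * ∑ e, Γ v e * (xs mu e - xs la e) := by
          exact Finset.sum_congr rfl fun v _ => by rw [hΓd v]
      _ = ∑ v, ∑ e, π la v * (Γ v e * (xs mu e - xs la e)) := by
          exact Finset.sum_congr rfl fun v _ => by rw [Finset.mul_sum]
      _ = ∑ e, ∑ v, π la v * (Γ v e * (xs mu e - xs la e)) := Finset.sum_comm
      _ = ∑ e, (π la (h e) - π la (t e)) * (xs mu e - xs la e) := by
          refine Finset.sum_congr rfl fun e _ => ?_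
          rw [← hcol (π la) e, Finset.sum_mul]
          exact Finset.sum_congr rfl fun v _ => by ring
      _ = ∑ e, f e (xs la e) * (xs mu e - xs la e) :=
          Finset.sum_congr rfl fun e _ => (hterm e).symm
  intro lam hlam
  -- continuity of g within I at lam
  have hgc : Filter.Tendsto g (nhdsWithin lam I) (nhds (g lam)) := by
    apply tendsto_finset_sum
    intro v _
    have h1 : Filter.Tendsto (fun l => π l v) (nhdsWithin lam I) (nhds (π lam v)) :=
      ((continuous_apply v).continuousAt.tendsto).comp (hπcont lam hlam)
    exact h1.const_mul (b v)
  rw [hasDerivWithinAt_iff_isLittleO, Asymptotics.isLittleO_iff]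
  intro ε hε
  have hev1 : ∀ᶠ mu in nhdsWithin lam I, |g mu - g lam| ≤ ε := by
    have := hgc (Metric.closedBall_mem_nhds (g lam) hε)
    filter_upwards [this] with mu hmu
    simpa [Real.dist_eq] using hmu
  have hev2 : ∀ᶠ mu in nhdsWithin lam I, mu ∈ I := self_mem_nhdsWithin
  filter_upwards [hev1, hev2] with mu hmu1 hmu2
  have k1 := key lam hlam mu hmu2
  have k2 := key mu hmu2 lam hlam
  -- D := C mu - C lam - (mu - lam) * g lam satisfies 0 ≤ D ≤ (mu-lam)(g mu - g lam)
  have hD1 : 0 ≤ (∑ e, F e (xs mu e)) - (∑ e, F e (xs lam e)) - (mu - lam) * g lam := by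
    linarith
  have hD2 : (∑ e, F e (xs mu e)) - (∑ e, F e (xs lam e)) - (mu - lam) * g lam
      ≤ (mu - lam) * (g mu - g lam) := by
    have : (∑ e, F e (xs lam e)) - (∑ e, F e (xs mu e)) ≥ (lam - mu) * g mu := k2
    nlinarith
  have habs : (mu - lam) * (g mu - g lam) ≤ |mu - lam| * ε := by
    calc (mu - lam) * (g mu - g lam) ≤ |(mu - lam) * (g mu - g lam)| := le_abs_self _
      _ = |mu - lam| * |g mu - g lam| := abs_mul _ _
      _ ≤ |mu - lam| * ε := mul_le_mul_of_nonneg_left hmu1 (abs_nonneg _)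
  simp only [Real.norm_eq_abs, smul_eq_mul]
  rw [abs_of_nonneg hD1]
  calc (∑ e, F e (xs mu e)) - (∑ e, F e (xs lam e)) - (mu - lam) * g lam
      ≤ (mu - lam) * (g mu - g lam) := hD2
    _ ≤ |mu - lam| * ε := habs
    _ = ε * |mu - lam| := mul_comm _ _
end

section
/- Second derivative of the optimal cost and its positivity: Assume each f_e is differentiable with f_e'(x) > 0 for all x ∈ ℝ. Fix a vertex v₁ ∈ V, balanced demands b⁰, b ∈ ℝ^V with b ≠ 0, an open interval I ⊆ (0, ∞), a set S ⊆ E whose underlying undirected subgraph (V, S) is connected, and functions x* : I → ℝ^E and π : I → ℝ^V with π continuous, such that for every λ ∈ I: (a) x*(λ) is the unique minimizer of ∑_{e∈E} F_e(x_e) over {x ∈ ℝ^E : Γx = b⁰ + λb, x ≥ 0}; (b) π_{v₁}(λ) = 0 and for every edge e, f_e(x*_e(λ)) ≥ π_{h(e)}(λ) − π_{t(e)}(λ), with equality precisely for the edges e ∈ S; and (c) x*_e(λ) = 0 for all e ∉ S. Let C_λ = diag(c_e(λ)) with c_e(λ) = 1/f_e'(x*_e(λ)) if e ∈ S and c_e(λ)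 = 0 otherwise, and L_λ = Γ C_λ Γ^T. Then C(λ) := ∑_{e∈E} F_e(x*_e(λ)) is twice differentiable on I with C''(λ) = b^T L*_λ b > 0. -/
open Matrix Function Asymptotics

section OneDim

variable {f f' : ℝ → ℝ}

lemma myStrictMono (hf' : ∀ x, HasDerivAt f (f' x) x) (hpos : ∀ x, 0 < f' x) :
    StrictMono f :=
  strictMono_of_deriv_pos fun x => by rw [(hf' x).deriv]; exact hpos x

lemma myCont (hf' : ∀ x, HasDerivAt f (f' x) x) : Continuous f :=
  continuous_iff_continuousAt.2 fun x => (hf' x).continuousAt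

lemma invFun_comp_self (hf' : ∀ x, HasDerivAt f (f' x) x) (hpos : ∀ x, 0 < f' x) (x : ℝ) :
    invFun f (f x) = x :=
  leftInverse_invFun (myStrictMono hf' hpos).injective x

lemma continuousAt_myInvFun (hf' : ∀ x, HasDerivAt f (f' x) x) (hpos : ∀ x, 0 < f' x)
    (x₀ : ℝ) : ContinuousAt (invFun f) (f x₀) := by
  have hm := myStrictMono hf' hpos
  have hc := myCont hf'
  rw [Metric.continuousAt_iff]
  intro ε hε
  have hε2 : 0 < ε / 2 := half_pos hε
  refine ⟨min (f (x₀ + ε/2) - f x₀) (f x₀ - f (x₀ - ε/2)),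
    lt_min (by simp [sub_pos]; exact hm (by linarith)) (by simp [sub_pos]; exact hm (by linarith)), ?_⟩
  intro y hy
  rw [Real.dist_eq] at hy
  have h1 : f (x₀ - ε/2) < y := by
    have := (abs_lt.1 hy).1
    have := min_le_right (f (x₀ + ε/2) - f x₀) (f x₀ - f (x₀ - ε/2))
    linarith
  have h2 : y < f (x₀ + ε/2) := by
    have := (abs_lt.1 hy).2
    have := min_le_left (f (x₀ + ε/2) - f x₀) (f x₀ - f (x₀ - ε/2))
    linarith
  obtain ⟨x, hx, hfx⟩ := intermediate_value_Icc (by linarith : x₀ - ε/2 ≤ x₀ + ε/2)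
    hc.continuousOn ⟨h1.le, h2.le⟩
  rw [Real.dist_eq, ← hfx, invFun_comp_self hf' hpos, invFun_comp_self hf' hpos, abs_lt]
  obtain ⟨hx1, hx2⟩ := hx
  constructor <;> linarith

lemma hasDerivAt_myInvFun (hf' : ∀ x, HasDerivAt f (f' x) x) (hpos : ∀ x, 0 < f' x)
    (x₀ : ℝ) : HasDerivAt (invFun f) (f' x₀)⁻¹ (f x₀) := by
  have hm := myStrictMono hf' hpos
  have hc := myCont hf'
  refine HasDerivAt.of_local_left_inverse (f := f) (continuousAt_myInvFun hf' hpos x₀)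
    ?_ (hpos x₀).ne' ?_
  · rw [invFun_comp_self hf' hpos]; exact hf' x₀
  · have hmem : Set.Ioo (f (x₀ - 1)) (f (x₀ + 1)) ∈ nhds (f x₀) :=
      Ioo_mem_nhds (hm (by linarith)) (hm (by linarith))
    filter_upwards [hmem] with y hy
    obtain ⟨x, _, hfx⟩ := intermediate_value_Icc (by linarith : x₀ - 1 ≤ x₀ + 1)
      hc.continuousOn ⟨hy.1.le, hy.2.le⟩
    rw [← hfx, invFun_comp_self hf' hpos]

end OneDim

section Bootstrap

variable {EE FF : Type*} [NormedAddCommGroup EE] [NormedSpace ℝ EE]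
  [NormedAddCommGroup FF] [NormedSpace ℝ FF]

lemma hasDerivWithinAt_of_comp_eq
    {g : EE → FF} {A : EE ≃L[ℝ] FF} {φ : ℝ → EE} {d : FF} {r : ℝ → FF} {I : Set ℝ} {lam : ℝ}
    (hlam : lam ∈ I)
    (hφc : ContinuousWithinAt φ I lam)
    (hg : HasFDerivAt g (A : EE →L[ℝ] FF) (φ lam))
    (hr : HasDerivWithinAt r d I lam)
    (heq : ∀ x ∈ I, g (φ x) = r x) :
    HasDerivWithinAt φ (A.symm d) I lam := by
  set l := nhdsWithin lam I with hl
  set q : ℝ → EE := fun x => φ x - φ lam with hqdef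
  have hmem : ∀ᶠ x in l, g (φ x) = r x := eventually_nhdsWithin_of_forall heq
  have h1 : (fun x => g (φ x) - g (φ lam) - A (q x)) =o[l] q := by
    have := hg.isLittleO.comp_tendsto hφc
    exact this.congr_left fun x => rfl
  have h1' : (fun x => r x - r lam - A (q x)) =o[l] q := by
    refine h1.congr' ?_ Filter.EventuallyEq.rfl
    filter_upwards [hmem] with x hx
    rw [hx, heq lam hlam]
  have hqAq : q =O[l] fun x => A (q x) := A.isBigO_comp_rev q l
  have e1 : (fun x => A (q x) - (r x - r lam)) =o[l] fun x => A (q x) := by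
    have hn : (fun x => A (q x) - (r x - r lam)) =o[l] q := by
      refine h1'.neg_left.congr_left fun x => ?_
      abel
    exact hn.trans_isBigO hqAq
  have e2 : (fun x => A (q x)) =O[l] fun x => r x - r lam := by
    have := e1.right_isBigO_sub
    exact this.congr_right fun x => by abel
  have hqO : q =O[l] fun x => x - lam :=
    hqAq.trans (e2.trans hr.hasFDerivWithinAt.isBigO_sub)
  have h2 : (fun x => r x - r lam - (x - lam) • d) =o[l] fun x => x - lam :=
    hasDerivWithinAt_iff_isLittleO.mp hr
  have h3 : (fun x => A (q x) - (x - lam) • d) =o[l] fun x => x - lam := by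
    have ha : (fun x => A (q x) - (r x - r lam)) =o[l] fun x => x - lam := by
      refine IsLittleO.trans_isBigO ?_ hqO
      refine h1'.neg_left.congr_left fun x => ?_
      abel
    exact (ha.add h2).congr_left fun x => by abel
  have h4 : (fun x => φ x - φ lam - (x - lam) • A.symm d) =o[l] fun x => x - lam := by
    have hcomp : (fun x => A.symm (A (q x) - (x - lam) • d)) =o[l] fun x => x - lam :=
      ((A.symm : FF →L[ℝ] EE).isBigO_comp _ l).trans_isLittleO h3
    refine hcomp.congr_left fun x => ?_
    rw [map_sub, A.symm_apply_apply, _root_.map_smul]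
  exact hasDerivWithinAt_iff_isLittleO.mpr h4

end Bootstrap

section Sums

lemma sum_split {V : Type*} [Fintype V] [DecidableEq V] (v₁ : V) (G : V → ℝ) :
    ∑ v, G v = G v₁ + ∑ v : {v : V // v ≠ v₁}, G v := by
  rw [Fintype.sum_eq_add_sum_compl v₁]
  congr 1
  exact Finset.sum_subtype (p := fun v => v ≠ v₁) {v₁}ᶜ (fun x => by simp) G

end Sums
section Extend

variable {V : Type*} [Fintype V] [DecidableEq V]

/-- Extension of a vector on `V \ {v₁}` by zero. -/
noncomputable def extendF (v₁ : V) (p : {v : V // v ≠ v₁} → ℝ) : V → ℝ :=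
  fun v => if hv : v = v₁ then 0 else p ⟨v, hv⟩

@[simp] lemma extendF_v₁ (v₁ : V) (p : {v : V // v ≠ v₁} → ℝ) : extendF v₁ p v₁ = 0 :=
  dif_pos rfl

@[simp] lemma extendF_ne (v₁ : V) (p : {v : V // v ≠ v₁} → ℝ) (v : {v : V // v ≠ v₁}) :
    extendF v₁ p ↑v = p v := by
  rw [extendF, dif_neg v.2]

lemma extendF_ne' (v₁ : V) (p : {v : V // v ≠ v₁} → ℝ) (v : V) (hv : v ≠ v₁) :
    extendF v₁ p v = p ⟨v, hv⟩ := dif_neg hv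

/-- `extendF` as a continuous linear map. -/
noncomputable def extendCLM (v₁ : V) : ({v : V // v ≠ v₁} → ℝ) →L[ℝ] (V → ℝ) :=
  LinearMap.toContinuousLinearMap
  { toFun := extendF v₁
    map_add' := fun p q => by
      funext v
      by_cases hv : v = v₁ <;> simp [extendF, hv]
    map_smul' := fun a p => by
      funext v
      by_cases hv : v = v₁ <;> simp [extendF, hv] }

@[simp] lemma extendCLM_apply (v₁ : V) (p : {v : V // v ≠ v₁} → ℝ) :
    extendCLM v₁ p = extendF v₁ p := rfl

end Extend
open Matrix

/-- Second derivative of the optimal cost and its positivity: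
`C''(λ) = bᵀ L*_λ b > 0` on an interval with constant support. -/
theorem second_deriv_optimal_cost
    {V E : Type*} [Fintype V] [Fintype E] [DecidableEq V] [DecidableEq E]
    (t h : E → V) (hth : ∀ e, h e ≠ t e)
    (Γ : Matrix V E ℝ)
    (hΓ : ∀ v e, Γ v e = if v = h e then 1 else if v = t e then -1 else 0)
    (f f' : E → ℝ → ℝ)
    (hf' : ∀ e x, HasDerivAt (f e) (f' e x) x)
    (hf'pos : ∀ e x, 0 < f' e x)
    (F : E → ℝ → ℝ)
    (hF : ∀ e x, F e x = ∫ s in (0:ℝ)..x, f e s)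
    (v₁ : V)
    (b0 b : V → ℝ) (hb0 : ∑ v, b0 v = 0) (hb : ∑ v, b v = 0) (hbne : b ≠ 0)
    (I : Set ℝ) (hIopen : IsOpen I) (hIsub : I ⊆ Set.Ioi 0)
    (S : Finset E)
    (hSconn : (SimpleGraph.fromRel fun v w => ∃ e ∈ S, t e = v ∧ h e = w).Connected)
    (xs : ℝ → E → ℝ) (π : ℝ → V → ℝ) (hπcont : ContinuousOn π I)
    (hmin : ∀ lam ∈ I,
      (Γ *ᵥ xs lam = fun v => b0 v + lam * b v) ∧ (∀ e, 0 ≤ xs lam e) ∧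
      (∀ y : E → ℝ, (Γ *ᵥ y = fun v => b0 v + lam * b v) → (∀ e, 0 ≤ y e) →
        (∑ e, F e (xs lam e) ≤ ∑ e, F e (y e)) ∧
        ((∑ e, F e (y e) ≤ ∑ e, F e (xs lam e)) → y = xs lam)))
    (hpot : ∀ lam ∈ I, π lam v₁ = 0 ∧ ∀ e,
      π lam (h e) - π lam (t e) ≤ f e (xs lam e) ∧
      (f e (xs lam e) = π lam (h e) - π lam (t e) ↔ e ∈ S))
    (hsupp : ∀ lam ∈ I, ∀ e ∉ S, xs lam e = 0)
    (C : ℝ → Matrix E E ℝ)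
    (hC : ∀ lam, C lam = Matrix.diagonal fun e =>
        if e ∈ S then 1 / f' e (xs lam e) else 0)
    (L : ℝ → Matrix V V ℝ) (hL : ∀ lam, L lam = Γ * C lam * Γᵀ) :
    ∃ C' : ℝ → ℝ, ∀ lam ∈ I,
      IsUnit (reducedM v₁ (L lam)).det ∧
      HasDerivWithinAt (fun lam' => ∑ e, F e (xs lam' e)) (C' lam) I lam ∧
      HasDerivWithinAt C' (b ⬝ᵥ (starM v₁ (L lam) *ᵥ b)) I lam ∧
      0 < b ⬝ᵥ (starM v₁ (L lam) *ᵥ b) := by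
  classical
  -- basic facts about the incidence matrix
  have hΓrow : ∀ (x : V → ℝ) (e : E), ∑ v, Γ v e * x v = x (h e) - x (t e) := by
    intro x e
    have hsplit : ∀ v, Γ v e * x v =
        (if v = h e then x v else 0) + (if v = t e then -x v else 0) := by
      intro v
      rw [hΓ]
      by_cases h1 : v = h e
      · subst h1; simp [hth e]
      · by_cases h2 : v = t e
        · subst h2; simp [h1, neg_one_mul]
        · simp [h1, h2]
    simp only [hsplit, Finset.sum_add_distrib, Finset.sum_ite_eq', Finset.mem_univ, if_pos]
    ring
  have hΓcol : ∀ e, ∑ v, Γ v e = 0 := by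
    intro e
    have := hΓrow (fun _ => 1) e
    simpa using this
  -- the inverse functions of the marginal costs
  set φ : E → ℝ → ℝ := fun e => Function.invFun (f e) with hφdef
  have hφf : ∀ e x, φ e (f e x) = x := fun e x => invFun_comp_self (hf' e) (hf'pos e) x
  have hFd : ∀ e y, HasDerivAt (F e) (f e y) y := by
    intro e y
    have hcf : Continuous (f e) := myCont (hf' e)
    rw [show F e = fun x => ∫ s in (0:ℝ)..x, f e s from funext (hF e)]
    exact intervalIntegral.integral_hasDerivAt_right (hcf.intervalIntegrable _ _)
      (hcf.stronglyMeasurableAtFilter _ _) hcf.continuousAt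
  refine ⟨fun lam => ∑ v, b v * π lam v, fun lam hlam => ?_⟩
  -- difference functionals
  set Δ : E → ({v : V // v ≠ v₁} → ℝ) →L[ℝ] ℝ := fun e =>
    (((ContinuousLinearMap.proj (h e) : (V → ℝ) →L[ℝ] ℝ)) -
      ((ContinuousLinearMap.proj (t e) : (V → ℝ) →L[ℝ] ℝ))).comp (extendCLM v₁)
    with hΔdef
  have hΔ : ∀ e p, Δ e p = extendF v₁ p (h e) - extendF v₁ p (t e) := fun e p => rfl
  set c : E → ℝ := fun e => (f' e (xs lam e))⁻¹ with hcdef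
  set cS : E → ℝ := fun e => if e ∈ S then c e else 0 with hcSdef
  have hcS_nonneg : ∀ e, 0 ≤ cS e := by
    intro e
    rw [hcSdef]
    dsimp only
    split
    · exact (inv_pos.2 (hf'pos e _)).le
    · exact le_rfl
  have hCd : C lam = Matrix.diagonal cS := by
    rw [hC]; congr 1; funext e; rw [hcSdef]; simp [hcdef, one_div]
  have hLentry : ∀ v w, L lam v w = ∑ e, Γ v e * (cS e * Γ w e) := by
    intro v w
    rw [hL, hCd, Matrix.mul_assoc, Matrix.mul_apply]
    congr 1; funext e
    rw [Matrix.diagonal_mul, Matrix.transpose_apply]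
  have hLmul : ∀ (x : V → ℝ) (v : V),
      (L lam *ᵥ x) v = ∑ e, Γ v e * (cS e * (x (h e) - x (t e))) := by
    intro x v
    calc (L lam *ᵥ x) v = ∑ w, (∑ e, Γ v e * (cS e * Γ w e)) * x w := by
          simp only [Matrix.mulVec, dotProduct, hLentry]
      _ = ∑ w, ∑ e, Γ v e * (cS e * (Γ w e * x w)) := by
          congr 1; funext w; rw [Finset.sum_mul]; congr 1; funext e; ring
      _ = ∑ e, ∑ w, Γ v e * (cS e * (Γ w e * x w)) := Finset.sum_comm
      _ = ∑ e, Γ v e * (cS e * ∑ w, Γ w e * x w) := by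
          congr 1; funext e; rw [Finset.mul_sum]; congr 1; rw [Finset.mul_sum]
      _ = ∑ e, Γ v e * (cS e * (x (h e) - x (t e))) := by
          congr 1; funext e; rw [hΓrow]
  have hquad : ∀ x : V → ℝ,
      x ⬝ᵥ (L lam *ᵥ x) = ∑ e, cS e * (x (h e) - x (t e))^2 := by
    intro x
    calc x ⬝ᵥ (L lam *ᵥ x) = ∑ v, x v * ∑ e, Γ v e * (cS e * (x (h e) - x (t e))) := by
          simp only [dotProduct, hLmul]
      _ = ∑ v, ∑ e, Γ v e * x v * (cS e * (x (h e) - x (t e))) := by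
          congr 1; funext v; rw [Finset.mul_sum]; congr 1; funext e; ring
      _ = ∑ e, ∑ v, Γ v e * x v * (cS e * (x (h e) - x (t e))) := Finset.sum_comm
      _ = ∑ e, (∑ v, Γ v e * x v) * (cS e * (x (h e) - x (t e))) := by
          congr 1; funext e; rw [Finset.sum_mul]
      _ = ∑ e, cS e * (x (h e) - x (t e))^2 := by
          congr 1; funext e; rw [hΓrow]; ring
  have hred : ∀ (q : {v : V // v ≠ v₁} → ℝ) (v : {v : V // v ≠ v₁}),
      (reducedM v₁ (L lam) *ᵥ q) v = (L lam *ᵥ extendF v₁ q) ↑v := by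
    intro q v
    simp only [Matrix.mulVec, dotProduct, reducedM, Matrix.submatrix_apply]
    rw [sum_split v₁ (fun w => L lam ↑v w * extendF v₁ q w)]
    simp
  -- connectivity: functions constant on S-edges are constant
  have hconn : ∀ (x : V → ℝ), (∀ e ∈ S, x (h e) = x (t e)) → ∀ v, x v = x v₁ := by
    intro x hx v
    have key : ∀ (u w : V),
        (SimpleGraph.fromRel fun a c => ∃ e ∈ S, t e = a ∧ h e = c).Reachable u w →
        x u = x w := by
      intro u w hr
      obtain ⟨p⟩ := hr
      induction p with
      | nil => rfl
      | cons ha _ ih =>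
        rw [SimpleGraph.fromRel_adj] at ha
        refine Eq.trans ?_ ih
        rcases ha.2 with ⟨e, heS, hte, hhe⟩ | ⟨e, heS, hte, hhe⟩
        · rw [← hte, ← hhe]; exact (hx e heS).symm
        · rw [← hte, ← hhe]; exact hx e heS
    exact key v v₁ (hSconn.preconnected v v₁)
  -- positive definiteness of the reduced Laplacian
  have hposdef : (reducedM v₁ (L lam)).PosDef := by
    rw [Matrix.posDef_iff_dotProduct_mulVec]
    constructor
    · show (reducedM v₁ (L lam))ᴴ = reducedM v₁ (L lam)
      ext i j
      simp only [Matrix.conjTranspose_apply, reducedM, Matrix.submatrix_apply, star_trivial]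
      rw [hLentry, hLentry]
      exact Finset.sum_congr rfl fun e _ => by ring
    · intro q hq
      have hstarq : star q = q := funext fun v => star_trivial _
      have hsq : star q ⬝ᵥ (reducedM v₁ (L lam) *ᵥ q)
          = ∑ e, cS e * (extendF v₁ q (h e) - extendF v₁ q (t e))^2 := by
        rw [hstarq]
        have h1 : q ⬝ᵥ (reducedM v₁ (L lam) *ᵥ q)
            = extendF v₁ q ⬝ᵥ (L lam *ᵥ extendF v₁ q) := by
          simp only [dotProduct]
          rw [sum_split v₁ (fun v => extendF v₁ q v * (L lam *ᵥ extendF v₁ q) v)]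
          rw [extendF_v₁, zero_mul, zero_add]
          exact Finset.sum_congr rfl fun v _ => by rw [extendF_ne, hred]
        rw [h1, hquad]
      rw [hsq]
      have hnn : ∀ e ∈ Finset.univ,
          0 ≤ cS e * (extendF v₁ q (h e) - extendF v₁ q (t e))^2 :=
        fun e _ => mul_nonneg (hcS_nonneg e) (sq_nonneg _)
      rcases (Finset.sum_nonneg hnn).lt_or_eq with hlt | heq0
      · exact hlt
      · exfalso
        apply hq
        have hz := (Finset.sum_eq_zero_iff_of_nonneg hnn).mp heq0.symm
        have hS : ∀ e ∈ S, extendF v₁ q (h e) = extendF v₁ q (t e) := by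
          intro e he
          have hz' := hz e (Finset.mem_univ e)
          have hcpos : 0 < cS e := by
            rw [hcSdef]; dsimp only; rw [if_pos he]; exact inv_pos.2 (hf'pos e _)
          rcases mul_eq_zero.mp hz' with h0 | h0
          · exact absurd h0 hcpos.ne'
          · have := pow_eq_zero_iff (n := 2) (by norm_num) |>.mp h0
            linarith [sub_eq_zero.mp this]
        funext v
        have hcv := hconn (extendF v₁ q) hS ↑v
        rw [extendF_v₁] at hcv
        have : q v = extendF v₁ q ↑v := (extendF_ne v₁ q v).symm
        rw [this, hcv]; rfl
  have hdet : IsUnit (reducedM v₁ (L lam)).det := hposdef.det_pos.ne'.isUnit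
  -- implicit function setup
  set η : ℝ → ({v : V // v ≠ v₁} → ℝ) := fun μ v => π μ ↑v with hηdef
  have hextπ : ∀ μ ∈ I, extendF v₁ (η μ) = π μ := by
    intro μ hμ; funext v
    by_cases hv : v = v₁
    · subst hv; rw [extendF_v₁, (hpot μ hμ).1]
    · rw [extendF_ne' v₁ _ v hv]
  have hΔη : ∀ μ ∈ I, ∀ e, Δ e (η μ) = π μ (h e) - π μ (t e) := by
    intro μ hμ e; rw [hΔ, hextπ μ hμ]
  have hfeq : ∀ μ ∈ I, ∀ e ∈ S, f e (xs μ e) = π μ (h e) - π μ (t e) :=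
    fun μ hμ e he => ((hpot μ hμ).2 e).2.mpr he
  set g : ({v : V // v ≠ v₁} → ℝ) → ({v : V // v ≠ v₁} → ℝ) :=
    fun p v => ∑ e ∈ S, Γ ↑v e * φ e (Δ e p) with hgdef
  set r : ℝ → ({v : V // v ≠ v₁} → ℝ) := fun μ v => b0 ↑v + μ * b ↑v with hrdef
  have hgπ : ∀ μ ∈ I, g (η μ) = r μ := by
    intro μ hμ
    funext v
    have hterm : ∀ e ∈ S, Γ ↑v e * φ e (Δ e (η μ)) = Γ ↑v e * xs μ e := by
      intro e he
      rw [hΔη μ hμ e, ← hfeq μ hμ e he, hφf]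
    calc g (η μ) v = ∑ e ∈ S, Γ ↑v e * xs μ e := Finset.sum_congr rfl hterm
      _ = ∑ e, Γ ↑v e * xs μ e := Finset.sum_subset (Finset.subset_univ S)
            (fun e _ hne => by rw [hsupp μ hμ e hne, mul_zero])
      _ = (Γ *ᵥ xs μ) ↑v := rfl
      _ = b0 ↑v + μ * b ↑v := by rw [(hmin μ hμ).1]
  set bq : {v : V // v ≠ v₁} → ℝ := fun v => b ↑v with hbhdef
  set Lr := reducedM v₁ (L lam) with hLrdef
  have hinv1 : Lr⁻¹ * Lr = 1 := Matrix.nonsing_inv_mul _ hdet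
  have hinv2 : Lr * Lr⁻¹ = 1 := Matrix.mul_nonsing_inv _ hdet
  set Aeq : ({v : V // v ≠ v₁} → ℝ) ≃L[ℝ] ({v : V // v ≠ v₁} → ℝ) :=
    LinearEquiv.toContinuousLinearEquiv
      { Matrix.mulVecLin Lr with
        invFun := fun q => Lr⁻¹ *ᵥ q
        left_inv := fun q => by
          show Lr⁻¹ *ᵥ (Lr *ᵥ q) = q
          rw [Matrix.mulVec_mulVec, hinv1, Matrix.one_mulVec]
        right_inv := fun q => by
          show Lr *ᵥ (Lr⁻¹ *ᵥ q) = q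
          rw [Matrix.mulVec_mulVec, hinv2, Matrix.one_mulVec] }
    with hAdef
  have hAapply : ∀ q, Aeq q = Lr *ᵥ q := fun q => rfl
  have hAsymm : ∀ q, Aeq.symm q = Lr⁻¹ *ᵥ q := fun q => rfl
  have hLapply : ∀ (q : {v : V // v ≠ v₁} → ℝ) (v : {v : V // v ≠ v₁}),
      (Lr *ᵥ q) v = ∑ e ∈ S, Γ ↑v e * (c e * Δ e q) := by
    intro q v
    rw [hLrdef, hred, hLmul]
    have hterm : ∀ e, Γ (↑v) e * (cS e * (extendF v₁ q (h e) - extendF v₁ q (t e)))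
        = if e ∈ S then Γ ↑v e * (c e * Δ e q) else 0 := by
      intro e
      rw [hΔ, hcSdef]
      dsimp only
      split
      · rfl
      · ring
    rw [Finset.sum_congr rfl (fun e _ => hterm e), Finset.sum_ite_mem, Finset.univ_inter]
  have hΔlam : ∀ e ∈ S, Δ e (η lam) = f e (xs lam e) :=
    fun e he => by rw [hΔη lam hlam e, hfeq lam hlam e he]
  have hgderiv : HasFDerivAt g (Aeq : _ →L[ℝ] _) (η lam) := by
    apply hasFDerivAt_pi''
    intro v
    have hsum : HasFDerivAt (fun p => ∑ e ∈ S, Γ ↑v e * φ e (Δ e p))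
        (∑ e ∈ S, Γ (↑v) e • (c e • (Δ e : _ →L[ℝ] ℝ))) (η lam) := by
      apply HasFDerivAt.fun_sum
      intro e he
      have hinner : HasDerivAt (φ e) (c e) (Δ e (η lam)) := by
        rw [hΔlam e he, hcdef]
        exact hasDerivAt_myInvFun (hf' e) (hf'pos e) (xs lam e)
      exact (hinner.comp_hasFDerivAt _ (Δ e).hasFDerivAt).const_mul _
    have hEq : (∑ e ∈ S, Γ (↑v) e • (c e • (Δ e : _ →L[ℝ] ℝ)))
        = (ContinuousLinearMap.proj (R := ℝ) (φ := fun _ : {v : V // v ≠ v₁} => ℝ) v).comp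
            (Aeq : ({v : V // v ≠ v₁} → ℝ) →L[ℝ] ({v : V // v ≠ v₁} → ℝ)) := by
      ext q
      simp only [ContinuousLinearMap.coe_sum', Finset.sum_apply,
        ContinuousLinearMap.smul_apply, ContinuousLinearMap.coe_comp',
        Function.comp_apply, ContinuousLinearMap.proj_apply, smul_eq_mul]
      rw [ContinuousLinearEquiv.coe_coe, hAapply, hLapply]
    rw [← hEq]
    exact hsum
  have hφc : ContinuousWithinAt η I lam := by
    apply continuousWithinAt_pi.2
    intro v
    exact (continuous_apply (v : V)).continuousAt.comp_continuousWithinAt (hπcont lam hlam)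
  have hrD : HasDerivWithinAt r bq I lam := by
    apply hasDerivWithinAt_pi.2
    intro v
    have : HasDerivAt (fun μ => b0 (↑v : V) + μ * b ↑v) (b ↑v) lam := by
      simpa using ((hasDerivAt_id lam).mul_const (b (↑v : V))).const_add (b0 ↑v)
    exact this.hasDerivWithinAt
  have hη : HasDerivWithinAt η (Lr⁻¹ *ᵥ bq) I lam := by
    have := hasDerivWithinAt_of_comp_eq (A := Aeq) hlam hφc hgderiv hrD hgπ
    rwa [hAsymm] at this
  set p' : {v : V // v ≠ v₁} → ℝ := Lr⁻¹ *ᵥ bq with hp'def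
  set x' : E → ℝ := fun e => cS e * Δ e p' with hx'def
  have hx'S : ∀ e ∈ S, x' e = c e * Δ e p' := by
    intro e he; rw [hx'def]; dsimp only; rw [hcSdef]; dsimp only; rw [if_pos he]
  have hx'nS : ∀ e ∉ S, x' e = 0 := by
    intro e he; rw [hx'def]; dsimp only; rw [hcSdef]; dsimp only; rw [if_neg he, zero_mul]
  have hLext : ∀ w : V, (L lam *ᵥ extendF v₁ p') w = ∑ e, Γ w e * x' e := by
    intro w; rw [hLmul]
    exact Finset.sum_congr rfl fun e _ => by
      rw [show x' e = cS e * (Δ e p') from rfl, hΔ]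
  have hne : ∀ v : {v : V // v ≠ v₁}, (L lam *ᵥ extendF v₁ p') ↑v = b ↑v := by
    intro v
    rw [← hred]
    show (Lr *ᵥ (Lr⁻¹ *ᵥ bq)) v = b ↑v
    rw [Matrix.mulVec_mulVec, hinv2, Matrix.one_mulVec]
  have htot : ∑ w, (L lam *ᵥ extendF v₁ p') w = 0 := by
    calc ∑ w, (L lam *ᵥ extendF v₁ p') w
        = ∑ w, ∑ e, Γ w e * (cS e * (extendF v₁ p' (h e) - extendF v₁ p' (t e))) := by
          simp only [hLmul]
      _ = ∑ e, ∑ w, Γ w e * (cS e * (extendF v₁ p' (h e) - extendF v₁ p' (t e))) :=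
          Finset.sum_comm
      _ = ∑ e, (∑ w, Γ w e) * (cS e * (extendF v₁ p' (h e) - extendF v₁ p' (t e))) := by
          congr 1; funext e; rw [Finset.sum_mul]
      _ = 0 := Finset.sum_eq_zero fun e _ => by rw [hΓcol e, zero_mul]
  have hΓx' : ∀ v, ∑ e, Γ v e * x' e = b v := by
    intro v
    rw [← hLext]
    by_cases hv : v = v₁
    · rw [hv]
      rw [sum_split v₁ (fun w => (L lam *ᵥ extendF v₁ p') w)] at htot
      have h2 : ∑ v' : {v : V // v ≠ v₁}, (L lam *ᵥ extendF v₁ p') ↑v'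
          = ∑ v' : {v : V // v ≠ v₁}, b ↑v' := Finset.sum_congr rfl fun v' _ => hne v'
      have hsb : b v₁ + ∑ v' : {v : V // v ≠ v₁}, b ↑v' = 0 := by
        rw [← sum_split v₁ b]; exact hb
      linarith [htot, h2, hsb]
    · exact hne ⟨v, hv⟩
  -- derivative of the optimal cost
  have hxs_eq : ∀ μ ∈ I, ∀ e, xs μ e = if e ∈ S then φ e (Δ e (η μ)) else 0 := by
    intro μ hμ e
    by_cases he : e ∈ S
    · rw [if_pos he, hΔη μ hμ e, ← hfeq μ hμ e he, hφf]
    · rw [if_neg he]; exact hsupp μ hμ e he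
  have hcost_e : ∀ e, HasDerivWithinAt (fun μ => F e (if e ∈ S then φ e (Δ e (η μ)) else 0))
      (f e (xs lam e) * x' e) I lam := by
    intro e
    by_cases he : e ∈ S
    · simp only [if_pos he]
      have h1 : HasDerivWithinAt (fun μ => Δ e (η μ)) (Δ e p') I lam :=
        (Δ e).hasFDerivAt.comp_hasDerivWithinAt lam hη
      have h2 : HasDerivAt (φ e) (c e) (Δ e (η lam)) := by
        rw [hΔlam e he, hcdef]
        exact hasDerivAt_myInvFun (hf' e) (hf'pos e) (xs lam e)
      have h3 : HasDerivWithinAt (fun μ => φ e (Δ e (η μ))) (c e * Δ e p') I lam :=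
        by have := h2.comp_hasDerivWithinAt lam h1; exact this
      have h4 := (hFd e (φ e (Δ e (η lam)))).comp_hasDerivWithinAt lam h3
      have hval : φ e (Δ e (η lam)) = xs lam e := by rw [hΔlam e he, hφf]
      rw [hval] at h4
      have hrw : f e (xs lam e) * x' e = f e (xs lam e) * (c e * Δ e p') := by
        rw [hx'S e he]
      rw [hrw]
      exact h4
    · simp only [if_neg he]
      rw [hx'nS e he, mul_zero]
      exact hasDerivWithinAt_const _ _ _
  have hC1 : HasDerivWithinAt (fun μ => ∑ e, F e (xs μ e))
      (∑ v, b v * π lam v) I lam := by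
    have hsum := HasDerivWithinAt.fun_sum (fun e (_ : e ∈ Finset.univ) => hcost_e e)
    have hcongr : HasDerivWithinAt (fun μ => ∑ e, F e (xs μ e))
        (∑ e, f e (xs lam e) * x' e) I lam := by
      apply hsum.congr
      · intro μ hμ; exact Finset.sum_congr rfl fun e _ => by rw [hxs_eq μ hμ e]
      · exact Finset.sum_congr rfl fun e _ => by rw [hxs_eq lam hlam e]
    have hval : ∑ e, f e (xs lam e) * x' e = ∑ v, b v * π lam v := by
      have hstep : ∀ e, f e (xs lam e) * x' e = (π lam (h e) - π lam (t e)) * x' e := by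
        intro e
        by_cases he : e ∈ S
        · rw [hfeq lam hlam e he]
        · rw [hx'nS e he, mul_zero, mul_zero]
      calc ∑ e, f e (xs lam e) * x' e
          = ∑ e, (π lam (h e) - π lam (t e)) * x' e := Finset.sum_congr rfl fun e _ => hstep e
        _ = ∑ e, (∑ v, Γ v e * π lam v) * x' e := by
            exact Finset.sum_congr rfl fun e _ => by rw [hΓrow]
        _ = ∑ e, ∑ v, Γ v e * π lam v * x' e := by
            exact Finset.sum_congr rfl fun e _ => by rw [Finset.sum_mul]
        _ = ∑ v, ∑ e, Γ v e * π lam v * x' e := Finset.sum_comm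
        _ = ∑ v, π lam v * ∑ e, Γ v e * x' e := by
            refine Finset.sum_congr rfl fun v _ => ?_
            rw [Finset.mul_sum]
            exact Finset.sum_congr rfl fun e _ => by ring
        _ = ∑ v, b v * π lam v := by
            refine Finset.sum_congr rfl fun v _ => ?_
            rw [hΓx' v]; ring
    rw [← hval]
    exact hcongr
  -- second derivative
  have hπv₁ : ∀ μ ∈ I, π μ v₁ = 0 := fun μ hμ => (hpot μ hμ).1
  have hC2pre : HasDerivWithinAt (fun μ => ∑ v : {v : V // v ≠ v₁}, b ↑v * η μ v)
      (∑ v : {v : V // v ≠ v₁}, b ↑v * p' v) I lam := by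
    apply HasDerivWithinAt.fun_sum
    intro v _
    exact ((ContinuousLinearMap.proj v).hasFDerivAt.comp_hasDerivWithinAt lam hη).const_mul _
  have hC2 : HasDerivWithinAt (fun μ => ∑ v, b v * π μ v)
      (∑ v : {v : V // v ≠ v₁}, b ↑v * p' v) I lam := by
    apply hC2pre.congr
    · intro μ hμ
      rw [sum_split v₁ (fun v => b v * π μ v), hπv₁ μ hμ, mul_zero, zero_add]
    · rw [sum_split v₁ (fun v => b v * π lam v), hπv₁ lam hlam, mul_zero, zero_add]
  have hstarval : b ⬝ᵥ (starM v₁ (L lam) *ᵥ b)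
      = ∑ v : {v : V // v ≠ v₁}, b ↑v * p' v := by
    simp only [dotProduct, Matrix.mulVec]
    rw [sum_split v₁ (fun i => b i * ∑ j, starM v₁ (L lam) i j * b j)]
    have hrow0 : ∑ j, starM v₁ (L lam) v₁ j * b j = 0 :=
      Finset.sum_eq_zero fun j _ => by rw [starM, dif_pos rfl, zero_mul]
    rw [hrow0, mul_zero, zero_add]
    refine Finset.sum_congr rfl fun v _ => ?_
    have hinner : ∑ j, starM v₁ (L lam) ↑v j * b j = p' v := by
      rw [sum_split v₁ (fun j => starM v₁ (L lam) ↑v j * b j)]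
      have h0 : starM v₁ (L lam) ↑v v₁ = 0 := by rw [starM, dif_neg v.2, dif_pos rfl]
      rw [h0, zero_mul, zero_add, hp'def]
      simp only [Matrix.mulVec, dotProduct]
      refine Finset.sum_congr rfl fun w _ => ?_
      rw [starM, dif_neg v.2, dif_neg w.2]
    rw [hinner]
  have hbqne : bq ≠ 0 := by
    intro h0
    apply hbne
    funext v
    by_cases hv : v = v₁
    · rw [hv]
      have hsb := hb
      rw [sum_split v₁ b] at hsb
      have : ∑ v' : {v : V // v ≠ v₁}, b ↑v' = 0 :=
        Finset.sum_eq_zero fun v' _ => congrFun h0 v'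
      rw [this, add_zero] at hsb
      exact hsb
    · exact congrFun h0 ⟨v, hv⟩
  have hpos : 0 < b ⬝ᵥ (starM v₁ (L lam) *ᵥ b) := by
    rw [hstarval]
    have hinvpd : (Lr⁻¹).PosDef := hposdef.inv
    have := (Matrix.posDef_iff_dotProduct_mulVec.mp hinvpd).2 hbqne
    have hstarb : star bq = bq := funext fun v => star_trivial _
    rw [hstarb] at this
    calc (0:ℝ) < bq ⬝ᵥ (Lr⁻¹ *ᵥ bq) := this
      _ = ∑ v : {v : V // v ≠ v₁}, b ↑v * p' v := by
          rw [hp'def]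
          rfl
  exact ⟨hdet, hC1, hstarval ▸ hC2, hpos⟩
end

section
/- Rayleigh's monotonicity law: Fix a vertex v₁ ∈ V, a set S ⊆ E, and vectors a, ã ∈ ℝ^E with ã_e ≥ a_e > 0 for all e. Let C = diag(c) with c_e = 1/a_e for e ∈ S and c_e = 0 otherwise, and C̃ = diag(c̃) with c̃_e = 1/ã_e for e ∈ S and c̃_e = 0 otherwise; let L = Γ C Γ^T and L̃ = Γ C̃ Γ^T, and assume both reduced matrices L̂ and L̃̂ are invertible. Then for every balanced b ∈ ℝ^V, b^T L* b ≤ b^T L̃* b. -/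
open Matrix

/- Auxiliary lemmas -/

lemma aux_dot_sym {n : Type*} [Fintype n] (A : Matrix n n ℝ) (hA : Aᵀ = A) (u w : n → ℝ) :
    u ⬝ᵥ A *ᵥ w = w ⬝ᵥ A *ᵥ u := by
  rw [Matrix.dotProduct_mulVec, ← Matrix.mulVec_transpose, hA, dotProduct_comm]

lemma aux_psd_apply {n : Type*} [Fintype n] {A : Matrix n n ℝ} (hA : A.PosSemidef)
    (x : n → ℝ) : 0 ≤ x ⬝ᵥ A *ᵥ x := by
  simpa using hA.dotProduct_mulVec_nonneg x

lemma aux_cs {n : Type*} [Fintype n] (A : Matrix n n ℝ) (hA : A.PosSemidef) (u w : n → ℝ) :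
    (u ⬝ᵥ A *ᵥ w) ^ 2 ≤ (u ⬝ᵥ A *ᵥ u) * (w ⬝ᵥ A *ᵥ w) := by
  have hsym : Aᵀ = A := by
    have := hA.isHermitian
    rwa [Matrix.IsHermitian, Matrix.conjTranspose_eq_transpose_of_trivial] at this
  have key : ∀ t : ℝ,
      0 ≤ (w ⬝ᵥ A *ᵥ w) * (t * t) + (2 * (u ⬝ᵥ A *ᵥ w)) * t + (u ⬝ᵥ A *ᵥ u) := by
    intro t
    have h0 := aux_psd_apply hA (u + t • w)
    simp only [Matrix.mulVec_add, Matrix.mulVec_smul, dotProduct_add,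
      add_dotProduct, dotProduct_smul, smul_dotProduct,
      smul_eq_mul] at h0
    have hswap : w ⬝ᵥ A *ᵥ u = u ⬝ᵥ A *ᵥ w := aux_dot_sym A hsym w u
    rw [hswap] at h0
    nlinarith [h0]
  have hd := discrim_le_zero key
  rw [discrim] at hd
  nlinarith [hd]

lemma aux_inv_anti {n : Type*} [Fintype n] [DecidableEq n] (A B : Matrix n n ℝ)
    (hA : A.PosSemidef) (hB : B.PosSemidef) (hBA : (B - A).PosSemidef)
    (hdA : IsUnit A.det) (hdB : IsUnit B.det) (x : n → ℝ) :
    x ⬝ᵥ B⁻¹ *ᵥ x ≤ x ⬝ᵥ A⁻¹ *ᵥ x := by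
  set u := B⁻¹ *ᵥ x with hu
  have hBu : B *ᵥ u = x := by
    rw [hu, Matrix.mulVec_mulVec, Matrix.mul_nonsing_inv _ hdB, Matrix.one_mulVec]
  have hAv : A *ᵥ (A⁻¹ *ᵥ x) = x := by
    rw [Matrix.mulVec_mulVec, Matrix.mul_nonsing_inv _ hdA, Matrix.one_mulVec]
  set s := x ⬝ᵥ u with hs_def
  set r := x ⬝ᵥ A⁻¹ *ᵥ x with hr_def
  have hr : 0 ≤ r := aux_psd_apply hA.inv x
  have hs_eq : u ⬝ᵥ B *ᵥ u = s := by
    rw [hBu, dotProduct_comm]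
  have hs : 0 ≤ s := hs_eq ▸ aux_psd_apply hB u
  have h1 : u ⬝ᵥ A *ᵥ u ≤ s := by
    have h0 := aux_psd_apply hBA u
    rw [Matrix.sub_mulVec, dotProduct_sub] at h0
    linarith [hs_eq]
  have h2 : s ^ 2 ≤ (u ⬝ᵥ A *ᵥ u) * r := by
    have hcs := aux_cs A hA u (A⁻¹ *ᵥ x)
    rw [hAv] at hcs
    have e1 : u ⬝ᵥ x = s := dotProduct_comm u x
    have e2 : (A⁻¹ *ᵥ x) ⬝ᵥ x = r := dotProduct_comm _ x
    rw [e1, e2] at hcs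
    exact hcs
  have h3 : s ^ 2 ≤ s * r := le_trans h2 (mul_le_mul_of_nonneg_right h1 hr)
  show s ≤ r
  rcases (eq_or_lt_of_le hs).imp Eq.symm id with h | h
  · exact h.le.trans hr
  · nlinarith [h3]

lemma aux_sum_ne {V : Type*} [Fintype V] [DecidableEq V] (v₁ : V) (f : V → ℝ)
    (hf : f v₁ = 0) : ∑ i, f i = ∑ i : {v : V // v ≠ v₁}, f i := by
  rw [← Finset.sum_erase Finset.univ hf]
  exact Finset.sum_subtype _ (fun x => by simp) f

lemma aux_dot_star {V : Type*} [Fintype V] [DecidableEq V] (v₁ : V)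
    (M : Matrix V V ℝ) (b : V → ℝ) :
    b ⬝ᵥ starM v₁ M *ᵥ b =
      (fun v : {v : V // v ≠ v₁} => b v) ⬝ᵥ
        (reducedM v₁ M)⁻¹ *ᵥ (fun v : {v : V // v ≠ v₁} => b v) := by
  unfold dotProduct Matrix.mulVec dotProduct
  rw [aux_sum_ne v₁ _ (by simp [starM])]
  refine Finset.sum_congr rfl fun i _ => ?_
  congr 1
  rw [aux_sum_ne v₁ _ (by simp [starM])]
  refine Finset.sum_congr rfl fun j _ => ?_
  congr 1
  simp [starM, i.prop, j.prop]

/-- Rayleigh's monotonicity law: increasing the edge resistances `a_e ≤ a'_e`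
increases the energy `bᵀ L* b`. -/
theorem rayleigh_monotonicity
    {V E : Type*} [Fintype V] [Fintype E] [DecidableEq V] [DecidableEq E]
    (t h : E → V) (hth : ∀ e, h e ≠ t e)
    (Γ : Matrix V E ℝ)
    (hΓ : ∀ v e, Γ v e = if v = h e then 1 else if v = t e then -1 else 0)
    (v₁ : V) (S : Finset E)
    (a a' : E → ℝ) (ha : ∀ e, 0 < a e) (haa' : ∀ e, a e ≤ a' e)
    (C : Matrix E E ℝ)
    (hC : C = Matrix.diagonal fun e => if e ∈ S then 1 / a e else 0)
    (C' : Matrix E E ℝ)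
    (hC' : C' = Matrix.diagonal fun e => if e ∈ S then 1 / a' e else 0)
    (L : Matrix V V ℝ) (hL : L = Γ * C * Γᵀ)
    (L' : Matrix V V ℝ) (hL' : L' = Γ * C' * Γᵀ)
    (hinv : IsUnit (reducedM v₁ L).det)
    (hinv' : IsUnit (reducedM v₁ L').det) :
    ∀ b : V → ℝ, ∑ v, b v = 0 →
      b ⬝ᵥ (starM v₁ L *ᵥ b) ≤ b ⬝ᵥ (starM v₁ L' *ᵥ b) := by
  intro b _
  -- positivity of the edge weight matrices
  have ha' : ∀ e, 0 < a' e := fun e => lt_of_lt_of_le (ha e) (haa' e)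
  have hCps : C.PosSemidef := by
    rw [hC]
    refine Matrix.PosSemidef.diagonal fun e => ?_
    by_cases he : e ∈ S
    · simp only [he, if_true]; exact (div_pos one_pos (ha e)).le
    · simp [he]
  have hC'ps : C'.PosSemidef := by
    rw [hC']
    refine Matrix.PosSemidef.diagonal fun e => ?_
    by_cases he : e ∈ S
    · simp only [he, if_true]; exact (div_pos one_pos (ha' e)).le
    · simp [he]
  have hΓt : Γᵀ = Γᴴ := (Matrix.conjTranspose_eq_transpose_of_trivial Γ).symm
  have hLps : L.PosSemidef := by
    rw [hL, hΓt]; exact hCps.mul_mul_conjTranspose_same Γ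
  have hL'ps : L'.PosSemidef := by
    rw [hL', hΓt]; exact hC'ps.mul_mul_conjTranspose_same Γ
  have hdiff : (L - L').PosSemidef := by
    have hCC' : (C - C').PosSemidef := by
      rw [hC, hC', Matrix.diagonal_sub]
      refine Matrix.PosSemidef.diagonal fun e => ?_
      by_cases he : e ∈ S
      · simp only [Pi.sub_apply, he, if_true]
        exact sub_nonneg.mpr (one_div_le_one_div_of_le (ha e) (haa' e))
      · simp [he]
    have : L - L' = Γ * (C - C') * Γᵀ := by
      rw [hL, hL', Matrix.mul_sub, Matrix.sub_mul]
    rw [this, hΓt]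
    exact hCC'.mul_mul_conjTranspose_same Γ
  -- reduced matrices
  have hBps : (reducedM v₁ L).PosSemidef := hLps.submatrix Subtype.val
  have hAps : (reducedM v₁ L').PosSemidef := hL'ps.submatrix Subtype.val
  have hBA : (reducedM v₁ L - reducedM v₁ L').PosSemidef := by
    have : reducedM v₁ L - reducedM v₁ L' = reducedM v₁ (L - L') := by
      unfold reducedM; rw [Matrix.submatrix_sub]; rfl
    rw [this]
    exact hdiff.submatrix Subtype.val
  rw [aux_dot_star, aux_dot_star]
  exact aux_inv_anti (reducedM v₁ L') (reducedM v₁ L) hAps hBps hBA hinv' hinv _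
end

section
/- Marginal cost approximation, relative-error condition: Let α > 1, β ≥ 0, x^max > 0, and m = |E|. For each e let f_e and f̃_e be marginal cost functions with edge costs F_e(x) = ∫_0^x f_e(s) ds and F̃_e(x) = ∫_0^x f̃_e(s) ds. Let b ∈ ℝ^V be balanced, let K = {x ∈ ℝ^E : Γx = b and l_e ≤ x_e ≤ u_e for all e}, let x* minimize ∑_{e∈E} F_e(x_e) over K and x̃ minimize ∑_{e∈E} F̃_e(x_e) over K, and assume |x*_e| ≤ x^max and |x̃_e| ≤ x^max for all e. If |f̃_e(s) − f_e(s)| ≤ ((α − 1)/(1 + α))·|f_e(s)| + β/((1 + α)·m·x^max) for all e ∈ E and all s ∈ [−x^max, x^max], then ∑_{e∈E} F_e(x̃_e) ≤ α·∑_{e∈E} F_e(x*_e) + β. -/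
open Matrix


private lemma mca_aux1 (α β S : ℝ) (hne : 1+α ≠ 0) :
    (1 + α) * ((1 - (α - 1) / (1 + α)) * S - β/(1+α)) = 2 * S - β := by
  have h1 : (1+α) * ((α-1)/(1+α)) = α - 1 := mul_div_cancel₀ _ hne
  have h2 : (1+α) * (β/(1+α)) = β := mul_div_cancel₀ _ hne
  linear_combination (-S) * h1 - h2

private lemma mca_aux2 (α β S : ℝ) (hne : 1+α ≠ 0) :
    (1 + α) * ((1 + (α - 1) / (1 + α)) * S + β/(1+α)) = 2 * α * S + β := by
  have h1 : (1+α) * ((α-1)/(1+α)) = α - 1 := mul_div_cancel₀ _ hne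
  have h2 : (1+α) * (β/(1+α)) = β := mul_div_cancel₀ _ hne
  linear_combination S * h1 + h2

/-- Marginal cost approximation, relative-error condition. -/
theorem mca_relative_error
    {V E : Type*} [Fintype V] [Fintype E] [DecidableEq V]
    (t h : E → V) (hth : ∀ e, h e ≠ t e)
    (Γ : Matrix V E ℝ)
    (hΓ : ∀ v e, Γ v e = if v = h e then 1 else if v = t e then -1 else 0)
    (α β xmax : ℝ) (hα : 1 < α) (hβ : 0 ≤ β) (hxmax : 0 < xmax)
    (f ft : E → ℝ → ℝ)
    (hf_cont : ∀ e, Continuous (f e)) (hf_mono : ∀ e, StrictMono (f e))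
    (hf_nonneg : ∀ e s, 0 ≤ s → 0 ≤ f e s) (hf_nonpos : ∀ e s, s ≤ 0 → f e s ≤ 0)
    (hft_cont : ∀ e, Continuous (ft e)) (hft_mono : ∀ e, StrictMono (ft e))
    (hft_nonneg : ∀ e s, 0 ≤ s → 0 ≤ ft e s) (hft_nonpos : ∀ e s, s ≤ 0 → ft e s ≤ 0)
    (F Ft : E → ℝ → ℝ)
    (hF : ∀ e x, F e x = ∫ s in (0:ℝ)..x, f e s)
    (hFt : ∀ e x, Ft e x = ∫ s in (0:ℝ)..x, ft e s)
    (b : V → ℝ) (hb : ∑ v, b v = 0)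
    (l u : E → EReal) (hlu : ∀ e, l e ≤ u e)
    (xstar xt : E → ℝ)
    (hxsfeas : Γ *ᵥ xstar = b ∧ ∀ e, l e ≤ (xstar e : EReal) ∧ (xstar e : EReal) ≤ u e)
    (hxsmin : ∀ y : E → ℝ, Γ *ᵥ y = b →
      (∀ e, l e ≤ (y e : EReal) ∧ (y e : EReal) ≤ u e) →
      ∑ e, F e (xstar e) ≤ ∑ e, F e (y e))
    (hxtfeas : Γ *ᵥ xt = b ∧ ∀ e, l e ≤ (xt e : EReal) ∧ (xt e : EReal) ≤ u e)
    (hxtmin : ∀ y : E → ℝ, Γ *ᵥ y = b →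
      (∀ e, l e ≤ (y e : EReal) ∧ (y e : EReal) ≤ u e) →
      ∑ e, Ft e (xt e) ≤ ∑ e, Ft e (y e))
    (hbds : ∀ e, |xstar e| ≤ xmax) (hbdt : ∀ e, |xt e| ≤ xmax)
    (happrox : ∀ e, ∀ s ∈ Set.Icc (-xmax) xmax,
      |ft e s - f e s| ≤ (α - 1) / (1 + α) * |f e s|
        + β / ((1 + α) * (Fintype.card E : ℝ) * xmax)) :
    ∑ e, F e (xt e) ≤ α * ∑ e, F e (xstar e) + β := by
  rcases isEmpty_or_nonempty E with hE | hE
  · simp only [Finset.univ_eq_empty, Finset.sum_empty]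
    nlinarith
  · set m : ℝ := (Fintype.card E : ℝ) with hm
    have hm1 : (1:ℝ) ≤ m := by rw [hm]; exact_mod_cast Nat.one_le_iff_ne_zero.mpr Fintype.card_ne_zero
    have hα0 : (0:ℝ) < 1 + α := by linarith
    have hne : (1+α) ≠ 0 := ne_of_gt hα0
    set γ : ℝ := (α - 1)/(1+α) with hγ
    set δ : ℝ := β / ((1+α) * m * xmax) with hδ
    have hδ0 : 0 ≤ δ := by
      apply div_nonneg hβ
      positivity
    have key : ∀ e : E, ∀ x : ℝ, |x| ≤ xmax →
        (1-γ) * F e x - δ * xmax ≤ Ft e x ∧ Ft e x ≤ (1+γ) * F e x + δ * xmax := by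
      intro e x hx
      obtain ⟨hx1, hx2⟩ := abs_le.mp hx
      rw [hF, hFt]
      rcases le_total 0 x with hx0 | hx0
      · have hsub : Set.Icc (0:ℝ) x ⊆ Set.Icc (-xmax) xmax := by
          intro s hs
          exact ⟨by linarith [hs.1], by linarith [hs.2]⟩
        have hup : ∀ s ∈ Set.Icc (0:ℝ) x, ft e s ≤ (1+γ) * f e s + δ := by
          intro s hs
          have h1 := (abs_le.mp (happrox e s (hsub hs))).2
          rw [abs_of_nonneg (hf_nonneg e s hs.1)] at h1
          linarith
        have hlo : ∀ s ∈ Set.Icc (0:ℝ) x, (1-γ) * f e s - δ ≤ ft e s := by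
          intro s hs
          have h1 := (abs_le.mp (happrox e s (hsub hs))).1
          rw [abs_of_nonneg (hf_nonneg e s hs.1)] at h1
          linarith
        have hintf : IntervalIntegrable (ft e) MeasureTheory.volume 0 x :=
          (hft_cont e).intervalIntegrable _ _
        have hintu : IntervalIntegrable (fun s => (1+γ) * f e s + δ) MeasureTheory.volume 0 x :=
          ((continuous_const.mul (hf_cont e)).add continuous_const).intervalIntegrable _ _
        have hintl : IntervalIntegrable (fun s => (1-γ) * f e s - δ) MeasureTheory.volume 0 x :=
          ((continuous_const.mul (hf_cont e)).sub continuous_const).intervalIntegrable _ _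
        have h2 := intervalIntegral.integral_mono_on hx0 hintf hintu hup
        have h3 := intervalIntegral.integral_mono_on hx0 hintl hintf hlo
        have hcu : ∫ s in (0:ℝ)..x, ((1+γ) * f e s + δ) =
            (1+γ) * (∫ s in (0:ℝ)..x, f e s) + δ * x := by
          rw [intervalIntegral.integral_add (show IntervalIntegrable (fun s => (1+γ) * f e s) MeasureTheory.volume 0 x from (continuous_const.mul (hf_cont e)).intervalIntegrable 0 x)
            intervalIntegrable_const, intervalIntegral.integral_const_mul,
            intervalIntegral.integral_const]
          simp [smul_eq_mul]; ring
        have hcl : ∫ s in (0:ℝ)..x, ((1-γ) * f e s - δ) =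
            (1-γ) * (∫ s in (0:ℝ)..x, f e s) - δ * x := by
          rw [intervalIntegral.integral_sub (show IntervalIntegrable (fun s => (1-γ) * f e s) MeasureTheory.volume 0 x from (continuous_const.mul (hf_cont e)).intervalIntegrable 0 x)
            intervalIntegrable_const, intervalIntegral.integral_const_mul,
            intervalIntegral.integral_const]
          simp [smul_eq_mul]; ring
        rw [hcu] at h2
        rw [hcl] at h3
        constructor
        · nlinarith
        · nlinarith
      · have hsub : Set.Icc x (0:ℝ) ⊆ Set.Icc (-xmax) xmax := by
          intro s hs
          exact ⟨by linarith [hs.1], by linarith [hs.2]⟩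
        have hup : ∀ s ∈ Set.Icc x (0:ℝ), ft e s ≤ (1-γ) * f e s + δ := by
          intro s hs
          have h1 := (abs_le.mp (happrox e s (hsub hs))).2
          rw [abs_of_nonpos (hf_nonpos e s hs.2)] at h1
          linarith
        have hlo : ∀ s ∈ Set.Icc x (0:ℝ), (1+γ) * f e s - δ ≤ ft e s := by
          intro s hs
          have h1 := (abs_le.mp (happrox e s (hsub hs))).1
          rw [abs_of_nonpos (hf_nonpos e s hs.2)] at h1
          linarith
        have hintf : IntervalIntegrable (ft e) MeasureTheory.volume x 0 :=
          (hft_cont e).intervalIntegrable _ _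
        have hintu : IntervalIntegrable (fun s => (1-γ) * f e s + δ) MeasureTheory.volume x 0 :=
          ((continuous_const.mul (hf_cont e)).add continuous_const).intervalIntegrable _ _
        have hintl : IntervalIntegrable (fun s => (1+γ) * f e s - δ) MeasureTheory.volume x 0 :=
          ((continuous_const.mul (hf_cont e)).sub continuous_const).intervalIntegrable _ _
        have h2 := intervalIntegral.integral_mono_on hx0 hintf hintu hup
        have h3 := intervalIntegral.integral_mono_on hx0 hintl hintf hlo
        have hcu : ∫ s in x..(0:ℝ), ((1-γ) * f e s + δ) =
            (1-γ) * (∫ s in x..(0:ℝ), f e s) + δ * (-x) := by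
          rw [intervalIntegral.integral_add (show IntervalIntegrable (fun s => (1-γ) * f e s) MeasureTheory.volume x 0 from (continuous_const.mul (hf_cont e)).intervalIntegrable x 0)
            intervalIntegrable_const, intervalIntegral.integral_const_mul,
            intervalIntegral.integral_const]
          simp [smul_eq_mul]; ring
        have hcl : ∫ s in x..(0:ℝ), ((1+γ) * f e s - δ) =
            (1+γ) * (∫ s in x..(0:ℝ), f e s) - δ * (-x) := by
          rw [intervalIntegral.integral_sub (show IntervalIntegrable (fun s => (1+γ) * f e s) MeasureTheory.volume x 0 from (continuous_const.mul (hf_cont e)).intervalIntegrable x 0)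
            intervalIntegrable_const, intervalIntegral.integral_const_mul,
            intervalIntegral.integral_const]
          simp [smul_eq_mul]; ring
        rw [hcu] at h2
        rw [hcl] at h3
        rw [intervalIntegral.integral_symm x 0, intervalIntegral.integral_symm x 0 (f := ft e)]
        constructor
        · nlinarith
        · nlinarith
    obtain ⟨hxsΓ, hxsbd⟩ := hxsfeas
    have hswap : ∑ e, Ft e (xt e) ≤ ∑ e, Ft e (xstar e) := hxtmin xstar hxsΓ hxsbd
    have S1 : ∑ e, ((1-γ) * F e (xt e) - δ * xmax) ≤ ∑ e, Ft e (xt e) :=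
      Finset.sum_le_sum fun e _ => (key e _ (hbdt e)).1
    have S2 : ∑ e, Ft e (xstar e) ≤ ∑ e, ((1+γ) * F e (xstar e) + δ * xmax) :=
      Finset.sum_le_sum fun e _ => (key e _ (hbds e)).2
    rw [Finset.sum_sub_distrib, ← Finset.mul_sum, Finset.sum_const, Finset.card_univ,
      nsmul_eq_mul] at S1
    rw [Finset.sum_add_distrib, ← Finset.mul_sum, Finset.sum_const, Finset.card_univ,
      nsmul_eq_mul] at S2
    have hmd : m * (δ * xmax) = β / (1+α) := by
      rw [hδ]
      field_simp
    rw [hmd] at S1 S2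
    have hchain : (1-γ) * (∑ e, F e (xt e)) - β/(1+α) ≤
        (1+γ) * (∑ e, F e (xstar e)) + β/(1+α) := by linarith
    rw [hγ] at hchain
    have hx := mul_le_mul_of_nonneg_left hchain (le_of_lt hα0)
    have e1 : (1+α) * ((1 - (α - 1) / (1 + α)) * ∑ e, F e (xt e) - β/(1+α)) =
        2 * ∑ e, F e (xt e) - β := mca_aux1 α β _ hne
    have e2 : (1+α) * ((1 + (α - 1) / (1 + α)) * ∑ e, F e (xstar e) + β/(1+α)) =
        2 * α * ∑ e, F e (xstar e) + β := mca_aux2 α β _ hne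
    rw [e1, e2] at hx
    linarith
end

section
/- Marginal cost approximation, one-sided condition: Let α > 1, β ≥ 0, x^max > 0, and m = |E|. For each e let f_e and f̃_e be marginal cost functions with edge costs F_e(x) = ∫_0^x f_e(s) ds and F̃_e(x) = ∫_0^x f̃_e(s) ds. Let b ∈ ℝ^V be balanced, let K = {x ∈ ℝ^E : Γx = b and l_e ≤ x_e ≤ u_e for all e}, let x* minimize ∑_{e∈E} F_e(x_e) over K and x̃ minimize ∑_{e∈E} F̃_e(x_e) over K, and assume |x*_e| ≤ x^max and |x̃_e| ≤ x^max for all e. If |f̃_e(s)| ≥ |f_e(s)| and |f̃_e(s) − f_e(s)| ≤ (α − 1)·|f_e(s)| + β/(m·x^max) for all e ∈ E and all s ∈ [−x^max, x^max], then ∑_{e∈E} F_e(x̃_e) ≤ α·∑_{e∈E} F_e(x*_e) + β. -/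
open Matrix

/-- Marginal cost approximation, one-sided condition. -/
theorem mca_one_sided
    {V E : Type*} [Fintype V] [Fintype E] [DecidableEq V]
    (t h : E → V) (hth : ∀ e, h e ≠ t e)
    (Γ : Matrix V E ℝ)
    (hΓ : ∀ v e, Γ v e = if v = h e then 1 else if v = t e then -1 else 0)
    (α β xmax : ℝ) (hα : 1 < α) (hβ : 0 ≤ β) (hxmax : 0 < xmax)
    (f ft : E → ℝ → ℝ)
    (hf_cont : ∀ e, Continuous (f e)) (hf_mono : ∀ e, StrictMono (f e))
    (hf_nonneg : ∀ e s, 0 ≤ s → 0 ≤ f e s) (hf_nonpos : ∀ e s, s ≤ 0 → f e s ≤ 0)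
    (hft_cont : ∀ e, Continuous (ft e)) (hft_mono : ∀ e, StrictMono (ft e))
    (hft_nonneg : ∀ e s, 0 ≤ s → 0 ≤ ft e s) (hft_nonpos : ∀ e s, s ≤ 0 → ft e s ≤ 0)
    (F Ft : E → ℝ → ℝ)
    (hF : ∀ e x, F e x = ∫ s in (0:ℝ)..x, f e s)
    (hFt : ∀ e x, Ft e x = ∫ s in (0:ℝ)..x, ft e s)
    (b : V → ℝ) (hb : ∑ v, b v = 0)
    (l u : E → EReal) (hlu : ∀ e, l e ≤ u e)
    (xstar xt : E → ℝ)
    (hxsfeas : Γ *ᵥ xstar = b ∧ ∀ e, l e ≤ (xstar e : EReal) ∧ (xstar e : EReal) ≤ u e)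
    (hxsmin : ∀ y : E → ℝ, Γ *ᵥ y = b →
      (∀ e, l e ≤ (y e : EReal) ∧ (y e : EReal) ≤ u e) →
      ∑ e, F e (xstar e) ≤ ∑ e, F e (y e))
    (hxtfeas : Γ *ᵥ xt = b ∧ ∀ e, l e ≤ (xt e : EReal) ∧ (xt e : EReal) ≤ u e)
    (hxtmin : ∀ y : E → ℝ, Γ *ᵥ y = b →
      (∀ e, l e ≤ (y e : EReal) ∧ (y e : EReal) ≤ u e) →
      ∑ e, Ft e (xt e) ≤ ∑ e, Ft e (y e))
    (hbds : ∀ e, |xstar e| ≤ xmax) (hbdt : ∀ e, |xt e| ≤ xmax)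
    (hdom : ∀ e, ∀ s ∈ Set.Icc (-xmax) xmax, |f e s| ≤ |ft e s|)
    (happrox : ∀ e, ∀ s ∈ Set.Icc (-xmax) xmax,
      |ft e s - f e s| ≤ (α - 1) * |f e s|
        + β / ((Fintype.card E : ℝ) * xmax)) :
    ∑ e, F e (xt e) ≤ α * ∑ e, F e (xstar e) + β := by
  rcases isEmpty_or_nonempty E with hE | hE
  · simp only [Finset.univ_eq_empty, Finset.sum_empty, mul_zero, zero_add]
    exact hβ
  have hm : (0 : ℝ) < (Fintype.card E : ℝ) := by
    exact_mod_cast Fintype.card_pos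
  set c : ℝ := β / ((Fintype.card E : ℝ) * xmax) with hc
  have hc0 : 0 ≤ c := div_nonneg hβ (le_of_lt (mul_pos hm hxmax))
  have hcx : xmax * c = β / (Fintype.card E : ℝ) := by
    rw [hc]; field_simp
  -- Step A : F e x ≤ Ft e x for |x| ≤ xmax
  have hA : ∀ e (x : ℝ), |x| ≤ xmax → F e x ≤ Ft e x := by
    intro e x hx
    obtain ⟨hx1, hx2⟩ := abs_le.mp hx
    rw [hF, hFt]
    rcases le_or_gt 0 x with h0 | h0
    · apply intervalIntegral.integral_mono_on h0
        ((hf_cont e).intervalIntegrable _ _) ((hft_cont e).intervalIntegrable _ _)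
      intro s hs
      have hsI : s ∈ Set.Icc (-xmax) xmax := ⟨by linarith [hs.1], le_trans hs.2 hx2⟩
      have := hdom e s hsI
      rwa [abs_of_nonneg (hf_nonneg e s hs.1), abs_of_nonneg (hft_nonneg e s hs.1)] at this
    · rw [intervalIntegral.integral_symm, intervalIntegral.integral_symm x]
      apply neg_le_neg
      apply intervalIntegral.integral_mono_on (le_of_lt h0)
        ((hft_cont e).intervalIntegrable _ _) ((hf_cont e).intervalIntegrable _ _)
      intro s hs
      have hsI : s ∈ Set.Icc (-xmax) xmax := ⟨le_trans hx1 hs.1, by linarith [hs.2]⟩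
      have := hdom e s hsI
      rwa [abs_of_nonpos (hf_nonpos e s hs.2), abs_of_nonpos (hft_nonpos e s hs.2),
        neg_le_neg_iff] at this
  -- Step B : Ft e (xstar e) ≤ α * F e (xstar e) + β / m
  have hB : ∀ e, Ft e (xstar e) ≤ α * F e (xstar e) + β / (Fintype.card E : ℝ) := by
    intro e
    set x := xstar e with hxdef
    obtain ⟨hx1, hx2⟩ := abs_le.mp (hbds e)
    rw [hF, hFt, ← hcx]
    rcases le_or_gt 0 x with h0 | h0
    · have key : (∫ s in (0:ℝ)..x, ft e s) ≤ ∫ s in (0:ℝ)..x, (α * f e s + c) := by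
        apply intervalIntegral.integral_mono_on h0
          ((hft_cont e).intervalIntegrable _ _)
          ((show Continuous (fun s => α * f e s + c) from (continuous_const.mul (hf_cont e)).add continuous_const).intervalIntegrable _ _)
        intro s hs
        have hsI : s ∈ Set.Icc (-xmax) xmax := ⟨by linarith [hs.1], le_trans hs.2 hx2⟩
        have h1 := happrox e s hsI
        rw [abs_of_nonneg (hf_nonneg e s hs.1)] at h1
        have h2 : ft e s - f e s ≤ |ft e s - f e s| := le_abs_self _
        nlinarith
      have heq : (∫ s in (0:ℝ)..x, (α * f e s + c)) =
          α * (∫ s in (0:ℝ)..x, f e s) + x * c := by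
        rw [intervalIntegral.integral_add
            ((show Continuous (fun s => α * f e s) from continuous_const.mul (hf_cont e)).intervalIntegrable _ _)
            (intervalIntegrable_const), intervalIntegral.integral_const_mul,
          intervalIntegral.integral_const, smul_eq_mul, sub_zero]
      have hxc : x * c ≤ xmax * c := mul_le_mul_of_nonneg_right hx2 hc0
      linarith [key, heq.le, heq.ge]
    · have key : (∫ s in x..(0:ℝ), (α * f e s - c)) ≤ ∫ s in x..(0:ℝ), ft e s := by
        apply intervalIntegral.integral_mono_on (le_of_lt h0)
          ((show Continuous (fun s => α * f e s - c) from (continuous_const.mul (hf_cont e)).sub continuous_const).intervalIntegrable _ _)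
          ((hft_cont e).intervalIntegrable _ _)
        intro s hs
        have hsI : s ∈ Set.Icc (-xmax) xmax := ⟨le_trans hx1 hs.1, by linarith [hs.2]⟩
        have h1 := happrox e s hsI
        rw [abs_of_nonpos (hf_nonpos e s hs.2)] at h1
        have h2 : f e s - ft e s ≤ |ft e s - f e s| := by
          rw [abs_sub_comm]; exact le_abs_self _
        nlinarith
      have heq : (∫ s in x..(0:ℝ), (α * f e s - c)) =
          α * (∫ s in x..(0:ℝ), f e s) - (0 - x) * c := by
        rw [intervalIntegral.integral_sub
            ((show Continuous (fun s => α * f e s) from continuous_const.mul (hf_cont e)).intervalIntegrable _ _)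
            (intervalIntegrable_const), intervalIntegral.integral_const_mul,
          intervalIntegral.integral_const, smul_eq_mul]
      rw [intervalIntegral.integral_symm, intervalIntegral.integral_symm x]
      have hxc : -x * c ≤ xmax * c := mul_le_mul_of_nonneg_right (by linarith) hc0
      nlinarith [key, heq.le, heq.ge]
  calc ∑ e, F e (xt e) ≤ ∑ e, Ft e (xt e) :=
        Finset.sum_le_sum fun e _ => hA e (xt e) (hbdt e)
    _ ≤ ∑ e, Ft e (xstar e) := hxtmin xstar hxsfeas.1 hxsfeas.2
    _ ≤ ∑ e, (α * F e (xstar e) + β / (Fintype.card E : ℝ)) :=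
        Finset.sum_le_sum fun e _ => hB e
    _ = α * ∑ e, F e (xstar e) + β := by
        rw [Finset.sum_add_distrib, ← Finset.mul_sum, Finset.sum_const, Finset.card_univ,
          nsmul_eq_mul, mul_div_cancel₀ _ (ne_of_gt hm)]
end

section
/- Minimum-cost flow interpolation, non-decreasing case: Let α > 1, β ≥ 0, 0 < ε < α − 1, λ_i < λ_{i+1}, and δ := λ_{i+1} − λ_i. Let X_i ∈ K(λ_i) and X_{i+1} ∈ K(λ_{i+1}) be flows with C(X_i) ≤ (1 + ε)·C(λ_i) and C(X_{i+1}) ≤ (1 + ε)·C(λ_{i+1}), and for λ ∈ [λ_i, λ_{i+1}] define x̃(λ) := ((λ_{i+1} − λ)/δ)·X_i + ((λ − λ_i)/δ)·X_{i+1}. Assume the optimal value function λ ↦ C(λ) is convex, differentiable, and non-decreasing on [λ_i, λ_{i+1}], and that δ·C'(λ_{i+1}) ≤ ((α − 1 − ε)/(1 + ε))·C(λ_i) + β/(1 + ε). Then for every λ ∈ [λ_i, λ_{i+1}], x̃(λ) ∈ K(λ) and C(x̃(λ)) ≤ α·C(λ) + β. -/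
open Matrix

/-- Minimum-cost flow interpolation, non-decreasing case. -/
theorem mcfi_nondecreasing
    {V E : Type*} [Fintype V] [Fintype E] [DecidableEq V]
    (t h : E → V) (hth : ∀ e, h e ≠ t e)
    (Γ : Matrix V E ℝ)
    (hΓ : ∀ v e, Γ v e = if v = h e then 1 else if v = t e then -1 else 0)
    (F : E → ℝ → ℝ)
    (hFconv : ∀ e, ConvexOn ℝ Set.univ (F e))
    (hFnn : ∀ e x, 0 ≤ F e x)
    (b0 b : V → ℝ) (hb0 : ∑ v, b0 v = 0) (hb : ∑ v, b v = 0)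
    (l u : E → EReal) (hlu : ∀ e, l e ≤ u e)
    (K : ℝ → Set (E → ℝ))
    (hK : ∀ lam, K lam = {x : E → ℝ | (Γ *ᵥ x = fun v => b0 v + lam * b v) ∧
      ∀ e, l e ≤ (x e : EReal) ∧ (x e : EReal) ≤ u e})
    (α β ε : ℝ) (hα : 1 < α) (hβ : 0 ≤ β) (hε : 0 < ε) (hεα : ε < α - 1)
    (li li1 : ℝ) (hlt : li < li1)
    (Copt : ℝ → ℝ)
    (hCopt : ∀ lam ∈ Set.Icc li li1,
      IsLeast ((fun x : E → ℝ => ∑ e, F e (x e)) '' K lam) (Copt lam))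
    (Xi Xi1 : E → ℝ) (hXi : Xi ∈ K li) (hXi1 : Xi1 ∈ K li1)
    (hXiapx : ∑ e, F e (Xi e) ≤ (1 + ε) * Copt li)
    (hXi1apx : ∑ e, F e (Xi1 e) ≤ (1 + ε) * Copt li1)
    (hconv : ConvexOn ℝ (Set.Icc li li1) Copt)
    (C' : ℝ → ℝ)
    (hC' : ∀ lam ∈ Set.Icc li li1, HasDerivWithinAt Copt (C' lam) (Set.Icc li li1) lam)
    (hmono : MonotoneOn Copt (Set.Icc li li1))
    (hstep : (li1 - li) * C' li1 ≤ (α - 1 - ε) / (1 + ε) * Copt li + β / (1 + ε)) :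
    ∀ lam ∈ Set.Icc li li1,
      (fun e => (li1 - lam) / (li1 - li) * Xi e + (lam - li) / (li1 - li) * Xi1 e) ∈ K lam ∧
      ∑ e, F e ((li1 - lam) / (li1 - li) * Xi e + (lam - li) / (li1 - li) * Xi1 e)
        ≤ α * Copt lam + β := by
  intro lam hlam
  obtain ⟨hlam1, hlam2⟩ := hlam
  have hδ : (0:ℝ) < li1 - li := by linarith
  set a : ℝ := (li1 - lam) / (li1 - li) with ha_def
  set c : ℝ := (lam - li) / (li1 - li) with hc_def
  have ha0 : 0 ≤ a := div_nonneg (by linarith) hδ.le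
  have hc0 : 0 ≤ c := div_nonneg (by linarith) hδ.le
  have hac : a + c = 1 := by
    rw [ha_def, hc_def, ← add_div]
    field_simp
    ring
  rw [hK] at hXi hXi1
  obtain ⟨hXiΓ, hXib⟩ := hXi
  obtain ⟨hXi1Γ, hXi1b⟩ := hXi1
  have hmemli : li ∈ Set.Icc li li1 := Set.left_mem_Icc.2 hlt.le
  have hmemli1 : li1 ∈ Set.Icc li li1 := Set.right_mem_Icc.2 hlt.le
  have hmemlam : lam ∈ Set.Icc li li1 := ⟨hlam1, hlam2⟩
  -- membership
  have hmem : (fun e => a * Xi e + c * Xi1 e) ∈ K lam := by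
    rw [hK]
    refine ⟨?_, ?_⟩
    · have hrw : (fun e => a * Xi e + c * Xi1 e) = a • Xi + c • Xi1 := rfl
      rw [hrw, Matrix.mulVec_add, Matrix.mulVec_smul, Matrix.mulVec_smul, hXiΓ, hXi1Γ]
      funext v
      simp only [Pi.add_apply, Pi.smul_apply, smul_eq_mul, ha_def, hc_def]
      field_simp
      ring
    · intro e
      constructor
      · rcases le_total (Xi e) (Xi1 e) with hxy | hxy
        · have hcomb : Xi e ≤ a * Xi e + c * Xi1 e := by
            have h5 : c * Xi e ≤ c * Xi1 e := mul_le_mul_of_nonneg_left hxy hc0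
            have h6 : a * Xi e + c * Xi e = Xi e := by rw [← add_mul, hac, one_mul]
            linarith
          exact le_trans (hXib e).1 (EReal.coe_le_coe_iff.2 hcomb)
        · have hcomb : Xi1 e ≤ a * Xi e + c * Xi1 e := by
            have h5 : a * Xi1 e ≤ a * Xi e := mul_le_mul_of_nonneg_left hxy ha0
            have h6 : a * Xi1 e + c * Xi1 e = Xi1 e := by rw [← add_mul, hac, one_mul]
            linarith
          exact le_trans (hXi1b e).1 (EReal.coe_le_coe_iff.2 hcomb)
      · rcases le_total (Xi e) (Xi1 e) with hxy | hxy
        · have hcomb : a * Xi e + c * Xi1 e ≤ Xi1 e := by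
            have h5 : a * Xi e ≤ a * Xi1 e := mul_le_mul_of_nonneg_left hxy ha0
            have h6 : a * Xi1 e + c * Xi1 e = Xi1 e := by rw [← add_mul, hac, one_mul]
            linarith
          exact le_trans (EReal.coe_le_coe_iff.2 hcomb) (hXi1b e).2
        · have hcomb : a * Xi e + c * Xi1 e ≤ Xi e := by
            have h5 : c * Xi1 e ≤ c * Xi e := mul_le_mul_of_nonneg_left hxy hc0
            have h6 : a * Xi e + c * Xi e = Xi e := by rw [← add_mul, hac, one_mul]
            linarith
          exact le_trans (EReal.coe_le_coe_iff.2 hcomb) (hXib e).2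
  refine ⟨hmem, ?_⟩
  -- convexity of the cost
  have hFsum : ∑ e, F e (a * Xi e + c * Xi1 e)
      ≤ a * ∑ e, F e (Xi e) + c * ∑ e, F e (Xi1 e) := by
    rw [Finset.mul_sum, Finset.mul_sum, ← Finset.sum_add_distrib]
    refine Finset.sum_le_sum fun e _ => ?_
    exact (hFconv e).2 (Set.mem_univ _) (Set.mem_univ _) ha0 hc0 hac
  -- nonnegativity of Copt li
  have hPnn : 0 ≤ Copt li := by
    obtain ⟨⟨x, -, hxe⟩, -⟩ := hCopt li hmemli
    rw [← hxe]
    exact Finset.sum_nonneg fun e _ => hFnn e (x e)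
  have hm1 : Copt li ≤ Copt lam := hmono hmemli hmemlam hlam1
  -- derivative is nonnegative
  have hd := hC' li1 hmemli1
  rw [hasDerivWithinAt_iff_tendsto_slope] at hd
  have hne : (nhdsWithin li1 (Set.Icc li li1 \ {li1})).NeBot := by
    rw [Set.Icc_sdiff_right]; exact right_nhdsWithin_Ico_neBot hlt
  have hDnn : 0 ≤ C' li1 := by
    refine ge_of_tendsto hd ?_
    filter_upwards [eventually_mem_nhdsWithin] with y hy
    have hy1 : y ∈ Set.Icc li li1 := hy.1
    have hy2 : y < li1 := lt_of_le_of_ne hy1.2 (by simpa using hy.2)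
    have h3 : Copt y ≤ Copt li1 := hmono hy1 hmemli1 hy2.le
    have h4 : (Copt y - Copt li1) / (y - li1) = (Copt li1 - Copt y) / (li1 - y) := by
      rw [← neg_div_neg_eq]; ring_nf
    rw [slope_def_field, h4]
    exact div_nonneg (by linarith) (by linarith)
  -- gradient inequality
  have hgrad : Copt li1 ≤ Copt lam + (li1 - lam) * C' li1 := by
    rcases eq_or_lt_of_le hlam2 with heq | hlt2
    · rw [heq]; simp
    · have hsl : (Copt lam - Copt li1) / (lam - li1) ≤ C' li1 := by
        refine ge_of_tendsto hd ?_
        have hev : ∀ᶠ y in nhdsWithin li1 (Set.Icc li li1 \ {li1}), lam < y :=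
          Filter.Eventually.filter_mono nhdsWithin_le_nhds (eventually_gt_nhds hlt2)
        filter_upwards [hev, eventually_mem_nhdsWithin] with y hy1 hy2
        rw [slope_def_field]
        exact hconv.secant_mono hmemli1 hmemlam hy2.1 (by linarith) (by simpa using hy2.2)
          hy1.le
      have heq2 : (Copt lam - Copt li1) / (lam - li1)
          = (Copt li1 - Copt lam) / (li1 - lam) := by
        rw [← neg_div_neg_eq]; ring_nf
      rw [heq2] at hsl
      have := (div_le_iff₀ (by linarith : (0:ℝ) < li1 - lam)).1 hsl
      linarith
  -- final arithmetic
  have hε1 : (0:ℝ) < 1 + ε := by linarith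
  set P := Copt li
  set Q := Copt lam
  set R := Copt li1
  set D := C' li1
  have e1 : a * (∑ e, F e (Xi e)) ≤ a * ((1 + ε) * P) :=
    mul_le_mul_of_nonneg_left hXiapx ha0
  have e2 : c * (∑ e, F e (Xi1 e)) ≤ c * ((1 + ε) * R) :=
    mul_le_mul_of_nonneg_left hXi1apx hc0
  have k1 : (1 + ε) * (a * P) ≤ (1 + ε) * (a * Q) :=
    mul_le_mul_of_nonneg_left (mul_le_mul_of_nonneg_left hm1 ha0) hε1.le
  have k2 : (1 + ε) * (c * R) ≤ (1 + ε) * (c * (Q + (li1 - lam) * D)) :=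
    mul_le_mul_of_nonneg_left (mul_le_mul_of_nonneg_left hgrad hc0) hε1.le
  have h1 : c * (li1 - lam) ≤ li1 - li := by
    rw [hc_def, div_mul_eq_mul_div, div_le_iff₀ hδ]
    nlinarith
  have k3 : (1 + ε) * (c * ((li1 - lam) * D)) ≤ (1 + ε) * ((li1 - li) * D) := by
    refine mul_le_mul_of_nonneg_left ?_ hε1.le
    calc c * ((li1 - lam) * D) = (c * (li1 - lam)) * D := by ring
      _ ≤ (li1 - li) * D := mul_le_mul_of_nonneg_right h1 hDnn
  have k4 : (1 + ε) * ((a + c) * Q) = (1 + ε) * Q := by rw [hac, one_mul]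
  have k5 : (1 + ε) * ((li1 - li) * D) ≤ (α - 1 - ε) * P + β := by
    have h2 : (1 + ε) * ((α - 1 - ε) / (1 + ε) * P + β / (1 + ε))
        = (α - 1 - ε) * P + β := by field_simp
    have := mul_le_mul_of_nonneg_left hstep hε1.le
    rw [h2] at this
    exact this
  have k6 : (α - 1 - ε) * P ≤ (α - 1 - ε) * Q :=
    mul_le_mul_of_nonneg_left hm1 (by linarith)
  linarith [hFsum, e1, e2, k1, k2, k3, k4, k5, k6]
end

section
/- Minimum-cost flow interpolation, non-increasing case: Let α > 1, β ≥ 0, 0 < ε < α − 1, λ_i < λ_{i+1}, and δ := λ_{i+1} − λ_i. Let X_i ∈ K(λ_i) and X_{i+1} ∈ K(λ_{i+1}) be flows with C(X_i) ≤ (1 + ε)·C(λ_i) and C(X_{i+1}) ≤ (1 + ε)·C(λ_{i+1}), and for λ ∈ [λ_i, λ_{i+1}] define x̃(λ) := ((λ_{i+1} − λ)/δ)·X_i + ((λ − λ_i)/δ)·X_{i+1}. Assume the optimal value function λ ↦ C(λ) is convex, differentiable, and non-increasing on [λ_i, λ_{i+1}], and that δ·C'(λ_i) ≥ −((α − 1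 − ε)/(1 + ε))·C(λ_{i+1}) − β/(1 + ε). Then for every λ ∈ [λ_i, λ_{i+1}], x̃(λ) ∈ K(λ) and C(x̃(λ)) ≤ α·C(λ) + β. -/
set_option maxHeartbeats 1000000


open Matrix

/-- Minimum-cost flow interpolation, non-increasing case. -/
theorem mcfi_nonincreasing
    {V E : Type*} [Fintype V] [Fintype E] [DecidableEq V]
    (t h : E → V) (hth : ∀ e, h e ≠ t e)
    (Γ : Matrix V E ℝ)
    (hΓ : ∀ v e, Γ v e = if v = h e then 1 else if v = t e then -1 else 0)
    (F : E → ℝ → ℝ)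
    (hFconv : ∀ e, ConvexOn ℝ Set.univ (F e))
    (hFnn : ∀ e x, 0 ≤ F e x)
    (b0 b : V → ℝ) (hb0 : ∑ v, b0 v = 0) (hb : ∑ v, b v = 0)
    (l u : E → EReal) (hlu : ∀ e, l e ≤ u e)
    (K : ℝ → Set (E → ℝ))
    (hK : ∀ lam, K lam = {x : E → ℝ | (Γ *ᵥ x = fun v => b0 v + lam * b v) ∧
      ∀ e, l e ≤ (x e : EReal) ∧ (x e : EReal) ≤ u e})
    (α β ε : ℝ) (hα : 1 < α) (hβ : 0 ≤ β) (hε : 0 < ε) (hεα : ε < α - 1)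
    (li li1 : ℝ) (hlt : li < li1)
    (Copt : ℝ → ℝ)
    (hCopt : ∀ lam ∈ Set.Icc li li1,
      IsLeast ((fun x : E → ℝ => ∑ e, F e (x e)) '' K lam) (Copt lam))
    (Xi Xi1 : E → ℝ) (hXi : Xi ∈ K li) (hXi1 : Xi1 ∈ K li1)
    (hXiapx : ∑ e, F e (Xi e) ≤ (1 + ε) * Copt li)
    (hXi1apx : ∑ e, F e (Xi1 e) ≤ (1 + ε) * Copt li1)
    (hconv : ConvexOn ℝ (Set.Icc li li1) Copt)
    (C' : ℝ → ℝ)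
    (hC' : ∀ lam ∈ Set.Icc li li1, HasDerivWithinAt Copt (C' lam) (Set.Icc li li1) lam)
    (hmono : AntitoneOn Copt (Set.Icc li li1))
    (hstep : -((α - 1 - ε) / (1 + ε)) * Copt li1 - β / (1 + ε) ≤ (li1 - li) * C' li) :
    ∀ lam ∈ Set.Icc li li1,
      (fun e => (li1 - lam) / (li1 - li) * Xi e + (lam - li) / (li1 - li) * Xi1 e) ∈ K lam ∧
      ∑ e, F e ((li1 - lam) / (li1 - li) * Xi e + (lam - li) / (li1 - li) * Xi1 e)
        ≤ α * Copt lam + β := by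
  intro lam hlam
  obtain ⟨hlam1, hlam2⟩ := hlam
  have hδ : (0:ℝ) < li1 - li := by linarith
  have hδ' : li1 - li ≠ 0 := ne_of_gt hδ
  set c1 : ℝ := (li1 - lam) / (li1 - li) with hc1def
  set c2 : ℝ := (lam - li) / (li1 - li) with hc2def
  have hc1 : 0 ≤ c1 := div_nonneg (by linarith) hδ.le
  have hc2 : 0 ≤ c2 := div_nonneg (by linarith) hδ.le
  have hsum : c1 + c2 = 1 := by rw [hc1def, hc2def]; field_simp; ring
  have hc1' : c1 = 1 - c2 := by linarith
  -- membership
  rw [hK] at hXi hXi1 ⊢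
  obtain ⟨hXiΓ, hXib⟩ := hXi
  obtain ⟨hXi1Γ, hXi1b⟩ := hXi1
  have hmem : (fun e => c1 * Xi e + c2 * Xi1 e) ∈
      {x : E → ℝ | (Γ *ᵥ x = fun v => b0 v + lam * b v) ∧
        ∀ e, l e ≤ (x e : EReal) ∧ (x e : EReal) ≤ u e} := by
    constructor
    · have heq : (fun e => c1 * Xi e + c2 * Xi1 e) = c1 • Xi + c2 • Xi1 := by
        funext e; simp only [Pi.add_apply, Pi.smul_apply, smul_eq_mul]
      rw [heq, Matrix.mulVec_add, Matrix.mulVec_smul, Matrix.mulVec_smul, hXiΓ, hXi1Γ]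
      funext v
      simp only [Pi.add_apply, Pi.smul_apply, smul_eq_mul]
      have h1 : c1 * li + c2 * li1 = lam := by
        rw [hc1def, hc2def]; field_simp; ring
      linear_combination (b0 v) * hsum + (b v) * h1
    · intro e
      obtain ⟨hl1, hu1⟩ := hXib e
      obtain ⟨hl2, hu2⟩ := hXi1b e
      constructor
      · have hmin : min (Xi e) (Xi1 e) ≤ c1 * Xi e + c2 * Xi1 e := by
          have h1 : c1 * min (Xi e) (Xi1 e) ≤ c1 * Xi e :=
            mul_le_mul_of_nonneg_left (min_le_left _ _) hc1
          have h2 : c2 * min (Xi e) (Xi1 e) ≤ c2 * Xi1 e :=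
            mul_le_mul_of_nonneg_left (min_le_right _ _) hc2
          have h3 : c1 * min (Xi e) (Xi1 e) + c2 * min (Xi e) (Xi1 e)
              = min (Xi e) (Xi1 e) := by rw [← add_mul, hsum, one_mul]
          linarith
        calc l e ≤ ((min (Xi e) (Xi1 e) : ℝ) : EReal) := by
              rcases le_total (Xi e) (Xi1 e) with hc | hc
              · rwa [min_eq_left hc]
              · rwa [min_eq_right hc]
          _ ≤ ((c1 * Xi e + c2 * Xi1 e : ℝ) : EReal) := by exact_mod_cast hmin
      · have hmax : c1 * Xi e + c2 * Xi1 e ≤ max (Xi e) (Xi1 e) := by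
          have h1 : c1 * Xi e ≤ c1 * max (Xi e) (Xi1 e) :=
            mul_le_mul_of_nonneg_left (le_max_left _ _) hc1
          have h2 : c2 * Xi1 e ≤ c2 * max (Xi e) (Xi1 e) :=
            mul_le_mul_of_nonneg_left (le_max_right _ _) hc2
          have h3 : c1 * max (Xi e) (Xi1 e) + c2 * max (Xi e) (Xi1 e)
              = max (Xi e) (Xi1 e) := by rw [← add_mul, hsum, one_mul]
          linarith
        calc ((c1 * Xi e + c2 * Xi1 e : ℝ) : EReal) ≤ ((max (Xi e) (Xi1 e) : ℝ) : EReal) := by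
              exact_mod_cast hmax
          _ ≤ u e := by
              rcases le_total (Xi e) (Xi1 e) with hc | hc
              · rw [max_eq_right hc]; exact hu2
              · rw [max_eq_left hc]; exact hu1
  refine ⟨hmem, ?_⟩
  -- cost bound
  have hli : li ∈ Set.Icc li li1 := ⟨le_refl li, hlt.le⟩
  have hli1 : li1 ∈ Set.Icc li li1 := ⟨hlt.le, le_refl li1⟩
  have hlamI : lam ∈ Set.Icc li li1 := ⟨hlam1, hlam2⟩
  have hCnn : ∀ mu ∈ Set.Icc li li1, 0 ≤ Copt mu := by
    intro mu hmu
    obtain ⟨⟨x, _, hx⟩, _⟩ := hCopt mu hmu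
    rw [← hx]
    exact Finset.sum_nonneg fun e _ => hFnn e _
  have hcost : ∑ e, F e (c1 * Xi e + c2 * Xi1 e)
      ≤ c1 * ∑ e, F e (Xi e) + c2 * ∑ e, F e (Xi1 e) := by
    rw [Finset.mul_sum, Finset.mul_sum, ← Finset.sum_add_distrib]
    refine Finset.sum_le_sum fun e _ => ?_
    have := (hFconv e).2 (Set.mem_univ (Xi e)) (Set.mem_univ (Xi1 e)) hc1 hc2 hsum
    simpa [smul_eq_mul] using this
  have hkey : Copt li + (lam - li) * C' li ≤ Copt lam := by
    rcases eq_or_lt_of_le hlam1 with heq | hlt2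
    · rw [← heq]; simp only [sub_self, zero_mul, add_zero, le_refl]
    · have hs := hconv.le_slope_of_hasDerivWithinAt hli hlamI hlt2 (hC' li hli)
      rw [slope_def_field] at hs
      have h2 : C' li * (lam - li) ≤ Copt lam - Copt li := by
        have := (le_div_iff₀ (by linarith : (0:ℝ) < lam - li)).mp hs
        linarith
      linarith
  have hmono' : Copt li1 ≤ Copt lam := hmono hlamI hli1 hlam2
  have hMnn : 0 ≤ Copt lam := hCnn lam hlamI
  have hBnn : 0 ≤ Copt li1 := hCnn li1 hli1
  -- arithmetic finish
  have hc2δ : c2 * (li1 - li) = lam - li := by rw [hc2def]; field_simp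
  have hεp : (0:ℝ) < 1 + ε := by linarith
  set A := Copt li
  set B := Copt li1
  set M := Copt lam
  set D := (li1 - li) * C' li with hDdef
  have hA : A ≤ M - c2 * D := by
    have h3 : (lam - li) * C' li = c2 * D := by
      rw [hDdef]; linear_combination (-(C' li)) * hc2δ
    linarith [hkey, h3]
  have hstep' : -(α - 1 - ε) * B - β ≤ (1 + ε) * D := by
    have := mul_le_mul_of_nonneg_left hstep hεp.le
    calc -(α - 1 - ε) * B - β
        = (1 + ε) * (-((α - 1 - ε) / (1 + ε)) * B - β / (1 + ε)) := by
          field_simp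
      _ ≤ (1 + ε) * D := this
  have hc2le1 : c2 ≤ 1 := by linarith
  have hs1 : (0:ℝ) ≤ 1 - c2 := by linarith
  have hprodle : c2 * (1 - c2) ≤ 1 := by nlinarith
  have hαε : (0:ℝ) < α - 1 - ε := by linarith
  have hq : (0:ℝ) ≤ 1 - c2 * (1 - c2) := by nlinarith
  have harith : (1 + ε) * (c1 * A + c2 * B) ≤ α * M + β := by
    rw [hc1']
    have P1 := mul_le_mul_of_nonneg_left hA (mul_nonneg hεp.le hs1)
    have P2 := mul_le_mul_of_nonneg_left hstep' (mul_nonneg hc2 hs1)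
    have P3 := mul_le_mul_of_nonneg_left hmono' (mul_nonneg hεp.le hc2)
    have P4 := mul_le_mul_of_nonneg_left hmono' hαε.le
    have P5 := mul_nonneg hq (mul_nonneg hαε.le hBnn)
    have P6 := mul_nonneg hq hβ
    nlinarith [P1, P2, P3, P4, P5, P6]
  calc ∑ e, F e (c1 * Xi e + c2 * Xi1 e)
      ≤ c1 * ∑ e, F e (Xi e) + c2 * ∑ e, F e (Xi1 e) := hcost
    _ ≤ c1 * ((1 + ε) * A) + c2 * ((1 + ε) * B) :=
        add_le_add (mul_le_mul_of_nonneg_left hXiapx hc1)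
          (mul_le_mul_of_nonneg_left hXi1apx hc2)
    _ = (1 + ε) * (c1 * A + c2 * B) := by ring
    _ ≤ α * M + β := harith
end

section
/- Optimal potentials in a region form a line segment: Fix a vertex v₁ ∈ V and balanced demands b⁰, b ∈ ℝ^V. Suppose for each edge e there are constants c_e > 0, d_e ∈ ℝ, and σ_e ≤ σ'_e in ℝ such that f_e(c_e·y − d_e) = y for all y ∈ [σ_e, σ'_e]. Let C = diag(c), d = (d_e)_{e∈E}, L = Γ C Γ^T, assume the reduced matrix L̂ is invertible, and set π₀ := L*(b⁰ + Γd) and Δπ := L* b. Let R := {φ ∈ ℝ^V : φ_{v₁} = 0 and σ_e ≤ φ_{h(e)} − φ_{t(e)} ≤ σ'_e for all e ∈ E}. Then for every λ ≥ 0 and every π ∈ R, the flow x := C Γ^T π − d is the unique minimizer of ∑_{e∈E} F_e(x_e) over {x ∈ ℝ^E : Γx = b⁰ + λb} if and only if π = π₀ + λ·Δπ. Consequently, the set of π ∈ R that are optimal potentials for some λ ≥ 0 equals {π₀ + λ·Δπ : λ ≥ 0} ∩ R, the intersection of a ray with the convex set R. -/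
open Matrix

/-- `x` is the unique minimizer of the cost `∑_e F_e(x_e)` over all flows
satisfying the demand `dem` (undirected problem). -/
def UniqueMinimizer {V E : Type*} [Fintype V] [Fintype E]
    (Γ : Matrix V E ℝ) (F : E → ℝ → ℝ) (dem : V → ℝ) (x : E → ℝ) : Prop :=
  Γ *ᵥ x = dem ∧
  ∀ y : E → ℝ, Γ *ᵥ y = dem → y ≠ x → ∑ e, F e (x e) < ∑ e, F e (y e)


section Aux

lemma gap_lt (f : ℝ → ℝ) (hc : Continuous f) (hm : StrictMono f) (x y : ℝ) (hxy : x ≠ y) :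
    f x * (y - x) < ∫ s in x..y, f s := by
  set g : ℝ → ℝ := fun u => (∫ s in x..u, f s) - f x * (u - x) with hg
  have hderiv : ∀ u, HasDerivAt g (f u - f x) u := by
    intro u
    have h1 : HasDerivAt (fun u => ∫ s in x..u, f s) (f u) u :=
      intervalIntegral.integral_hasDerivAt_right (hc.intervalIntegrable x u)
        (hc.stronglyMeasurableAtFilter _ _) hc.continuousAt
    have h2 : HasDerivAt (fun u => f x * (u - x)) (f x) u := by
      simpa using ((hasDerivAt_id u).sub_const x).const_mul (f x)
    exact h1.sub h2
  have hgx : g x = 0 := by simp [hg]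
  have hcontg : Continuous g := by
    exact continuous_iff_continuousAt.2 fun u => (hderiv u).differentiableAt.continuousAt
  have key : 0 < g y := by
    rcases lt_or_gt_of_ne hxy with hlt | hgt
    · have hmono : StrictMonoOn g (Set.Icc x y) :=
        strictMonoOn_of_deriv_pos (convex_Icc x y) hcontg.continuousOn
          (fun u hu => by
            rw [interior_Icc] at hu
            rw [(hderiv u).deriv]
            exact sub_pos.2 (hm hu.1))
      have := hmono (Set.left_mem_Icc.2 hlt.le) (Set.right_mem_Icc.2 hlt.le) hlt
      rwa [hgx] at this
    · have hmono : StrictAntiOn g (Set.Icc y x) :=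
        strictAntiOn_of_deriv_neg (convex_Icc y x) hcontg.continuousOn
          (fun u hu => by
            rw [interior_Icc] at hu
            rw [(hderiv u).deriv]
            exact sub_neg.2 (hm hu.2))
      have := hmono (Set.left_mem_Icc.2 hgt.le) (Set.right_mem_Icc.2 hgt.le) hgt
      rwa [hgx] at this
  have : 0 < (∫ s in x..y, f s) - f x * (y - x) := key
  linarith


lemma gap_le (f : ℝ → ℝ) (hc : Continuous f) (hm : StrictMono f) (x y : ℝ) :
    f x * (y - x) ≤ ∫ s in x..y, f s := by
  by_cases hxy : x = y
  · subst hxy; simp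
  · exact (gap_lt f hc hm x y hxy).le


variable {V : Type*} [Fintype V] [DecidableEq V] (v₁ : V)

lemma sum_split_s16 (g : V → ℝ) (hg : g v₁ = 0) :
    ∑ v, g v = ∑ v : {v : V // v ≠ v₁}, g v.1 := by
  rw [← Finset.sum_subtype (Finset.univ.erase v₁) (fun x => by simp) g]
  rw [← Finset.add_sum_erase _ g (Finset.mem_univ v₁), hg, zero_add]

lemma starM_mulVec (L : Matrix V V ℝ) (w : V → ℝ) (v : V) :
    (starM v₁ L *ᵥ w) v =
      if hv : v = v₁ then 0
      else ((reducedM v₁ L)⁻¹ *ᵥ fun u : {v : V // v ≠ v₁} => w u.1) ⟨v, hv⟩ := by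
  by_cases hv : v = v₁
  · simp [hv, mulVec, dotProduct, starM]
  · simp only [hv, dif_neg, not_false_iff]
    rw [mulVec, dotProduct, sum_split_s16 v₁ _ (by simp [starM])]
    rw [mulVec, dotProduct]
    apply Finset.sum_congr rfl
    intro u _
    simp [starM, hv, u.2]

lemma starM_apply_v₁ (L : Matrix V V ℝ) (w : V → ℝ) :
    (starM v₁ L *ᵥ w) v₁ = 0 := by
  rw [starM_mulVec]; simp

lemma star_solve (L : Matrix V V ℝ) (hinv : IsUnit (reducedM v₁ L).det)
    (hcolsum : ∀ u, ∑ v, L v u = 0) (w : V → ℝ) (hw : ∑ v, w v = 0)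
    (p : V → ℝ) (hp : p v₁ = 0) :
    L *ᵥ p = w ↔ p = starM v₁ L *ᵥ w := by
  have hrow : ∀ q : V → ℝ, ∀ j : {v : V // v ≠ v₁},
      (L *ᵥ q) j.1 = (reducedM v₁ L *ᵥ fun u : {v : V // v ≠ v₁} => q u.1) j
        + L j.1 v₁ * q v₁ := by
    intro q j
    rw [mulVec, dotProduct, mulVec, dotProduct]
    rw [← Finset.add_sum_erase _ (fun i => L j.1 i * q i) (Finset.mem_univ v₁)]
    rw [Finset.sum_subtype (p := fun v => v ≠ v₁) (Finset.univ.erase v₁) (fun x => by simp) (fun i => L j.1 i * q i)]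
    rw [add_comm]
    congr 1
  -- forward and backward
  constructor
  · intro heq
    funext v
    by_cases hv : v = v₁
    · rw [hv, hp, starM_apply_v₁]
    · rw [starM_mulVec]
      simp only [hv, dif_neg, not_false_iff]
      have hred : (reducedM v₁ L *ᵥ fun u : {v : V // v ≠ v₁} => p u.1) =
          fun u : {v : V // v ≠ v₁} => w u.1 := by
        funext j
        have := hrow p j
        rw [heq] at this
        rw [hp, mul_zero, add_zero] at this
        exact this.symm
      rw [← hred, mulVec_mulVec, Matrix.nonsing_inv_mul _ hinv, one_mulVec]
  · intro heq
    have hpv : ∀ j : {v : V // v ≠ v₁},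
        p j.1 = ((reducedM v₁ L)⁻¹ *ᵥ fun u : {v : V // v ≠ v₁} => w u.1) j := by
      intro j
      rw [heq, starM_mulVec]
      simp [j.2]
    have hLp : ∀ j : {v : V // v ≠ v₁}, (L *ᵥ p) j.1 = w j.1 := by
      intro j
      rw [hrow p j, hp, mul_zero, add_zero]
      have harg : (fun u : {v : V // v ≠ v₁} => p u.1)
          = (reducedM v₁ L)⁻¹ *ᵥ fun u : {v : V // v ≠ v₁} => w u.1 := funext hpv
      rw [harg, mulVec_mulVec, Matrix.mul_nonsing_inv _ hinv, one_mulVec]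
    funext v
    by_cases hv : v = v₁
    · subst hv
      have hsum : ∑ u, (L *ᵥ p) u = 0 := by
        simp only [mulVec, dotProduct]
        rw [Finset.sum_comm]
        simp only [← Finset.sum_mul]
        exact Finset.sum_eq_zero fun y _ => by rw [hcolsum, zero_mul]
      have h1 : ∑ u, ((L *ᵥ p) u - w u) = 0 := by
        rw [Finset.sum_sub_distrib, hsum, hw, sub_zero]
      have h2 : ∀ u ∈ Finset.univ.erase v, (L *ᵥ p) u - w u = 0 := by
        intro u hu
        rw [hLp ⟨u, (Finset.mem_erase.1 hu).1⟩, sub_self]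
      rw [← Finset.add_sum_erase _ _ (Finset.mem_univ v), Finset.sum_eq_zero h2, add_zero] at h1
      linarith [h1]
    · exact hLp ⟨v, hv⟩

end Aux

lemma kkt {V E : Type*} [Fintype V] [Fintype E]
    (Γ : Matrix V E ℝ) (f : E → ℝ → ℝ)
    (hf_cont : ∀ e, Continuous (f e)) (hf_mono : ∀ e, StrictMono (f e))
    (F : E → ℝ → ℝ) (hF : ∀ e x, F e x = ∫ s in (0:ℝ)..x, f e s)
    (dem : V → ℝ) (x : E → ℝ) (p : V → ℝ)
    (hx : Γ *ᵥ x = dem) (hpot : ∀ e, f e (x e) = (Γᵀ *ᵥ p) e) :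
    UniqueMinimizer Γ F dem x := by
  refine ⟨hx, fun y hy hne => ?_⟩
  have hFF : ∀ e (u w : ℝ), F e w - F e u = ∫ s in u..w, f e s := by
    intro e u w
    rw [hF, hF, intervalIntegral.integral_interval_sub_left
      ((hf_cont e).intervalIntegrable _ _) ((hf_cont e).intervalIntegrable _ _)]
  have hle : ∀ e, f e (x e) * (y e - x e) ≤ F e (y e) - F e (x e) := by
    intro e
    rw [hFF]
    exact gap_le _ (hf_cont e) (hf_mono e) _ _
  obtain ⟨e₀, he₀⟩ := Function.ne_iff.1 hne
  have hlt : f e₀ (x e₀) * (y e₀ - x e₀) < F e₀ (y e₀) - F e₀ (x e₀) := by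
    rw [hFF]
    exact gap_lt _ (hf_cont e₀) (hf_mono e₀) _ _ (Ne.symm he₀)
  have hsum : ∑ e, f e (x e) * (y e - x e) < ∑ e, (F e (y e) - F e (x e)) :=
    Finset.sum_lt_sum (fun e _ => hle e) ⟨e₀, Finset.mem_univ e₀, hlt⟩
  have hzero : ∑ e, f e (x e) * (y e - x e) = 0 := by
    have h1 : ∑ e, f e (x e) * (y e - x e) = (Γᵀ *ᵥ p) ⬝ᵥ (y - x) := by
      apply Finset.sum_congr rfl
      intro e _
      rw [hpot e]
      rfl
    rw [h1, mulVec_transpose, ← dotProduct_mulVec, mulVec_sub, hx, hy, sub_self,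
      dotProduct_zero]
  rw [hzero, Finset.sum_sub_distrib] at hsum
  linarith

/-- Optimal potentials in a region form a line segment. -/
theorem optimal_potentials_in_region
    {V E : Type*} [Fintype V] [Fintype E] [DecidableEq V] [DecidableEq E]
    (t h : E → V) (hth : ∀ e, h e ≠ t e)
    (Γ : Matrix V E ℝ)
    (hΓ : ∀ v e, Γ v e = if v = h e then 1 else if v = t e then -1 else 0)
    (f : E → ℝ → ℝ)
    (hf_cont : ∀ e, Continuous (f e)) (hf_mono : ∀ e, StrictMono (f e))
    (F : E → ℝ → ℝ) (hF : ∀ e x, F e x = ∫ s in (0:ℝ)..x, f e s)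
    (v₁ : V)
    (b0 b : V → ℝ) (hb0 : ∑ v, b0 v = 0) (hb : ∑ v, b v = 0)
    (c d σ σ' : E → ℝ) (hc : ∀ e, 0 < c e) (hσ : ∀ e, σ e ≤ σ' e)
    (hinverse : ∀ e, ∀ y ∈ Set.Icc (σ e) (σ' e), f e (c e * y - d e) = y)
    (C : Matrix E E ℝ) (hC : C = Matrix.diagonal c)
    (L : Matrix V V ℝ) (hL : L = Γ * C * Γᵀ)
    (hinv : IsUnit (reducedM v₁ L).det)
    (π₀ Δπ : V → ℝ)
    (hπ₀ : π₀ = starM v₁ L *ᵥ fun v => b0 v + (Γ *ᵥ d) v)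
    (hΔπ : Δπ = starM v₁ L *ᵥ b)
    (R : Set (V → ℝ))
    (hR : R = {φ : V → ℝ | φ v₁ = 0 ∧
      ∀ e, σ e ≤ φ (h e) - φ (t e) ∧ φ (h e) - φ (t e) ≤ σ' e}) :
    (∀ lam : ℝ, 0 ≤ lam → ∀ p ∈ R,
      (UniqueMinimizer Γ F (fun v => b0 v + lam * b v) ((C * Γᵀ) *ᵥ p - d) ↔
        p = fun v => π₀ v + lam * Δπ v)) ∧
    {p : V → ℝ | p ∈ R ∧ ∃ lam : ℝ, 0 ≤ lam ∧
        UniqueMinimizer Γ F (fun v => b0 v + lam * b v) ((C * Γᵀ) *ᵥ p - d)} =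
      {p : V → ℝ | ∃ lam : ℝ, 0 ≤ lam ∧ p = fun v => π₀ v + lam * Δπ v} ∩ R := by
  -- column sums of the incidence matrix vanish
  have hΓcol : ∀ e, ∑ v, Γ v e = 0 := by
    intro e
    have hsplit : ∀ v, Γ v e = (if v = h e then (1:ℝ) else 0) + (if v = t e then -1 else 0) := by
      intro v
      rw [hΓ]
      by_cases hv : v = h e
      · subst hv; simp [hth e]
      · by_cases hv2 : v = t e <;> simp [hv, hv2, (hth e).symm]
    simp only [hsplit, Finset.sum_add_distrib, Finset.sum_ite_eq', Finset.mem_univ, if_true]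
    ring
  -- the potential difference along an edge
  have hΓT : ∀ (p : V → ℝ) (e : E), (Γᵀ *ᵥ p) e = p (h e) - p (t e) := by
    intro p e
    simp only [mulVec, dotProduct, transpose_apply]
    have hsplit : ∀ v, Γ v e * p v
        = (if v = h e then p v else 0) + (if v = t e then -p v else 0) := by
      intro v
      rw [hΓ]
      by_cases hv : v = h e
      · subst hv; simp [hth e]
      · by_cases hv2 : v = t e <;> simp [hv, hv2, (hth e).symm]
    simp only [hsplit, Finset.sum_add_distrib, Finset.sum_ite_eq', Finset.mem_univ, if_true]
    ring
  -- the flow as a function of the potential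
  have hxE : ∀ p : V → ℝ, ((C * Γᵀ) *ᵥ p - d) = fun e => c e * (Γᵀ *ᵥ p) e - d e := by
    intro p
    funext e
    rw [Pi.sub_apply, ← mulVec_mulVec, hC, mulVec_diagonal]
  -- the potential condition holds automatically on R
  have hpot : ∀ p ∈ R, ∀ e, f e (((C * Γᵀ) *ᵥ p - d) e) = (Γᵀ *ᵥ p) e := by
    intro p hp e
    rw [hR] at hp
    rw [hxE]
    exact hinverse e _ ⟨by rw [hΓT]; exact (hp.2 e).1, by rw [hΓT]; exact (hp.2 e).2⟩
  have hflow : ∀ p : V → ℝ, Γ *ᵥ ((C * Γᵀ) *ᵥ p - d) = L *ᵥ p - Γ *ᵥ d := by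
    intro p
    rw [mulVec_sub, mulVec_mulVec, hL, Matrix.mul_assoc]
  -- column sums of L vanish
  have hLcol : ∀ u, ∑ v, L v u = 0 := by
    intro u
    simp only [hL, Matrix.mul_assoc, Matrix.mul_apply]
    rw [Finset.sum_comm]
    exact Finset.sum_eq_zero fun e _ => by rw [← Finset.sum_mul, hΓcol, zero_mul]
  have hΓd : ∑ v, (Γ *ᵥ d) v = 0 := by
    simp only [mulVec, dotProduct]
    rw [Finset.sum_comm]
    exact Finset.sum_eq_zero fun e _ => by rw [← Finset.sum_mul, hΓcol, zero_mul]
  have hwsum : ∀ lam : ℝ, ∑ v, (b0 v + (Γ *ᵥ d) v + lam * b v) = 0 := by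
    intro lam
    rw [Finset.sum_add_distrib, Finset.sum_add_distrib, hb0, ← Finset.mul_sum, hb, hΓd]
    ring
  have hstarlin : ∀ lam : ℝ, (starM v₁ L *ᵥ fun v => b0 v + (Γ *ᵥ d) v + lam * b v)
      = fun v => π₀ v + lam * Δπ v := by
    intro lam
    rw [hπ₀, hΔπ]
    have harg : (fun v => b0 v + (Γ *ᵥ d) v + lam * b v)
        = (fun v => b0 v + (Γ *ᵥ d) v) + lam • b := by
      funext u
      simp [Pi.smul_apply, smul_eq_mul]
    rw [harg, mulVec_add, mulVec_smul]
    funext v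
    simp [Pi.smul_apply, smul_eq_mul]
  have main : ∀ lam : ℝ, 0 ≤ lam → ∀ p ∈ R,
      (UniqueMinimizer Γ F (fun v => b0 v + lam * b v) ((C * Γᵀ) *ᵥ p - d) ↔
        p = fun v => π₀ v + lam * Δπ v) := by
    intro lam _ p hpR
    have hp1 : p v₁ = 0 := by
      rw [hR] at hpR
      exact hpR.1
    constructor
    · intro hmin
      have hΓx := hmin.1
      rw [hflow p] at hΓx
      have hLp : L *ᵥ p = fun v => b0 v + (Γ *ᵥ d) v + lam * b v := by
        funext v
        have := congrFun hΓx v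
        simp only [Pi.sub_apply] at this
        linarith
      have := (star_solve v₁ L hinv hLcol _ (hwsum lam) p hp1).1 hLp
      rw [this, hstarlin lam]
    · intro hpeq
      have hLp : L *ᵥ p = fun v => b0 v + (Γ *ᵥ d) v + lam * b v :=
        (star_solve v₁ L hinv hLcol _ (hwsum lam) p hp1).2 (by rw [hpeq, ← hstarlin lam])
      refine kkt Γ f hf_cont hf_mono F hF _ _ p ?_ (hpot p hpR)
      rw [hflow p, hLp]
      funext v
      simp only [Pi.sub_apply]
      ring
  refine ⟨main, ?_⟩
  ext p
  simp only [Set.mem_setOf_eq, Set.mem_inter_iff]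
  constructor
  · rintro ⟨hpR, lam, hlam, hmin⟩
    exact ⟨⟨lam, hlam, (main lam hlam p hpR).1 hmin⟩, hpR⟩
  · rintro ⟨⟨lam, hlam, hpeq⟩, hpR⟩
    exact ⟨hpR, lam, hlam, (main lam hlam p hpR).2 hpeq⟩
end
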